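/- arXiv:1306.1931 — 11 statements merged into one kernel-verified Lean document; each statement's English description precedes it below -/
import Mathlib

section
/- The operators π̄₁,...,π̄_{n-1} defined on the Stanley-Reisner ring F[Bₙ] of the Boolean algebra by π̄ᵢ(y_M) = -y_M if p_i(M) > p_{i+1}(M), π̄ᵢ(y_M) = 0 if p_i(M) = p_{i+1}(M), and π̄ᵢ(y_M) = s_i(y_M) if p_i(M) < p_{i+1}(M), satisfy the 0-Hecke algebra relations: π̄ᵢ² = -π̄ᵢ, π̄ᵢπ̄ⱼ = π̄ⱼπ̄ᵢ for |i-j| > 1, and π̄ᵢπ̄_{i+1}π̄ᵢ = π̄_{i+1}π̄ᵢπ̄_{i+1}. -/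
/-! On a basis vector `y_M`, `π̄ᵢ` only compares `p_i(M)` with `p_{i+1}(M)`, and a permutation
moves these positions by `p_x(σM) = p_{σ⁻¹x}(M)`. Because `M` is a chain, `p_x(M) > p_y(M)` holds
exactly when some member contains `y` but not `x`, which is how the definition is phrased. Each
relation is thus checked on basis vectors by a case split on the relative order of the two or
three positions involved, the permutation parts matching by the Coxeter relations of the
transpositions `sᵢ`. -/

set_option synthInstance.maxHeartbeats 1000000
set_option maxHeartbeats 1000000

open scoped Classical

/-- Multichains in the Boolean algebra `Bₙ`: multisets of pairwise comparable subsets of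
`[n]`.  These index the monomial basis `{y_M}` of the Stanley-Reisner ring `F[Bₙ]`. -/
def MChain (n : ℕ) : Type :=
  {m : Multiset (Finset (Fin n)) // ∀ A ∈ m, ∀ B ∈ m, A ⊆ B ∨ B ⊆ A}

/-- The action of a permutation on a multichain, permuting the elements `1,…,n`. -/
def permChain {n : ℕ} (σ : Equiv.Perm (Fin n)) (m : MChain n) : MChain n :=
  ⟨m.1.map (Finset.image σ), by
    intro A hA B hB
    obtain ⟨A', hA', rfl⟩ := Multiset.mem_map.mp hA
    obtain ⟨B', hB', rfl⟩ := Multiset.mem_map.mp hB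
    rcases m.2 A' hA' B' hB' with h | h
    · exact Or.inl (Finset.image_subset_image h)
    · exact Or.inr (Finset.image_subset_image h)⟩

/-- The operator `π̄ᵢ` on the Stanley-Reisner ring `F[Bₙ]` (realized as the free
`F`-module on multichains):  `π̄ᵢ(y_M) = -y_M` if `p_i(M) > p_{i+1}(M)`,
`π̄ᵢ(y_M) = 0` if `p_i(M) = p_{i+1}(M)`, and `π̄ᵢ(y_M) = sᵢ(y_M)` if
`p_i(M) < p_{i+1}(M)`.  Here indices are 0-based: `pibarOp i` is the paper's `π̄_{i+1}`,
and `p_i(M) > p_{i+1}(M)` holds iff some member of `M` contains `i+1` but not `i`. -/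
noncomputable def pibarOp {F : Type*} [Field F] {n : ℕ} (i : ℕ) (hi : i + 1 < n) :
    (MChain n →₀ F) →ₗ[F] (MChain n →₀ F) :=
  Finsupp.lsum F (fun m : MChain n =>
    if ∃ A ∈ m.1, (⟨i + 1, hi⟩ : Fin n) ∈ A ∧ (⟨i, Nat.lt_of_succ_lt hi⟩ : Fin n) ∉ A then
      -(Finsupp.lsingle m)
    else if ∀ A ∈ m.1,
        ((⟨i, Nat.lt_of_succ_lt hi⟩ : Fin n) ∈ A ↔ (⟨i + 1, hi⟩ : Fin n) ∈ A) then
      0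
    else
      Finsupp.lsingle
        (permChain (Equiv.swap ⟨i, Nat.lt_of_succ_lt hi⟩ ⟨i + 1, hi⟩) m))

open Finsupp Equiv

namespace MChain

variable {n : ℕ}

/-- `M.notMemCount x + 1` is the paper's `p_x(M)`: along the chain `A₁ ⊆ ⋯ ⊆ A_k`, the members
missing `x` are exactly `A₁, …, A_{p_x(M) - 1}`. -/
noncomputable def notMemCount (x : Fin n) (M : MChain n) : ℕ :=
  (M.1.filter (x ∉ ·)).card

theorem notMemCount_permChain (σ : Perm (Fin n)) (x : Fin n) (M : MChain n) :
    (permChain σ M).notMemCount x = M.notMemCount (σ⁻¹ x) := by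
  simp only [notMemCount, permChain, Multiset.filter_map, Multiset.card_map]
  congr 1
  refine Multiset.filter_congr fun A _ => ?_
  simp [Finset.mem_image, ← Equiv.eq_symm_apply]

theorem permChain_permChain (σ τ : Perm (Fin n)) (M : MChain n) :
    permChain σ (permChain τ M) = permChain (σ * τ) M := by
  refine Subtype.ext ?_
  simp only [permChain, Multiset.map_map]
  congr 1
  funext A
  simp [Finset.image_image]

theorem notMemCount_add_card_filter (M : MChain n) (x y : Fin n) :
    M.notMemCount x + (M.1.filter fun A => y ∉ A ∧ x ∈ A).card =
      M.notMemCount y + (M.1.filter fun A => x ∉ A ∧ y ∈ A).card := by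
  have hsplit (a b : Fin n) : M.notMemCount a = (M.1.filter fun A => a ∉ A ∧ b ∉ A).card +
      (M.1.filter fun A => a ∉ A ∧ b ∈ A).card := by
    rw [notMemCount, ← Multiset.card_add, ← Multiset.filter_add_not (b ∉ ·) (M.1.filter _),
      Multiset.filter_filter, Multiset.filter_filter]
    simp only [not_not, and_comm]
  rw [hsplit x y, hsplit y x]
  simp only [and_comm (a := y ∉ _)]
  omega

theorem mem_imp_mem_of_mem_of_not_mem (M : MChain n) {x y : Fin n} {A : Finset (Fin n)}
    (hA : A ∈ M.1) (hyA : y ∈ A) (hxA : x ∉ A) {B : Finset (Fin n)} (hB : B ∈ M.1)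
    (hxB : x ∈ B) : y ∈ B := by
  rcases M.2 A hA B hB with hAB | hBA
  · exact hAB hyA
  · exact absurd (hBA hxB) hxA

theorem exists_mem_not_mem_iff_notMemCount_lt (M : MChain n) (x y : Fin n) :
    (∃ A ∈ M.1, y ∈ A ∧ x ∉ A) ↔ M.notMemCount y < M.notMemCount x := by
  have key := M.notMemCount_add_card_filter x y
  constructor
  · rintro ⟨A, hA, hyA, hxA⟩
    have h₀ : (M.1.filter fun B => y ∉ B ∧ x ∈ B).card = 0 := by
      rw [Multiset.card_eq_zero, Multiset.filter_eq_nil]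
      rintro B hB ⟨hyB, hxB⟩
      exact hyB (M.mem_imp_mem_of_mem_of_not_mem hA hyA hxA hB hxB)
    have h₁ : 0 < (M.1.filter fun B => x ∉ B ∧ y ∈ B).card :=
      Multiset.card_pos_iff_exists_mem.mpr ⟨A, Multiset.mem_filter.mpr ⟨hA, hxA, hyA⟩⟩
    omega
  · intro hlt
    obtain ⟨A, hA⟩ := Multiset.card_pos_iff_exists_mem.mp
      (show 0 < (M.1.filter fun B => x ∉ B ∧ y ∈ B).card by omega)
    obtain ⟨hA, hxA, hyA⟩ := Multiset.mem_filter.mp hA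
    exact ⟨A, hA, hyA, hxA⟩

theorem forall_mem_iff_iff_notMemCount_eq (M : MChain n) (x y : Fin n) :
    (∀ A ∈ M.1, x ∈ A ↔ y ∈ A) ↔ M.notMemCount x = M.notMemCount y := by
  rw [le_antisymm_iff, ← not_lt, ← not_lt, ← exists_mem_not_mem_iff_notMemCount_lt,
    ← exists_mem_not_mem_iff_notMemCount_lt]
  grind

end MChain

open MChain

section

variable {R : Type*} [CommRing R] {n : ℕ}

noncomputable def pibarAt (x y : Fin n) : (MChain n →₀ R) →ₗ[R] (MChain n →₀ R) :=
  lsum R fun M =>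
    if M.notMemCount y < M.notMemCount x then -lsingle M
    else if M.notMemCount x = M.notMemCount y then 0
    else lsingle (permChain (swap x y) M)

theorem pibarAt_single (x y : Fin n) (M : MChain n) :
    pibarAt (R := R) x y (single M 1) =
      if M.notMemCount y < M.notMemCount x then -single M 1
      else if M.notMemCount x = M.notMemCount y then 0
      else single (permChain (swap x y) M) 1 := by
  rw [pibarAt, lsum_single]
  split_ifs <;> simp

theorem pibarAt_comp_self (x y : Fin n) :
    pibarAt (R := R) x y ∘ₗ pibarAt x y = -pibarAt (R := R) x y := by
  refine Finsupp.basisSingleOne.ext fun M => ?_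
  simp only [coe_basisSingleOne, LinearMap.comp_apply, LinearMap.neg_apply, pibarAt_single,
    apply_ite (pibarAt x y), map_neg, map_zero, notMemCount_permChain,
    swap_inv, swap_apply_left, swap_apply_right]
  split_ifs <;> first | rfl | omega | simp

theorem pibarAt_comp_comm {x y z w : Fin n} (hxz : x ≠ z) (hxw : x ≠ w) (hyz : y ≠ z)
    (hyw : y ≠ w) : pibarAt (R := R) x y ∘ₗ pibarAt z w = pibarAt z w ∘ₗ pibarAt x y := by
  have hcomm : swap x y * swap z w = swap z w * swap x y := by
    ext a
    simp only [Perm.mul_apply, swap_apply_def]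
    split_ifs <;> simp_all
  refine Finsupp.basisSingleOne.ext fun M => ?_
  simp only [coe_basisSingleOne, LinearMap.comp_apply, pibarAt_single,
    apply_ite (pibarAt x y), apply_ite (pibarAt z w), map_neg, map_zero, notMemCount_permChain,
    swap_inv, swap_apply_of_ne_of_ne hxz hxw,
    swap_apply_of_ne_of_ne hyz hyw, swap_apply_of_ne_of_ne hxz.symm hyz.symm,
    swap_apply_of_ne_of_ne hxw.symm hyw.symm, permChain_permChain, hcomm]
  split_ifs <;> first | rfl | omega | simp

theorem pibarAt_braid {x y z : Fin n} (hxy : x ≠ y) (hyz : y ≠ z) (hxz : x ≠ z) :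
    pibarAt (R := R) x y ∘ₗ pibarAt y z ∘ₗ pibarAt x y =
      pibarAt y z ∘ₗ pibarAt x y ∘ₗ pibarAt y z := by
  have hxyx : swap x y * (swap y z * swap x y) = swap x z := by
    rw [← mul_assoc, swap_comm x y, swap_comm y z, swap_mul_swap_mul_swap hyz.symm hxz.symm]
  have hyzy : swap y z * (swap x y * swap y z) = swap x z := by
    rw [← mul_assoc, swap_mul_swap_mul_swap hxy hxz, swap_comm]
  refine Finsupp.basisSingleOne.ext fun M => ?_
  simp only [coe_basisSingleOne, LinearMap.comp_apply, pibarAt_single,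
    apply_ite (pibarAt x y), apply_ite (pibarAt y z), map_neg, map_zero, notMemCount_permChain,
    mul_inv_rev, Perm.mul_apply, swap_inv, swap_apply_left, swap_apply_right,
    swap_apply_of_ne_of_ne hxz.symm hyz.symm, swap_apply_of_ne_of_ne hxy hxz,
    permChain_permChain, hxyx, hyzy]
  split_ifs <;> first | rfl | omega | simp

end

theorem pibarOp_eq_pibarAt {F : Type*} [Field F] {n : ℕ} (i : ℕ) (hi : i + 1 < n) :
    pibarOp (F := F) i hi = pibarAt ⟨i, Nat.lt_of_succ_lt hi⟩ ⟨i + 1, hi⟩ := by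
  simp only [pibarOp, pibarAt, exists_mem_not_mem_iff_notMemCount_lt,
    forall_mem_iff_iff_notMemCount_eq]

/-- The operators `π̄₁,…,π̄_{n-1}` on the Stanley-Reisner ring of the Boolean algebra
satisfy the 0-Hecke relations: `π̄ᵢ² = -π̄ᵢ`, `π̄ᵢπ̄ⱼ = π̄ⱼπ̄ᵢ` for `|i-j| > 1`, and
`π̄ᵢπ̄_{i+1}π̄ᵢ = π̄_{i+1}π̄ᵢπ̄_{i+1}`. -/
theorem stmt_3 {F : Type*} [Field F] (n : ℕ) :
    (∀ (i : ℕ) (hi : i + 1 < n),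
      (pibarOp (F := F) i hi) ∘ₗ (pibarOp i hi) = -(pibarOp (F := F) i hi)) ∧
    (∀ (i j : ℕ) (hi : i + 1 < n) (hj : j + 1 < n), (i + 1 < j ∨ j + 1 < i) →
      (pibarOp (F := F) i hi) ∘ₗ (pibarOp j hj) = (pibarOp j hj) ∘ₗ (pibarOp i hi)) ∧
    (∀ (i : ℕ) (hi : i + 2 < n),
      (pibarOp (F := F) i (by omega)) ∘ₗ (pibarOp (i + 1) hi) ∘ₗ (pibarOp i (by omega))
        = (pibarOp (i + 1) hi) ∘ₗ (pibarOp i (by omega)) ∘ₗ (pibarOp (i + 1) hi)) := by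
  have hne {a b : ℕ} {ha : a < n} {hb : b < n} (h : a ≠ b) : (⟨a, ha⟩ : Fin n) ≠ ⟨b, hb⟩ :=
    Fin.ne_of_val_ne h
  simp only [pibarOp_eq_pibarAt]
  refine ⟨fun i hi => pibarAt_comp_self _ _, fun i j hi hj hij => ?_, fun i hi => ?_⟩
  · exact pibarAt_comp_comm (hne (by omega)) (hne (by omega)) (hne (by omega)) (hne (by omega))
  · exact pibarAt_braid (hne (by omega)) (hne (by omega)) (hne (by omega))
end

section
/- The invariant algebra F[Bₙ]^{Sₙ} of the Sₙ-action on the Stanley-Reisner ring of the Boolean algebra Bₙ equals the polynomial subalgebra F[Θ] generated by the rank polynomials θ₀, θ₁, ..., θₙ, where θᵢ = Σ_{|A|=i} y_A. -/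
noncomputable section
open scoped Classical

/-- The Stanley-Reisner ideal of the Boolean algebra `Bₙ`: generated by the products
`y_A y_B` for incomparable `A, B ⊆ [n]`. -/
def SRIdeal (F : Type*) [Field F] (n : ℕ) :
    Ideal (MvPolynomial (Finset (Fin n)) F) :=
  Ideal.span {p | ∃ A B : Finset (Fin n),
    ¬(A ⊆ B ∨ B ⊆ A) ∧ p = MvPolynomial.X A * MvPolynomial.X B}

/-- The Stanley-Reisner ring `F[Bₙ]` of the Boolean algebra. -/
abbrev SRRing (F : Type*) [Field F] (n : ℕ) :=
  MvPolynomial (Finset (Fin n)) F ⧸ SRIdeal F n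

/-- The `Sₙ`-action on `F[Bₙ]` induced by permuting the elements `1,…,n`. -/
def srPerm (F : Type*) [Field F] (n : ℕ) (σ : Equiv.Perm (Fin n)) :
    SRRing F n →ₐ[F] SRRing F n :=
  Ideal.Quotient.liftₐ (SRIdeal F n)
    ((Ideal.Quotient.mkₐ F (SRIdeal F n)).comp
      (MvPolynomial.rename (Finset.image σ)))
    (by
      intro a ha
      have h : SRIdeal F n ≤ RingHom.ker
          ((Ideal.Quotient.mkₐ F (SRIdeal F n)).comp
            (MvPolynomial.rename (Finset.image σ))).toRingHom := by
        rw [SRIdeal, Ideal.span_le]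
        rintro p ⟨A, B, hAB, rfl⟩
        simp only [SetLike.mem_coe, RingHom.mem_ker, AlgHom.toRingHom_eq_coe,
          RingHom.coe_coe, AlgHom.coe_comp, Function.comp_apply, map_mul,
          MvPolynomial.rename_X, Ideal.Quotient.mkₐ_eq_mk]
        rw [← map_mul, Ideal.Quotient.eq_zero_iff_mem]
        refine Ideal.subset_span ⟨Finset.image σ A, Finset.image σ B, ?_, rfl⟩
        rw [Finset.image_subset_image_iff σ.injective,
          Finset.image_subset_image_iff σ.injective]
        exact hAB
      exact h ha)

/-- The rank polynomial `θᵢ = Σ_{|A| = i} y_A` in `F[Bₙ]`. -/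
def theta (F : Type*) [Field F] (n : ℕ) (i : ℕ) : SRRing F n :=
  Ideal.Quotient.mk (SRIdeal F n)
    (∑ A ∈ Finset.univ.filter (fun A : Finset (Fin n) => A.card = i),
      MvPolynomial.X A)

/-!
Modulo the Stanley–Reisner ideal a polynomial is determined by its coefficients at the chain
monomials `∏ y_{A_j}^{a_j}`, `A_1 ⊂ ⋯ ⊂ A_k`, and `Sₙ` permutes these. Two chain monomials lie
in one orbit exactly when they have the same rank profile (the total exponent carried by each
rank): a permutation matching the level functions `x ↦ min {|A| : x ∈ A}` of the two chains
carries each member of one chain onto the member of the same rank of the other. Since a chain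
has at most one member of each rank, on chain monomials `∏ θᵢ ^ eᵢ` is exactly the orbit sum of
the chain monomials of profile `e`. Hence an invariant is a linear combination of such products.
-/

namespace StanleyReisnerBoolean

open Finset MvPolynomial

theorem exists_perm_comp_eq_of_card_filter_le {α : Type*} [Fintype α] {f g : α → ℕ}
    (h : ∀ c, #{x | f x ≤ c} = #{x | g x ≤ c}) : ∃ σ : Equiv.Perm α, g ∘ σ = f := by
  have card_lt : ∀ c, #{x | f x < c} = #{x | g x < c} := by
    rintro (_ | c)
    · simp
    · simpa only [Nat.lt_succ_iff] using h c
  have card_fiber (f : α → ℕ) (c : ℕ) : #{x | f x = c} = #{x | f x ≤ c} - #{x | f x < c} := by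
    rw [← card_sdiff_of_subset (monotone_filter_right _ fun _ _ => le_of_lt)]
    congr 1
    ext x
    simp only [mem_filter, mem_univ, true_and, mem_sdiff]
    omega
  have e : ∀ c, {x // f x = c} ≃ {x // g x = c} := fun c =>
    Fintype.equivOfCardEq (by
      rw [Fintype.card_subtype, Fintype.card_subtype, card_fiber, card_fiber, h, card_lt])
  exact ⟨(Equiv.sigmaFiberEquiv f).symm.trans
    ((Equiv.sigmaCongrRight e).trans (Equiv.sigmaFiberEquiv g)),
    funext fun x => (e (f x) ⟨x, rfl⟩).2⟩

theorem card_sup_id_of_isChain {α : Type*} [DecidableEq α] {s : Finset (Finset α)}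
    (hs : IsChain (· ≤ ·) (s : Set (Finset α))) : #(s.sup id) = s.sup card := by
  obtain rfl | hne := s.eq_empty_or_nonempty
  · simp
  obtain ⟨A, hA, hmax⟩ := s.exists_max_image card hne
  have hsub : ∀ B ∈ s, B ⊆ A := fun B hB => by
    obtain rfl | hBA := eq_or_ne B A
    · exact subset_rfl
    exact (hs hB hA hBA).resolve_right fun hAB =>
      hBA (eq_of_subset_of_card_le hAB (hmax B hB)).symm
  rw [le_antisymm (Finset.sup_le (f := id) hsub) (le_sup (f := id) hA)]
  exact le_antisymm (le_sup hA) (Finset.sup_le hmax)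

section ChainMonomial

variable {α : Type*} {d d' : Finset α →₀ ℕ} {A : Finset α}

def IsChainMonomial (d : Finset α →₀ ℕ) : Prop :=
  IsChain (· ≤ ·) (d.support : Set (Finset α))

theorem not_isChainMonomial_iff :
    ¬ IsChainMonomial d ↔
      ∃ A B : Finset α, ¬(A ⊆ B ∨ B ⊆ A) ∧ Finsupp.single A 1 + Finsupp.single B 1 ≤ d := by
  constructor
  · intro h
    simp only [IsChainMonomial, IsChain, Set.Pairwise, not_forall] at h
    obtain ⟨A, hA, B, hB, hne, hAB⟩ := h
    refine ⟨A, B, hAB, fun C => ?_⟩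
    have hA' := Finsupp.mem_support_iff.1 hA
    have hB' := Finsupp.mem_support_iff.1 hB
    simp only [Finsupp.add_apply, Finsupp.single_apply]
    split_ifs with hAC hBC hBC
    · exact absurd (hAC.trans hBC.symm) hne
    all_goals subst_vars; omega
  · rintro ⟨A, B, hAB, hle⟩ hd
    have hne : A ≠ B := by rintro rfl; exact hAB (Or.inl subset_rfl)
    have hA : A ∈ d.support := Finsupp.mem_support_iff.2 <| by
      have := hle A
      simp only [Finsupp.coe_add, Pi.add_apply, Finsupp.single_eq_same, ne_eq, hne.symm,
        not_false_eq_true, Finsupp.single_eq_of_ne', add_zero] at this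
      omega
    have hB : B ∈ d.support := Finsupp.mem_support_iff.2 <| by
      have := hle B
      simp only [Finsupp.coe_add, Pi.add_apply, ne_eq, hne, not_false_eq_true,
        Finsupp.single_eq_of_ne', Finsupp.single_eq_same, zero_add] at this
      omega
    exact hAB (hd hA hB hne)

theorem IsChainMonomial.mono (hd : IsChainMonomial d) (h : d'.support ⊆ d.support) :
    IsChainMonomial d' :=
  IsChain.mono (coe_subset.2 h) hd

theorem IsChainMonomial.injOn_card (hd : IsChainMonomial d) :
    Set.InjOn card (d.support : Set (Finset α)) := by
  intro A hA B hB hAB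
  by_contra hne
  rcases hd hA hB hne with h | h
  exacts [hne (eq_of_subset_of_card_le h hAB.ge), hne (eq_of_subset_of_card_le h hAB.le).symm]

theorem IsChainMonomial.mapDomain_card_apply (hd : IsChainMonomial d) (hA : A ∈ d.support) :
    d.mapDomain card #A = d A :=
  Finsupp.mapDomain_apply' _ _ subset_rfl hd.injOn_card hA

theorem IsChainMonomial.support_mapDomain_card (hd : IsChainMonomial d) :
    (d.mapDomain card).support = d.support.image card :=
  Finsupp.mapDomain_support_of_injOn d hd.injOn_card

variable [DecidableEq α]

theorem IsChainMonomial.mapDomain_image (hd : IsChainMonomial d) (σ : Equiv.Perm α) :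
    IsChainMonomial (d.mapDomain (image σ)) := by
  rw [IsChainMonomial, Finsupp.mapDomain_support_of_injective (image_injective σ.injective),
    coe_image]
  exact IsChain.image_of_map_rel (· ≤ ·) (· ≤ ·) _ (fun _ _ => image_subset_image) hd

variable [Fintype α]

/-- `univ` is adjoined only to make the infimum range over a nonempty set. -/
def level (d : Finset α →₀ ℕ) (x : α) : ℕ :=
  ((insert univ d.support).filter (x ∈ ·)).inf' (by use univ; simp) card

theorem level_le_iff {x : α} {c : ℕ} :
    level d x ≤ c ↔ ∃ B ∈ insert univ d.support, x ∈ B ∧ #B ≤ c := by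
  unfold level
  refine (inf'_le_iff _).trans ?_
  simp only [mem_filter, and_assoc]

theorem IsChainMonomial.isChain_insert_univ (hd : IsChainMonomial d) :
    IsChain (· ≤ ·) ((insert univ d.support : Finset (Finset α)) : Set (Finset α)) := by
  rw [coe_insert]
  exact hd.insert fun B _ _ => Or.inr (subset_univ B)

theorem IsChainMonomial.filter_level_le_card (hd : IsChainMonomial d) (hA : A ∈ d.support) :
    ({x | level d x ≤ #A} : Finset α) = A := by
  ext x
  simp only [mem_filter, mem_univ, true_and, level_le_iff]
  refine ⟨fun ⟨B, hB, hxB, hBA⟩ => ?_, fun hx => ⟨A, mem_insert_of_mem hA, hx, le_rfl⟩⟩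
  obtain rfl | hne := eq_or_ne B A
  · exact hxB
  rcases hd.isChain_insert_univ hB (mem_insert_of_mem hA) hne with h | h
  exacts [h hxB, eq_of_subset_of_card_le h hBA ▸ hxB]

theorem IsChainMonomial.card_filter_level_le (hd : IsChainMonomial d) (c : ℕ) :
    #{x | level d x ≤ c} =
      ((insert (Fintype.card α) (d.mapDomain card).support).filter (· ≤ c)).sup id := by
  have hunion :
      ({x | level d x ≤ c} : Finset α) = ((insert univ d.support).filter (#· ≤ c)).sup id := by
    ext x
    simp only [mem_filter, mem_univ, true_and, level_le_iff, mem_sup, id]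
    exact ⟨fun ⟨B, hB, hx, hc⟩ => ⟨B, ⟨hB, hc⟩, hx⟩, fun ⟨B, ⟨hB, hc⟩, hx⟩ => ⟨B, hB, hx, hc⟩⟩
  rw [hunion,
    card_sup_id_of_isChain (hd.isChain_insert_univ.mono (coe_subset.2 (filter_subset _ _))),
    hd.support_mapDomain_card, ← card_univ, ← image_insert, filter_image, sup_image]
  rfl

theorem image_filter_level_le {σ : Equiv.Perm α} (hσ : level d' ∘ σ = level d) (c : ℕ) :
    ({x | level d x ≤ c} : Finset α).image σ = ({y | level d' y ≤ c} : Finset α) := by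
  ext y
  obtain ⟨x, rfl⟩ := σ.surjective y
  simp only [mem_image, σ.injective.eq_iff, exists_eq_right, mem_filter, mem_univ, true_and]
  rw [← hσ, Function.comp_apply]

theorem apply_image_eq_of_level_comp (hd : IsChainMonomial d) (hd' : IsChainMonomial d')
    (h : d.mapDomain card = d'.mapDomain card) {σ : Equiv.Perm α}
    (hσ : level d' ∘ σ = level d) (hA : A ∈ d.support) : d' (A.image σ) = d A := by
  have hrank : #A ∈ (d'.mapDomain card).support := by
    rw [← h, Finsupp.mem_support_iff, hd.mapDomain_card_apply hA]
    exact Finsupp.mem_support_iff.1 hA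
  rw [hd'.support_mapDomain_card] at hrank
  obtain ⟨B, hB, hBA⟩ := mem_image.1 hrank
  have himage : A.image σ = B := by
    rw [← hd.filter_level_le_card hA, image_filter_level_le hσ, ← hBA,
      hd'.filter_level_le_card hB]
  rw [himage, ← hd'.mapDomain_card_apply hB, hBA, ← h, hd.mapDomain_card_apply hA]

theorem exists_perm_mapDomain_image_eq (hd : IsChainMonomial d) (hd' : IsChainMonomial d')
    (h : d.mapDomain card = d'.mapDomain card) :
    ∃ σ : Equiv.Perm α, d.mapDomain (image σ) = d' := by
  obtain ⟨σ, hσ⟩ := exists_perm_comp_eq_of_card_filter_le (f := level d) (g := level d')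
    fun c => by rw [hd.card_filter_level_le, hd'.card_filter_level_le, h]
  have hσ' : level d ∘ σ.symm = level d' := by
    rw [← hσ, Function.comp_assoc, Equiv.self_comp_symm, Function.comp_id]
  have key : ∀ A, d' (A.image σ) = d A := by
    intro A
    by_cases hA : A ∈ d.support
    · exact apply_image_eq_of_level_comp hd hd' h hσ hA
    by_cases hA' : A.image σ ∈ d'.support
    · simpa [image_image] using (apply_image_eq_of_level_comp hd' hd h.symm hσ' hA').symm
    rw [Finsupp.notMem_support_iff.1 hA, Finsupp.notMem_support_iff.1 hA']
  refine ⟨σ, Finsupp.ext fun B => ?_⟩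
  obtain ⟨A, rfl⟩ : ∃ A, A.image σ = B := ⟨B.image σ.symm, by simp [image_image]⟩
  rw [Finsupp.mapDomain_apply (image_injective σ.injective), key]

end ChainMonomial

section BooleanAlgebra

variable {F : Type*} [Field F] {n : ℕ} {d d' : Finset (Fin n) →₀ ℕ}

theorem SRIdeal_eq_span_monomial :
    SRIdeal F n = Ideal.span ((fun s => monomial s (1 : F)) '' {s | ∃ A B : Finset (Fin n),
      ¬(A ⊆ B ∨ B ⊆ A) ∧ s = Finsupp.single A 1 + Finsupp.single B 1}) := by
  rw [SRIdeal]
  congr 1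
  ext p
  simp only [Set.mem_ofPred_eq, Set.mem_image, X, monomial_mul, one_mul]
  constructor
  · rintro ⟨A, B, hAB, rfl⟩; exact ⟨_, ⟨A, B, hAB, rfl⟩, rfl⟩
  · rintro ⟨_, ⟨A, B, hAB, rfl⟩, rfl⟩; exact ⟨A, B, hAB, rfl⟩

theorem mem_SRIdeal_iff {p : MvPolynomial (Finset (Fin n)) F} :
    p ∈ SRIdeal F n ↔ ∀ d ∈ p.support, ¬ IsChainMonomial d := by
  rw [SRIdeal_eq_span_monomial, mem_ideal_span_monomial_image]
  refine forall₂_congr fun d _ => ?_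
  rw [not_isChainMonomial_iff]
  simp only [Set.mem_ofPred_eq]
  constructor
  · rintro ⟨_, ⟨A, B, hAB, rfl⟩, hle⟩; exact ⟨A, B, hAB, hle⟩
  · rintro ⟨A, B, hAB, hle⟩; exact ⟨_, ⟨A, B, hAB, rfl⟩, hle⟩

theorem mk_eq_mk_iff_coeff_eq {p q : MvPolynomial (Finset (Fin n)) F} :
    Ideal.Quotient.mk (SRIdeal F n) p = Ideal.Quotient.mk (SRIdeal F n) q ↔
      ∀ d, IsChainMonomial d → p.coeff d = q.coeff d := by
  rw [Ideal.Quotient.mk_eq_mk_iff_sub_mem, mem_SRIdeal_iff]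
  refine ⟨fun h d hd => ?_, fun h d hd hch => ?_⟩
  · by_contra hne
    exact h d (by rwa [mem_support_iff, coeff_sub, sub_ne_zero]) hd
  · rw [mem_support_iff, coeff_sub, h d hch, sub_self] at hd
    exact hd rfl

def rank (A : Finset (Fin n)) : Fin (n + 1) :=
  ⟨#A, Nat.lt_succ_of_le (A.card_le_univ.trans_eq (Fintype.card_fin n))⟩

def profile (d : Finset (Fin n) →₀ ℕ) : Fin (n + 1) →₀ ℕ := d.mapDomain rank

theorem IsChainMonomial.profile_rank (hd : IsChainMonomial d) {A : Finset (Fin n)}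
    (hA : A ∈ d.support) : profile d (rank A) = d A :=
  Finsupp.mapDomain_apply' _ _ subset_rfl
    (fun _ hA _ hB h => hd.injOn_card hA hB (congrArg Fin.val h)) hA

theorem exists_rank_eq_of_profile_ne_zero {i : Fin (n + 1)} (h : profile d i ≠ 0) :
    ∃ A ∈ d.support, rank A = i :=
  mem_image.1 (Finsupp.mapDomain_support (Finsupp.mem_support_iff.2 h))

theorem mapDomain_card_eq_of_profile_eq (h : profile d = profile d') :
    d.mapDomain card = d'.mapDomain card := by
  have h' := congrArg (Finsupp.mapDomain Fin.val) h
  rwa [profile, profile, ← Finsupp.mapDomain_comp, ← Finsupp.mapDomain_comp] at h'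

theorem IsChainMonomial.profile_eq_zero_iff (hd : IsChainMonomial d) :
    profile d = 0 ↔ d = 0 := by
  refine ⟨fun h => Finsupp.support_eq_empty.1 (eq_empty_of_forall_notMem fun A hA => ?_),
    fun h => by rw [h, profile, Finsupp.mapDomain_zero]⟩
  have := hd.profile_rank hA
  rw [h, Finsupp.coe_zero, Pi.zero_apply] at this
  exact Finsupp.mem_support_iff.1 hA this.symm

theorem profile_eq_single_rank_add {A : Finset (Fin n)} (hA : A ∈ d.support) :
    profile d = Finsupp.single (rank A) 1 + profile (d - Finsupp.single A 1) := by
  have hle : Finsupp.single A 1 ≤ d :=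
    Finsupp.single_le_iff.2 (Nat.one_le_iff_ne_zero.2 (Finsupp.mem_support_iff.1 hA))
  conv_lhs => rw [← tsub_add_cancel_of_le hle]
  rw [profile, profile, Finsupp.mapDomain_add, Finsupp.mapDomain_single]
  exact add_comm _ _

variable (F n) in
def rankPoly (i : ℕ) : MvPolynomial (Finset (Fin n)) F :=
  ∑ A ∈ univ.filter (fun A : Finset (Fin n) => A.card = i), X A

theorem coeff_aeval_rankPoly_monomial (hd : IsChainMonomial d) (e : Fin (n + 1) →₀ ℕ) :
    (aeval (fun i : Fin (n + 1) => rankPoly F n i) (monomial e (1 : F))).coeff d =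
      if profile d = e then 1 else 0 := by
  obtain ⟨s, rfl⟩ := Multiset.toFinsupp.surjective e
  induction s using Multiset.induction_on generalizing d with
  | empty =>
    simp only [Multiset.toFinsupp_zero, monomial_zero', map_one, coeff_one,
      hd.profile_eq_zero_iff, eq_comm]
  | cons i s ih =>
    rw [← Multiset.singleton_add, map_add, Multiset.toFinsupp_singleton, monomial_single_add,
      pow_one, map_mul, aeval_X, rankPoly, sum_mul, coeff_sum]
    simp only [coeff_X_mul']
    by_cases hi : ∃ A ∈ d.support, rank A = i
    · obtain ⟨A, hA, rfl⟩ := hi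
      rw [sum_eq_single_of_mem A (by exact mem_filter.2 ⟨mem_univ A, rfl⟩) ?_, if_pos hA,
        ih (hd.mono Finsupp.support_tsub)]
      · simp only [profile_eq_single_rank_add hA, add_right_inj]
      intro B hB hBA
      refine if_neg fun hB' => hBA (hd.injOn_card hB' hA ?_)
      simpa [rank] using (mem_filter.1 hB).2
    · rw [sum_eq_zero, if_neg]
      · intro h
        have hdi : profile d i = 0 := by
          by_contra hne
          exact hi (exists_rank_eq_of_profile_ne_zero hne)
        simp [h] at hdi
      · intro A hA
        exact if_neg fun hA' => hi ⟨A, hA', Fin.ext (mem_filter.1 hA).2⟩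

theorem srPerm_mk (σ : Equiv.Perm (Fin n)) (p : MvPolynomial (Finset (Fin n)) F) :
    srPerm F n σ (Ideal.Quotient.mk _ p) = Ideal.Quotient.mk _ (rename (image σ) p) :=
  rfl

theorem rename_rankPoly (σ : Equiv.Perm (Fin n)) (i : ℕ) :
    rename (image σ) (rankPoly F n i) = rankPoly F n i := by
  simp only [rankPoly, map_sum, rename_X]
  exact sum_equiv (Equiv.finsetCongr σ) (by simp) (by simp [map_eq_image])

theorem srPerm_theta (σ : Equiv.Perm (Fin n)) (i : ℕ) :
    srPerm F n σ (theta F n i) = theta F n i :=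
  (srPerm_mk σ (rankPoly F n i)).trans (congrArg _ (rename_rankPoly σ i))

theorem aeval_theta (P : MvPolynomial (Fin (n + 1)) F) :
    aeval (fun i : Fin (n + 1) => theta F n i) P =
      Ideal.Quotient.mk _ (aeval (fun i : Fin (n + 1) => rankPoly F n i) P) :=
  (comp_aeval_apply _ (Ideal.Quotient.mkₐ F (SRIdeal F n)) P).symm

section Invariant

variable {p : MvPolynomial (Finset (Fin n)) F}
  (hp : ∀ σ, srPerm F n σ (Ideal.Quotient.mk _ p) = Ideal.Quotient.mk _ p)
include hp

theorem coeff_mapDomain_image_eq (hd : IsChainMonomial d) (σ : Equiv.Perm (Fin n)) :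
    p.coeff (d.mapDomain (image σ)) = p.coeff d := by
  have h := mk_eq_mk_iff_coeff_eq.1 ((srPerm_mk σ p).symm.trans (hp σ)) _ (hd.mapDomain_image σ)
  rwa [coeff_rename_mapDomain _ (image_injective σ.injective), eq_comm] at h

theorem coeff_eq_of_profile_eq (hd : IsChainMonomial d) (hd' : IsChainMonomial d')
    (h : profile d = profile d') : p.coeff d = p.coeff d' := by
  obtain ⟨σ, rfl⟩ := exists_perm_mapDomain_image_eq hd hd' (mapDomain_card_eq_of_profile_eq h)
  exact (coeff_mapDomain_image_eq hp hd σ).symm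

theorem mk_mem_range_aeval_theta :
    Ideal.Quotient.mk _ p ∈ (aeval (R := F) fun i : Fin (n + 1) => theta F n i).range := by
  set T := p.support.filter IsChainMonomial
  let rep := Function.invFunOn profile (T : Set (Finset (Fin n) →₀ ℕ))
  refine (AlgHom.mem_range _).2 ⟨∑ e ∈ T.image profile, p.coeff (rep e) • monomial e 1, ?_⟩
  rw [aeval_theta]
  refine mk_eq_mk_iff_coeff_eq.2 fun d hd => ?_
  simp only [map_sum, map_smul, coeff_sum, coeff_smul, coeff_aeval_rankPoly_monomial hd,
    smul_eq_mul, mul_ite, mul_one, mul_zero, sum_ite_eq]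
  split_ifs with hS
  · obtain ⟨hrep, hprof⟩ := Function.invFunOn_pos (mem_image.1 hS)
    exact coeff_eq_of_profile_eq hp (mem_filter.1 hrep).2 hd hprof
  · exact (Finsupp.notMem_support_iff.1 fun hd' =>
      hS (mem_image_of_mem _ (mem_filter.2 ⟨hd', hd⟩))).symm

end Invariant

end BooleanAlgebra

end StanleyReisnerBoolean

open StanleyReisnerBoolean in
/-- The invariant algebra `F[Bₙ]^{Sₙ}` equals the subalgebra generated by the rank
polynomials `θ₀, θ₁, …, θₙ`. -/
theorem stmt_4 (F : Type*) [Field F] (n : ℕ) :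
    {f : SRRing F n | ∀ σ : Equiv.Perm (Fin n), srPerm F n σ f = f} =
      (↑(Algebra.adjoin F (Set.range fun i : Fin (n + 1) => theta F n i)) :
        Set (SRRing F n)) := by
  rw [Algebra.adjoin_range_eq_range_aeval]
  ext f
  rw [SetLike.mem_coe, AlgHom.mem_range]
  refine ⟨fun hf => ?_, ?_⟩
  · obtain ⟨p, rfl⟩ := Ideal.Quotient.mk_surjective f
    exact (AlgHom.mem_range _).1 (mk_mem_range_aeval_theta hf)
  · rintro ⟨P, rfl⟩ σ
    simp only [MvPolynomial.comp_aeval_apply, srPerm_theta]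
end
end

section
/- For any multichain M in the Boolean algebra Bₙ and any i ∈ [n-1]: an element f ∈ F[Bₙ] satisfies π̄ᵢ(f) = 0 if and only if sᵢ(f) = f. Consequently, the 0-Hecke invariant algebra F[Bₙ]^{Hₙ(0)} = {f : π̄ᵢf = 0 for all i} equals the Sₙ-invariant algebra F[Bₙ]^{Sₙ}. -/
/-!
Write `sᵢ` for the transposition of `i` and `i+1`, and call `M` a descent when
`p_i(M) > p_{i+1}(M)`. Comparing coefficients, `π̄ᵢ` is `sᵢ - 1` followed by the projection
onto the span of the descents: a descent `M` contributes `-y_M`, and an ascent `M` contributes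
`y_{sᵢM}`, where `sᵢM` is a descent. Since the members of a multichain are nested, no multichain
is both a descent and an ascent, so every multichain is a descent, the image of a descent under
`sᵢ`, or fixed by `sᵢ`. Hence `π̄ᵢ f = 0` iff `f` is `sᵢ`-invariant, and the second statement
follows because the adjacent transpositions generate `Sₙ`.
-/

set_option synthInstance.maxHeartbeats 1000000
set_option maxHeartbeats 1000000

open scoped Classical

/-- The `Sₙ`-action on the Stanley-Reisner ring `F[Bₙ]`, permuting `1,…,n`. -/
noncomputable def permAct {F : Type*} [Field F] {n : ℕ} (σ : Equiv.Perm (Fin n)) :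
    (MChain n →₀ F) →ₗ[F] (MChain n →₀ F) :=
  Finsupp.lmapDomain F F (permChain σ)

namespace MChain

variable {n : ℕ}

@[ext]
lemma ext {m m' : MChain n} (h : m.1 = m'.1) : m = m' := Subtype.ext h

lemma permChain_congr {σ : Equiv.Perm (Fin n)} {m : MChain n}
    (h : ∀ A ∈ m.1, A.image σ = A) : permChain σ m = m :=
  ext <| (Multiset.map_congr rfl h).trans (Multiset.map_id' m.1)

lemma permChain_one (m : MChain n) : permChain 1 m = m :=
  permChain_congr fun A _ => by simp

lemma permChain_mul (σ τ : Equiv.Perm (Fin n)) (m : MChain n) :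
    permChain (σ * τ) m = permChain σ (permChain τ m) := by
  ext1
  simp only [permChain, Multiset.map_map, Function.comp_def, Finset.image_image]
  rfl

lemma permChain_swap_permChain_swap (a b : Fin n) (m : MChain n) :
    permChain (Equiv.swap a b) (permChain (Equiv.swap a b) m) = m := by
  rw [← permChain_mul, Equiv.swap_mul_self, permChain_one]

lemma mem_image_swap (a b x : Fin n) (A : Finset (Fin n)) :
    x ∈ A.image (Equiv.swap a b) ↔ Equiv.swap a b x ∈ A := by
  simp [Equiv.swap_apply_eq_iff]

/-- The paper's `p_a(M) > p_b(M)`. -/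
def IsDescent (a b : Fin n) (m : MChain n) : Prop := ∃ A ∈ m.1, b ∈ A ∧ a ∉ A

lemma isDescent_permChain_swap {a b : Fin n} {m : MChain n} :
    IsDescent a b (permChain (Equiv.swap a b) m) ↔ ∃ A ∈ m.1, a ∈ A ∧ b ∉ A := by
  simp only [IsDescent, permChain, Multiset.mem_map, exists_exists_and_eq_and, mem_image_swap,
    Equiv.swap_apply_left, Equiv.swap_apply_right]

lemma not_isDescent_permChain_swap {a b : Fin n} {m : MChain n} (h : IsDescent a b m) :
    ¬ IsDescent a b (permChain (Equiv.swap a b) m) := by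
  rw [isDescent_permChain_swap]
  rintro ⟨B, hB, haB, hbB⟩
  obtain ⟨A, hA, hbA, haA⟩ := h
  rcases m.2 A hA B hB with hAB | hBA
  exacts [hbB (hAB hbA), haA (hBA haB)]

lemma permChain_swap_eq_self {a b : Fin n} {m : MChain n} (h : ∀ A ∈ m.1, (a ∈ A ↔ b ∈ A)) :
    permChain (Equiv.swap a b) m = m := by
  refine permChain_congr fun A hA => Finset.ext fun x => ?_
  rw [mem_image_swap, Equiv.swap_apply_def]
  split_ifs with hxa hxb
  · exact hxa ▸ (h A hA).symm
  · exact hxb ▸ h A hA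
  · rfl

lemma isDescent_permChain_swap_of_not {a b : Fin n} {m : MChain n} (hD : ¬ IsDescent a b m)
    (hE : ¬ ∀ A ∈ m.1, (a ∈ A ↔ b ∈ A)) : IsDescent a b (permChain (Equiv.swap a b) m) := by
  rw [isDescent_permChain_swap]
  push Not at hE
  obtain ⟨A, hA, hab⟩ := hE
  refine ⟨A, hA, ?_⟩
  by_cases ha : a ∈ A <;> by_cases hb : b ∈ A <;> simp_all [IsDescent]

lemma forall_isDescent_imp_iff {β : Type*} (a b : Fin n) (g : MChain n → β) :
    (∀ m, IsDescent a b m → g (permChain (Equiv.swap a b) m) = g m) ↔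
      ∀ m, g (permChain (Equiv.swap a b) m) = g m := by
  refine ⟨fun h m => ?_, fun h m _ => h m⟩
  by_cases hD : IsDescent a b m
  · exact h m hD
  by_cases hE : ∀ A ∈ m.1, (a ∈ A ↔ b ∈ A)
  · rw [permChain_swap_eq_self hE]
  · have h' := h _ (isDescent_permChain_swap_of_not hD hE)
    rw [permChain_swap_permChain_swap] at h'
    exact h'.symm

end MChain

open MChain

section Operators

variable {F : Type*} [Field F] {n : ℕ}

lemma permAct_single (σ : Equiv.Perm (Fin n)) (m : MChain n) (c : F) :
    permAct σ (Finsupp.single m c) = Finsupp.single (permChain σ m) c :=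
  Finsupp.mapDomain_single

lemma permAct_one (f : MChain n →₀ F) : permAct 1 f = f := by
  rw [permAct, Finsupp.lmapDomain_apply, show permChain 1 = id from funext permChain_one,
    Finsupp.mapDomain_id]

lemma permAct_mul (σ τ : Equiv.Perm (Fin n)) (f : MChain n →₀ F) :
    permAct (σ * τ) f = permAct σ (permAct τ f) := by
  simp only [permAct, Finsupp.lmapDomain_apply]
  rw [show permChain (σ * τ) = permChain σ ∘ permChain τ from funext (permChain_mul σ τ),
    Finsupp.mapDomain_comp]

lemma permAct_swap_apply (a b : Fin n) (f : MChain n →₀ F) (m : MChain n) :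
    permAct (Equiv.swap a b) f m = f (permChain (Equiv.swap a b) m) := by
  have hinj : Function.Injective (permChain (Equiv.swap a b)) :=
    Function.LeftInverse.injective (permChain_swap_permChain_swap a b)
  rw [permAct, Finsupp.lmapDomain_apply, ← Finsupp.mapDomain_apply hinj f,
    permChain_swap_permChain_swap]

lemma pibarOp_eq_filter (i : ℕ) (hi : i + 1 < n) (f : MChain n →₀ F) :
    pibarOp i hi f =
      (permAct (Equiv.swap ⟨i, Nat.lt_of_succ_lt hi⟩ ⟨i + 1, hi⟩) f - f).filter
        (IsDescent ⟨i, Nat.lt_of_succ_lt hi⟩ ⟨i + 1, hi⟩) := by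
  induction f using Finsupp.induction_linear with
  | zero => rw [map_zero, map_zero, sub_zero, Finsupp.filter_zero]
  | add f g hf hg => rw [map_add, map_add, hf, hg, add_sub_add_comm, Finsupp.filter_add]
  | single m c =>
    rw [pibarOp, Finsupp.lsum_single, permAct_single, Finsupp.filter_sub]
    split_ifs with hD hE
    · rw [Finsupp.filter_single_of_neg (IsDescent _ _) (not_isDescent_permChain_swap hD),
        Finsupp.filter_single_of_pos (IsDescent _ _) hD]
      simp
    · simp [permChain_swap_eq_self hE]
    · rw [Finsupp.filter_single_of_pos (IsDescent _ _) (isDescent_permChain_swap_of_not hD hE),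
        Finsupp.filter_single_of_neg (IsDescent _ _) hD, sub_zero]
      rfl

lemma pibarOp_eq_zero_iff (i : ℕ) (hi : i + 1 < n) (f : MChain n →₀ F) :
    pibarOp i hi f = 0 ↔ ∀ m, IsDescent ⟨i, Nat.lt_of_succ_lt hi⟩ ⟨i + 1, hi⟩ m →
      f (permChain (Equiv.swap ⟨i, Nat.lt_of_succ_lt hi⟩ ⟨i + 1, hi⟩) m) = f m := by
  simp only [pibarOp_eq_filter, Finsupp.filter_eq_zero_iff, Finsupp.sub_apply,
    permAct_swap_apply, sub_eq_zero]

lemma permAct_swap_eq_self_iff (a b : Fin n) (f : MChain n →₀ F) :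
    permAct (Equiv.swap a b) f = f ↔ ∀ m, f (permChain (Equiv.swap a b) m) = f m := by
  simp only [Finsupp.ext_iff, permAct_swap_apply]

theorem pibarOp_eq_zero_iff_permAct_swap_eq_self (i : ℕ) (hi : i + 1 < n)
    (f : MChain n →₀ F) :
    pibarOp i hi f = 0 ↔
      permAct (Equiv.swap ⟨i, Nat.lt_of_succ_lt hi⟩ ⟨i + 1, hi⟩) f = f := by
  rw [pibarOp_eq_zero_iff, permAct_swap_eq_self_iff, forall_isDescent_imp_iff]

end Operators

lemma Equiv.Perm.mclosure_swap_adjacent (n : ℕ) :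
    Submonoid.closure {τ : Equiv.Perm (Fin n) |
      ∃ (i : ℕ) (hi : i + 1 < n), τ = Equiv.swap ⟨i, Nat.lt_of_succ_lt hi⟩ ⟨i + 1, hi⟩} = ⊤ := by
  cases n with
  | zero => exact eq_top_iff.2 fun σ _ => Subsingleton.elim σ 1 ▸ Submonoid.one_mem _
  | succ k =>
    refine top_unique ?_
    rw [← Equiv.Perm.mclosure_swap_castSucc_succ]
    refine Submonoid.closure_mono ?_
    rintro _ ⟨j, rfl⟩
    exact ⟨j, Nat.succ_lt_succ j.2, rfl⟩

lemma permAct_eq_self_of_forall_adjacent_swap {F : Type*} [Field F] {n : ℕ} {f : MChain n →₀ F}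
    (h : ∀ (i : ℕ) (hi : i + 1 < n),
      permAct (Equiv.swap ⟨i, Nat.lt_of_succ_lt hi⟩ ⟨i + 1, hi⟩) f = f)
    (σ : Equiv.Perm (Fin n)) : permAct σ f = f := by
  have hσ : σ ∈ Submonoid.closure _ :=
    (Equiv.Perm.mclosure_swap_adjacent n).symm ▸ Submonoid.mem_top σ
  induction hσ using Submonoid.closure_induction with
  | mem τ hτ =>
    obtain ⟨i, hi, rfl⟩ := hτ
    exact h i hi
  | one => exact permAct_one f
  | mul τ ρ _ _ hτ hρ => rw [permAct_mul, hρ, hτ]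

/-- For each `i ∈ [n-1]`, an element `f ∈ F[Bₙ]` satisfies `π̄ᵢ(f) = 0` iff `sᵢ(f) = f`;
consequently the 0-Hecke invariants `{f : π̄ᵢ f = 0 ∀ i}` coincide with the
`Sₙ`-invariants `{f : σ f = f ∀ σ}`. -/
theorem stmt_5 {F : Type*} [Field F] (n : ℕ) :
    (∀ (i : ℕ) (hi : i + 1 < n) (f : MChain n →₀ F),
      pibarOp i hi f = 0 ↔
        permAct (Equiv.swap ⟨i, Nat.lt_of_succ_lt hi⟩ ⟨i + 1, hi⟩) f = f) ∧
    {f : MChain n →₀ F | ∀ (i : ℕ) (hi : i + 1 < n), pibarOp i hi f = 0} =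
      {f : MChain n →₀ F | ∀ σ : Equiv.Perm (Fin n), permAct σ f = f} :=
  ⟨pibarOp_eq_zero_iff_permAct_swap_eq_self, Set.ext fun f =>
    ⟨fun h => permAct_eq_self_of_forall_adjacent_swap fun i hi =>
        (pibarOp_eq_zero_iff_permAct_swap_eq_self i hi f).1 (h i hi),
      fun h i hi => (pibarOp_eq_zero_iff_permAct_swap_eq_self i hi f).2 (h _)⟩⟩
end

section
/- The action of the 0-Hecke algebra Hₙ(0) on the Stanley-Reisner ring F[Bₙ] is Θ-linear: π̄ᵢ(θᵣ · f) = θᵣ · π̄ᵢ(f) for all i ∈ [n-1], all r ∈ {0,1,...,n}, and all f ∈ F[Bₙ]. -/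
set_option synthInstance.maxHeartbeats 1000000
set_option maxHeartbeats 1000000

open scoped Classical

/-- Multiplication by the rank polynomial `θᵣ = Σ_{|A|=r} y_A` on the Stanley-Reisner
ring `F[Bₙ]`: on a basis element `y_M` it yields the sum of `y_{M ∪ {A}}` over all
subsets `A` of cardinality `r` compatible with the multichain `M`. -/
noncomputable def thetaMul {F : Type*} [Field F] {n : ℕ} (r : ℕ) :
    (MChain n →₀ F) →ₗ[F] (MChain n →₀ F) :=
  Finsupp.lsum F (fun m : MChain n =>
    ∑ A ∈ (Finset.univ.filter
        (fun A : Finset (Fin n) => A.card = r ∧ ∀ B ∈ m.1, A ⊆ B ∨ B ⊆ A)).attach,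
      Finsupp.lsingle (⟨A.1 ::ₘ m.1, by
        have hA := (Finset.mem_filter.mp A.2).2.2
        intro X hX Y hY
        rcases Multiset.mem_cons.mp hX with rfl | hX' <;>
          rcases Multiset.mem_cons.mp hY with rfl | hY'
        · exact Or.inl subset_rfl
        · exact hA Y hY'
        · exact (hA X hX').symm
        · exact m.2 X hX' Y hY'⟩ : MChain n))

/-! Write `s` for the transposition of `a, b` and fix a multichain `M`. Since `M` is a chain, no
two of its members separate `a` and `b` in opposite directions, so `M` has a descent (a member
containing `b` but not `a`), an ascent, or is `s`-invariant. Adjoin a set `A` comparable with all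
of `M`:
* descent: every `M ∪ {A}` has a descent, so both sides are `-θᵣ · y_M`;
* ascent: every `M ∪ {A}` has an ascent, and `A ↦ s A` matches the terms `y_{s(M ∪ {A})}` of
  `π̄(θᵣ · y_M)` with the terms `y_{sM ∪ {A'}}` of `θᵣ · y_{sM}`;
* invariant: `π̄ y_M = 0`, and in `π̄(θᵣ · y_M)` the terms for `A` and `s A` cancel: either
  one of `M ∪ {A}`, `M ∪ {s A}` has an ascent and the other a descent, or `A = s A` and the
  term is `0`.
-/

namespace Finset

variable {α : Type*} [DecidableEq α] {a b : α}

theorem mem_image_swap {A : Finset α} {x : α} :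
    x ∈ A.image (Equiv.swap a b) ↔ Equiv.swap a b x ∈ A := by
  rw [← mem_coe, coe_image, Set.mem_image_equiv, Equiv.symm_swap, mem_coe]

theorem image_swap_image_swap (A : Finset α) :
    (A.image (Equiv.swap a b)).image (Equiv.swap a b) = A := by
  ext x
  rw [mem_image_swap, mem_image_swap, Equiv.swap_apply_self]

theorem image_swap_eq_self {A : Finset α} (h : a ∈ A ↔ b ∈ A) :
    A.image (Equiv.swap a b) = A := by
  ext x
  rw [mem_image_swap, Equiv.swap_apply_def]
  split_ifs with hxa hxb
  · rw [hxa, h]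
  · rw [hxb, h]
  · rfl

end Finset

namespace MChain

variable {n : ℕ} {a b : Fin n} {m : MChain n} {A X : Finset (Fin n)}

def Compatible (A : Finset (Fin n)) (m : MChain n) : Prop :=
  ∀ B ∈ m.1, A ⊆ B ∨ B ⊆ A

def HasDescent (a b : Fin n) (m : MChain n) : Prop :=
  ∃ A ∈ m.1, b ∈ A ∧ a ∉ A

def HasAscent (a b : Fin n) (m : MChain n) : Prop :=
  ∃ A ∈ m.1, a ∈ A ∧ b ∉ A

def SwapInvariant (a b : Fin n) (m : MChain n) : Prop :=
  ∀ A ∈ m.1, (a ∈ A ↔ b ∈ A)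

theorem not_hasDescent_of_hasAscent (h : m.HasAscent a b) : ¬ m.HasDescent a b := by
  rintro ⟨B, hB, hbB, haB⟩
  obtain ⟨A, hA, haA, hbA⟩ := h
  rcases m.2 A hA B hB with hAB | hBA
  · exact haB (hAB haA)
  · exact hbA (hBA hbB)

theorem hasAscent_of_not_hasDescent_of_not_swapInvariant (hd : ¬ m.HasDescent a b)
    (hb : ¬ m.SwapInvariant a b) : m.HasAscent a b := by
  simp only [HasDescent, HasAscent, SwapInvariant, not_exists, not_and, not_not, not_forall] at *
  obtain ⟨A, hA, hab⟩ := hb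
  exact ⟨A, hA, by tauto⟩

theorem compatible_image_iff (σ : Equiv.Perm (Fin n)) :
    Compatible (A.image σ) (permChain σ m) ↔ Compatible A m := by
  simp only [Compatible, permChain, Multiset.forall_mem_map_iff,
    Finset.image_subset_image_iff σ.injective]

theorem permChain_eq_self_of_swapInvariant (h : m.SwapInvariant a b) :
    permChain (Equiv.swap a b) m = m :=
  Subtype.ext <| (Multiset.map_congr rfl fun B hB => Finset.image_swap_eq_self (h B hB)).trans
    (Multiset.map_id _)

theorem Compatible.image_swap (hA : Compatible A m) (hm : m.SwapInvariant a b) :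
    Compatible (A.image (Equiv.swap a b)) m := by
  rwa [← permChain_eq_self_of_swapInvariant hm, compatible_image_iff]

/-- Adjoining `A` to `m`; the junk value for an incompatible `A` is `m` itself. -/
noncomputable def cons (m : MChain n) (A : Finset (Fin n)) : MChain n :=
  if h : Compatible A m then
    ⟨A ::ₘ m.1, by
      intro X hX Y hY
      rcases Multiset.mem_cons.mp hX with rfl | hX' <;>
        rcases Multiset.mem_cons.mp hY with rfl | hY'
      · exact Or.inl subset_rfl
      · exact h Y hY'
      · exact (h X hX').symm
      · exact m.2 X hX' Y hY'⟩
  else m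

theorem cons_val (h : Compatible A m) : (m.cons A).1 = A ::ₘ m.1 := by
  unfold cons
  exact congrArg Subtype.val (dif_pos h)

theorem mem_cons (h : Compatible A m) :
    X ∈ (m.cons A).1 ↔ X = A ∨ X ∈ m.1 := by
  rw [cons_val h, Multiset.mem_cons]

theorem mem_cons_of_mem (hX : X ∈ m.1) : X ∈ (m.cons A).1 := by
  by_cases h : Compatible A m
  · exact (mem_cons h).2 (Or.inr hX)
  · simpa [cons, h] using hX

theorem HasDescent.cons (h : m.HasDescent a b) (A : Finset (Fin n)) :
    (m.cons A).HasDescent a b :=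
  let ⟨B, hB, hbB⟩ := h
  ⟨B, mem_cons_of_mem hB, hbB⟩

theorem HasAscent.cons (h : m.HasAscent a b) (A : Finset (Fin n)) :
    (m.cons A).HasAscent a b :=
  let ⟨B, hB, hbB⟩ := h
  ⟨B, mem_cons_of_mem hB, hbB⟩

theorem hasDescent_cons (h : Compatible A m) (hb : b ∈ A) (ha : a ∉ A) :
    (m.cons A).HasDescent a b :=
  ⟨A, (mem_cons h).2 (Or.inl rfl), hb, ha⟩

theorem hasAscent_cons (h : Compatible A m) (ha : a ∈ A) (hb : b ∉ A) :
    (m.cons A).HasAscent a b :=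
  ⟨A, (mem_cons h).2 (Or.inl rfl), ha, hb⟩

theorem SwapInvariant.cons (hm : m.SwapInvariant a b) (h : Compatible A m)
    (hA : a ∈ A ↔ b ∈ A) : (m.cons A).SwapInvariant a b := by
  intro X hX
  rcases (mem_cons h).1 hX with rfl | hX
  exacts [hA, hm X hX]

theorem permChain_cons (σ : Equiv.Perm (Fin n)) (h : Compatible A m) :
    permChain σ (m.cons A) = (permChain σ m).cons (A.image σ) := by
  refine Subtype.ext ?_
  rw [cons_val ((compatible_image_iff σ).2 h)]
  change (m.cons A).1.map _ = _
  rw [cons_val h, Multiset.map_cons]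
  rfl

-- `Compatible` is left unfolded so that this is the index set of `thetaMul` up to syntax,
-- decidability instances included.
def compatibleSets (r : ℕ) (m : MChain n) : Finset (Finset (Fin n)) :=
  Finset.univ.filter (fun A : Finset (Fin n) => A.card = r ∧ ∀ B ∈ m.1, A ⊆ B ∨ B ⊆ A)

theorem mem_compatibleSets {r : ℕ} :
    A ∈ compatibleSets r m ↔ A.card = r ∧ Compatible A m := by
  simp [compatibleSets, Compatible]

theorem image_mem_compatibleSets_iff (σ : Equiv.Perm (Fin n)) {r : ℕ} :
    A.image σ ∈ compatibleSets r (permChain σ m) ↔ A ∈ compatibleSets r m := by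
  rw [mem_compatibleSets, mem_compatibleSets, compatible_image_iff,
    Finset.card_image_of_injective _ σ.injective]

end MChain

open MChain

section Operators

variable {F : Type*} [Field F] {n : ℕ}

noncomputable def pibar (a b : Fin n) : (MChain n →₀ F) →ₗ[F] (MChain n →₀ F) :=
  Finsupp.lsum F (fun m : MChain n =>
    if m.HasDescent a b then -(Finsupp.lsingle m)
    else if m.SwapInvariant a b then 0
    else Finsupp.lsingle (permChain (Equiv.swap a b) m))

theorem pibarOp_eq_pibar (i : ℕ) (hi : i + 1 < n) :
    (pibarOp i hi : (MChain n →₀ F) →ₗ[F] _) =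
      pibar ⟨i, Nat.lt_of_succ_lt hi⟩ ⟨i + 1, hi⟩ := by
  unfold pibarOp pibar HasDescent SwapInvariant
  congr!

variable {a b : Fin n} {m : MChain n} (c : F)

theorem pibar_single_of_hasDescent (h : m.HasDescent a b) :
    pibar a b (Finsupp.single m c) = -Finsupp.single m c := by
  rw [pibar, Finsupp.lsum_single, if_pos h,
    LinearMap.neg_apply, Finsupp.lsingle_apply]

theorem pibar_single_of_hasAscent (h : m.HasAscent a b) :
    pibar a b (Finsupp.single m c) = Finsupp.single (permChain (Equiv.swap a b) m) c := by
  have hb : ¬ m.SwapInvariant a b := fun hb =>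
    let ⟨A, hA, haA, hbA⟩ := h
    hbA ((hb A hA).1 haA)
  rw [pibar, Finsupp.lsum_single, if_neg (not_hasDescent_of_hasAscent h), if_neg hb,
    Finsupp.lsingle_apply]

theorem pibar_single_of_swapInvariant (h : m.SwapInvariant a b) :
    pibar a b (Finsupp.single m c) = 0 := by
  have hd : ¬ m.HasDescent a b := fun ⟨A, hA, hbA, haA⟩ => haA ((h A hA).2 hbA)
  rw [pibar, Finsupp.lsum_single, if_neg hd, if_pos h, LinearMap.zero_apply]

theorem thetaMul_single (r : ℕ) (m : MChain n) :
    thetaMul (F := F) r (Finsupp.single m c) =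
      ∑ A ∈ compatibleSets r m, Finsupp.single (m.cons A) c := by
  rw [thetaMul, Finsupp.lsum_single, LinearMap.sum_apply,
    ← Finset.sum_attach (compatibleSets r m)]
  refine Finset.sum_congr rfl fun A _ => congrArg (Finsupp.single · c) ?_
  exact Subtype.ext (cons_val (mem_compatibleSets.1 A.2).2).symm

end Operators

section Commutation

variable {F : Type*} [Field F] {n : ℕ} {a b : Fin n} {m : MChain n} (r : ℕ) (c : F)

theorem pibar_thetaMul_single_of_hasDescent (h : m.HasDescent a b) :
    pibar a b (thetaMul r (Finsupp.single m c)) = thetaMul r (pibar a b (Finsupp.single m c)) := by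
  rw [pibar_single_of_hasDescent c h, map_neg, thetaMul_single, map_sum, ← Finset.sum_neg_distrib]
  exact Finset.sum_congr rfl fun A _ => pibar_single_of_hasDescent c (h.cons A)

theorem pibar_thetaMul_single_of_hasAscent (h : m.HasAscent a b) :
    pibar a b (thetaMul r (Finsupp.single m c)) = thetaMul r (pibar a b (Finsupp.single m c)) := by
  rw [pibar_single_of_hasAscent c h, thetaMul_single, thetaMul_single, map_sum]
  refine Finset.sum_nbij' (Finset.image (Equiv.swap a b)) (Finset.image (Equiv.swap a b))
    (fun A hA => (image_mem_compatibleSets_iff _).2 hA) (fun A hA => ?_)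
    (fun A _ => Finset.image_swap_image_swap A) (fun A _ => Finset.image_swap_image_swap A)
    (fun A hA => ?_)
  · rwa [← image_mem_compatibleSets_iff (Equiv.swap a b), Finset.image_swap_image_swap]
  · rw [pibar_single_of_hasAscent c (h.cons A), permChain_cons _ (mem_compatibleSets.1 hA).2]

theorem pibar_single_cons_add_pibar_single_cons_image_swap_of_mem_of_not_mem
    (hm : m.SwapInvariant a b) {A : Finset (Fin n)} (hA : Compatible A m) (ha : a ∈ A)
    (hb : b ∉ A) :
    pibar a b (Finsupp.single (m.cons A) c) +
      pibar a b (Finsupp.single (m.cons (A.image (Equiv.swap a b))) c) = 0 := by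
  have hσa : a ∉ A.image (Equiv.swap a b) := by
    rwa [Finset.mem_image_swap, Equiv.swap_apply_left]
  have hσb : b ∈ A.image (Equiv.swap a b) := by
    rwa [Finset.mem_image_swap, Equiv.swap_apply_right]
  rw [pibar_single_of_hasAscent c (hasAscent_cons hA ha hb), permChain_cons _ hA,
    permChain_eq_self_of_swapInvariant hm,
    pibar_single_of_hasDescent c (hasDescent_cons (hA.image_swap hm) hσb hσa), add_neg_cancel]

theorem pibar_single_cons_add_pibar_single_cons_image_swap (hm : m.SwapInvariant a b)
    {A : Finset (Fin n)} (hA : Compatible A m) :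
    pibar a b (Finsupp.single (m.cons A) c) +
      pibar a b (Finsupp.single (m.cons (A.image (Equiv.swap a b))) c) = 0 := by
  by_cases hab : a ∈ A ↔ b ∈ A
  · rw [Finset.image_swap_eq_self hab, pibar_single_of_swapInvariant c (hm.cons hA hab), add_zero]
  by_cases ha : a ∈ A
  · exact pibar_single_cons_add_pibar_single_cons_image_swap_of_mem_of_not_mem c hm hA ha
      fun hb => hab (iff_of_true ha hb)
  · have hb : b ∈ A := by tauto
    have hσa : a ∈ A.image (Equiv.swap a b) := by
      rwa [Finset.mem_image_swap, Equiv.swap_apply_left]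
    have hσb : b ∉ A.image (Equiv.swap a b) := by
      rwa [Finset.mem_image_swap, Equiv.swap_apply_right]
    rw [add_comm]
    simpa only [Finset.image_swap_image_swap] using
      pibar_single_cons_add_pibar_single_cons_image_swap_of_mem_of_not_mem c hm
        (hA.image_swap hm) hσa hσb

theorem pibar_thetaMul_single_of_swapInvariant (h : m.SwapInvariant a b) :
    pibar a b (thetaMul r (Finsupp.single m c)) = thetaMul r (pibar a b (Finsupp.single m c)) := by
  rw [pibar_single_of_swapInvariant c h, map_zero, thetaMul_single, map_sum]
  refine Finset.sum_involution (fun A _ => A.image (Equiv.swap a b))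
    (fun A hA => pibar_single_cons_add_pibar_single_cons_image_swap c h
      (mem_compatibleSets.1 hA).2) (fun A hA hne hfix => hne ?_) (fun A hA => ?_)
    (fun A _ => Finset.image_swap_image_swap A)
  · have hab : a ∈ A ↔ b ∈ A := by
      simpa only [hfix, Equiv.swap_apply_left] using
        Finset.mem_image_swap (a := a) (b := b) (A := A) (x := a)
    exact pibar_single_of_swapInvariant c (h.cons (mem_compatibleSets.1 hA).2 hab)
  · rwa [← permChain_eq_self_of_swapInvariant h, image_mem_compatibleSets_iff]

theorem pibar_comp_thetaMul :
    (pibar a b ∘ₗ thetaMul r : (MChain n →₀ F) →ₗ[F] (MChain n →₀ F)) =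
      thetaMul r ∘ₗ pibar a b := by
  refine Finsupp.lhom_ext fun m c => ?_
  by_cases hd : m.HasDescent a b
  · exact pibar_thetaMul_single_of_hasDescent r c hd
  by_cases hs : m.SwapInvariant a b
  · exact pibar_thetaMul_single_of_swapInvariant r c hs
  · exact pibar_thetaMul_single_of_hasAscent r c
      (hasAscent_of_not_hasDescent_of_not_swapInvariant hd hs)

end Commutation

/-- The 0-Hecke action on the Stanley-Reisner ring `F[Bₙ]` is `Θ`-linear:
`π̄ᵢ(θᵣ · f) = θᵣ · π̄ᵢ(f)` for all `i ∈ [n-1]`, `r ∈ {0,1,…,n}`, and `f ∈ F[Bₙ]`. -/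
theorem stmt_6 {F : Type*} [Field F] (n : ℕ) :
    ∀ (i : ℕ) (hi : i + 1 < n) (r : ℕ), r ≤ n → ∀ f : MChain n →₀ F,
      pibarOp i hi (thetaMul r f) = thetaMul r (pibarOp i hi f) := by
  intro i hi r _ f
  rw [pibarOp_eq_pibar]
  exact LinearMap.congr_fun (pibar_comp_thetaMul r) f
end

section
/- The map M ↦ (α(M), σ(M)) is a bijection between multichains of length k in the Boolean algebra Bₙ and pairs (α, σ) where α is a weak composition of n with length k+1 and σ ∈ Sₙ has descent set contained in D(α). -/
/-- The partial sum `α₁ + ⋯ + α_j` of a weak composition `α` of length `k+1`. -/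
def psum {k : ℕ} (a : Fin (k + 1) → ℕ) (j : ℕ) : ℕ :=
  ∑ l ∈ Finset.univ.filter (fun l : Fin (k + 1) => (l : ℕ) < j), a l

/-- The descent set `D(w) = {i ∈ [n-1] : w(i) > w(i+1)}` of a permutation,
with 1-based positions. -/
def DpermSet {n : ℕ} (w : Equiv.Perm (Fin n)) : Set ℕ :=
  {i | ∃ (j : ℕ) (h : j + 1 < n),
    i = j + 1 ∧ w ⟨j + 1, h⟩ < w ⟨j, Nat.lt_of_succ_lt h⟩}

/-!
Give `x ∈ [n]` the level `l` if `x` first enters the multichain at `A_{l+1}`. The inverse map sends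
`M` to `α(M)`, which counts the elements of each level, and `σ(M)`, which lists `[n]` by increasing
level and increasingly within a level; the image of `(α(M), σ(M))` is `M` and `σ(M)` has no descent
inside a block of `α(M)`. Conversely, `D(σ) ⊆ D(α)` says that `σ` increases within every block of
`α`, and the blocks are the level sets of the multichain, so `σ = σ(M)` is recovered from `M`, as is
`α` from the cardinalities `|A_j|`.
-/

open Finset

namespace Multichain

variable {k n : ℕ}

lemma psum_succ (a : Fin (k + 1) → ℕ) (l : Fin (k + 1)) : psum a (l + 1) = psum a l + a l := by
  have hfilter : ({j | (j : ℕ) < l + 1} : Finset (Fin (k + 1))) =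
      insert l ({j | (j : ℕ) < l} : Finset (Fin (k + 1))) := by
    ext j
    simp only [mem_filter, mem_univ, true_and, mem_insert, Fin.ext_iff]
    omega
  rw [psum, psum, hfilter, sum_insert (by simp), add_comm]

lemma psum_injective : Function.Injective (psum (k := k)) := by
  intro a b h
  funext l
  have ha := psum_succ a l
  have hb := psum_succ b l
  rw [h] at ha
  omega

lemma psum_mono (a : Fin (k + 1) → ℕ) : Monotone (psum a) := fun _ _ h =>
  sum_le_sum_of_subset fun j => by simp only [mem_filter, mem_univ, true_and]; omega

lemma psum_le_sum (a : Fin (k + 1) → ℕ) (m : ℕ) : psum a m ≤ ∑ j, a j :=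
  sum_le_sum_of_subset (filter_subset _ _)

lemma psum_of_le (a : Fin (k + 1) → ℕ) {m : ℕ} (hm : k + 1 ≤ m) : psum a m = ∑ j, a j := by
  rw [psum, filter_true_of_mem fun j _ => j.isLt.trans_le hm]

def chainOf (a : Fin (k + 1) → ℕ) (σ : Equiv.Perm (Fin n)) (j : Fin k) : Finset (Fin n) :=
  image σ {x | (x : ℕ) < psum a (j + 1)}

lemma monotone_chainOf (a : Fin (k + 1) → ℕ) (σ : Equiv.Perm (Fin n)) :
    Monotone (chainOf a σ) := fun _ _ h =>
  image_subset_image <| monotone_filter_right _ fun _ _ hx =>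
    lt_of_lt_of_le hx <| psum_mono a <| Nat.succ_le_succ (Fin.le_def.mp h)

lemma card_chainOf {a : Fin (k + 1) → ℕ} (ha : ∑ j, a j = n) (σ : Equiv.Perm (Fin n))
    (j : Fin k) : #(chainOf a σ j) = psum a (j + 1) := by
  rw [chainOf, card_image_of_injective _ σ.injective, Fin.card_filter_val_lt,
    min_eq_right (ha ▸ psum_le_sum a _)]

lemma eq_of_chainOf_eq {a b : Fin (k + 1) → ℕ} (ha : ∑ j, a j = n) (hb : ∑ j, b j = n)
    {σ τ : Equiv.Perm (Fin n)} (h : chainOf a σ = chainOf b τ) : a = b := by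
  refine psum_injective (funext fun m => ?_)
  rcases m with _ | m
  · simp [psum]
  by_cases hm : m < k
  · simpa only [card_chainOf ha, card_chainOf hb] using congrArg card (congrFun h ⟨m, hm⟩)
  · rw [psum_of_le a (by omega), psum_of_le b (by omega), ha, hb]

/-- For monotone `M`, the index of the first member of `M` containing `x`, or `k` if there is
none. -/
def level (M : Fin k → Finset (Fin n)) (x : Fin n) : ℕ := #{j | x ∉ M j}

lemma level_le (M : Fin k → Finset (Fin n)) (x : Fin n) : level M x ≤ k :=
  (card_filter_le _ _).trans (card_fin k).le

lemma mem_iff_level_le {M : Fin k → Finset (Fin n)} (hM : Monotone M) (x : Fin n)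
    (j : Fin k) : x ∈ M j ↔ level M x ≤ j := by
  rw [← not_iff_not, not_le]
  exact (Fin.lt_card_filter_univ_iff_apply_of_imp (fun j => x ∉ M j)
    fun _ _ hij hx hxj => hx (hM hij hxj)).symm

/-- The block of `α` containing the `0`-based position `i`. -/
def blockIndex (a : Fin (k + 1) → ℕ) (i : ℕ) : ℕ := #{j : Fin k | psum a (j + 1) ≤ i}

lemma level_chainOf_apply (a : Fin (k + 1) → ℕ) (σ : Equiv.Perm (Fin n)) (i : Fin n) :
    level (chainOf a σ) (σ i) = blockIndex a i := by
  simp [level, blockIndex, chainOf, σ.injective.mem_finset_image]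

lemma blockIndex_mono (a : Fin (k + 1) → ℕ) : Monotone (blockIndex a) := fun _ _ h =>
  card_le_card <| monotone_filter_right _ fun _ _ hj => hj.trans h

lemma blockIndex_lt_succ {a : Fin (k + 1) → ℕ} {i : ℕ} (h : ∃ j < k, i + 1 = psum a (j + 1)) :
    blockIndex a i < blockIndex a (i + 1) := by
  obtain ⟨j, hj, hi⟩ := h
  refine card_lt_card <| (ssubset_iff_of_subset <| monotone_filter_right _ fun _ _ h =>
    h.trans i.le_succ).mpr ⟨⟨j, hj⟩, ?_, ?_⟩
  all_goals simp only [mem_filter, mem_univ, true_and]; omega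

/-- Within a block `σ` has no descent, so sorting positions by block and then by value
is the same as sorting them by position. -/
lemma monotone_toLex_blockIndex {a : Fin (k + 1) → ℕ} {σ : Equiv.Perm (Fin n)}
    (hσ : DpermSet σ ⊆ {s | ∃ j < k, s = psum a (j + 1)}) :
    Monotone fun i : Fin n => toLex (blockIndex a i, σ i) := by
  rcases n with _ | n
  · exact fun i => i.elim0
  refine Fin.monotone_iff_le_succ.mpr fun i => Prod.Lex.toLex_le_toLex.mpr ?_
  rcases (blockIndex_mono a (Nat.le_succ i)).lt_or_eq with hlt | heq
  · exact Or.inl hlt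
  refine Or.inr ⟨heq, le_of_not_gt fun hdesc => heq.not_lt ?_⟩
  exact blockIndex_lt_succ (hσ ⟨i, by simp, rfl, hdesc⟩)

def sortKey (M : Fin k → Finset (Fin n)) (x : Fin n) : ℕ ×ₗ Fin n := toLex (level M x, x)

lemma sortKey_injective (M : Fin k → Finset (Fin n)) : Function.Injective (sortKey M) :=
  fun _ _ h => congrArg (fun p => (ofLex p).2) h

/-- `σ(M)` of the paper. -/
def sortPerm (M : Fin k → Finset (Fin n)) : Equiv.Perm (Fin n) := Tuple.sort (sortKey M)

lemma eq_sortPerm_chainOf {a : Fin (k + 1) → ℕ} {σ : Equiv.Perm (Fin n)}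
    (hσ : DpermSet σ ⊆ {s | ∃ j < k, s = psum a (j + 1)}) : σ = sortPerm (chainOf a σ) := by
  have hmono : Monotone (sortKey (chainOf a σ) ∘ σ) := by
    simpa only [Function.comp_def, sortKey, level_chainOf_apply] using
      monotone_toLex_blockIndex hσ
  exact DFunLike.coe_injective <| (sortKey_injective _).comp_left <|
    Tuple.unique_monotone hmono (Tuple.monotone_sort _)

/-- `α(M)`: the elements of level `l` are those of `A_{l+1} \ A_l`. -/
def compositionOf (M : Fin k → Finset (Fin n)) (l : Fin (k + 1)) : ℕ := #{x | level M x = l}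

lemma psum_compositionOf (M : Fin k → Finset (Fin n)) (m : ℕ) :
    psum (compositionOf M) m = #{x | level M x < m} := by
  let levelFin : Fin n → Fin (k + 1) := fun x => ⟨level M x, Nat.lt_succ_of_le (level_le M x)⟩
  rw [card_eq_sum_card_fiberwise (f := levelFin) (t := {l | (l : ℕ) < m})
    fun x hx => by simpa [levelFin] using hx]
  refine sum_congr rfl fun l hl => congrArg card <| ext fun x => ?_
  simp only [mem_filter, mem_univ, true_and, levelFin, Fin.ext_iff] at hl ⊢
  omega

lemma sum_compositionOf (M : Fin k → Finset (Fin n)) : ∑ l, compositionOf M l = n := by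
  rw [← psum_of_le _ le_rfl, psum_compositionOf,
    filter_true_of_mem fun x _ => Nat.lt_succ_of_le (level_le M x), card_univ, Fintype.card_fin]

lemma monotone_level_sortPerm (M : Fin k → Finset (Fin n)) :
    Monotone fun i => level M (sortPerm M i) :=
  Prod.Lex.monotone_fst_ofLex.comp (Tuple.monotone_sort (sortKey M))

lemma lt_psum_compositionOf_iff (M : Fin k → Finset (Fin n)) (i : Fin n) (m : ℕ) :
    (i : ℕ) < psum (compositionOf M) m ↔ level M (sortPerm M i) < m := by
  rw [psum_compositionOf, card_equiv (sortPerm M).symm (t := {i | level M (sortPerm M i) < m})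
    (by simp)]
  exact Tuple.lt_card_lt_iff_apply_lt_of_monotone (monotone_level_sortPerm M)

lemma chainOf_compositionOf {M : Fin k → Finset (Fin n)} (hM : Monotone M) :
    chainOf (compositionOf M) (sortPerm M) = M := by
  funext j
  ext x
  obtain ⟨i, rfl⟩ := (sortPerm M).surjective x
  rw [chainOf, (sortPerm M).injective.mem_finset_image, mem_filter_univ,
    lt_psum_compositionOf_iff, mem_iff_level_le hM, Nat.lt_succ_iff]

lemma dpermSet_sortPerm_subset (M : Fin k → Finset (Fin n)) :
    DpermSet (sortPerm M) ⊆ {s | ∃ j < k, s = psum (compositionOf M) (j + 1)} := by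
  rintro _ ⟨i, hi, rfl, hdesc⟩
  let i₀ : Fin n := ⟨i, Nat.lt_of_succ_lt hi⟩
  let i₁ : Fin n := ⟨i + 1, hi⟩
  have hlevel : level M (sortPerm M i₀) < level M (sortPerm M i₁) := by
    have hsorted := Tuple.monotone_sort (sortKey M) (show i₀ ≤ i₁ from Nat.le_succ i)
    rcases Prod.Lex.toLex_le_toLex.mp hsorted with hlt | ⟨_, hle⟩
    · exact hlt
    · exact absurd hle (not_le.mpr hdesc)
  refine ⟨_, hlevel.trans_le (level_le M _), ?_⟩
  have h₀ : i < psum (compositionOf M) (level M (sortPerm M i₀) + 1) :=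
    (lt_psum_compositionOf_iff M i₀ _).mpr (Nat.lt_succ_self _)
  have h₁ : ¬ i + 1 < psum (compositionOf M) (level M (sortPerm M i₀) + 1) :=
    (lt_psum_compositionOf_iff M i₁ _).not.mpr (by omega)
  omega

end Multichain

/-- Multichains of length `k` in `Bₙ` biject with pairs `(α, σ)` of a weak composition
`α` of `n` with length `k+1` and a permutation `σ ∈ S^α` (i.e. `D(σ) ⊆ D(α)`): the pair
`(α, σ)` corresponds to the multichain `A_j = σ([α₁+⋯+α_j])`, the image under `σ` of the
standard multichain of `α`. -/
theorem stmt_8 (n k : ℕ) :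
    Set.BijOn
      (fun p : (Fin (k + 1) → ℕ) × Equiv.Perm (Fin n) =>
        fun j : Fin k =>
          Finset.image p.2
            (Finset.univ.filter fun x : Fin n => (x : ℕ) < psum p.1 ((j : ℕ) + 1)))
      {p | (∑ j, p.1 j) = n ∧
        DpermSet p.2 ⊆ {s | ∃ j < k, s = psum p.1 (j + 1)}}
      {M : Fin k → Finset (Fin n) | Monotone M} := by
  open Multichain in
  refine ⟨fun p _ => monotone_chainOf p.1 p.2, ?_, fun M hM => ?_⟩
  · rintro ⟨a, σ⟩ ⟨ha, hσ⟩ ⟨b, τ⟩ ⟨hb, hτ⟩ (h : chainOf a σ = chainOf b τ)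
    obtain rfl : a = b := eq_of_chainOf_eq ha hb h
    have hστ : σ = τ := calc
      σ = sortPerm (chainOf a σ) := eq_sortPerm_chainOf hσ
      _ = τ := h ▸ (eq_sortPerm_chainOf hτ).symm
    rw [hστ]
  · exact ⟨(compositionOf M, sortPerm M), ⟨sum_compositionOf M, dpermSet_sortPerm_subset M⟩,
      chainOf_compositionOf hM⟩
end

section
/- In the algebra NSym of noncommutative symmetric functions, for any compositions α and β: s_α · s_β = s_{αβ} + s_{α▷β}, where αβ is concatenation and α▷β is near-concatenation obtained by merging the last part of α with the first part of β. -/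
noncomputable section

/-- The generator `h_i` of `NSym = ℤ⟨h₁, h₂, …⟩`, modeled as the free associative
algebra over `ℤ` on generators indexed by `ℕ`. -/
def hgen (i : ℕ) : FreeAlgebra ℤ ℕ := FreeAlgebra.ι ℤ i

/-- The complete homogeneous noncommutative symmetric function
`h_α = h_{α₁} ⋯ h_{α_ℓ}`, for a composition given as a list of parts. -/
def hprod (α : List ℕ) : FreeAlgebra ℤ ℕ := (α.map hgen).prod

/-- The coarsening `β ≼ α` of `α` determined by a composition `c` of `ℓ(α)`:
merge consecutive blocks of `α` according to `c` and sum them.  As `c` ranges over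
compositions of `ℓ(α)`, this enumerates exactly the compositions `β` with
`D(β) ⊆ D(α)`. -/
def coarsen (α : List ℕ) (c : Composition α.length) : List ℕ :=
  (α.splitWrtComposition c).map List.sum

/-- The noncommutative ribbon Schur function
`s_α = Σ_{β ≼ α} (-1)^{ℓ(α)-ℓ(β)} h_β`. -/
def ribbon (α : List ℕ) : FreeAlgebra ℤ ℕ :=
  ∑ c : Composition α.length,
    ((-1 : ℤ) ^ (α.length - c.length)) • hprod (coarsen α c)

/-- The near-concatenation `α ▷ β = (α₁,…,α_{ℓ-1}, α_ℓ + β₁, β₂,…,β_k)`. -/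
def nearConcat (α β : List ℕ) : List ℕ :=
  α.dropLast ++ (α.getLast! + β.headI) :: β.tail

/-!
The coarsenings of `(b, a, t)` are indexed by compositions of `ℓ(t) + 2`. Those whose first block
is `1` are `1 :: c` and contribute `h_b · s_{(a,t)}`; the others arise from a composition `c` of
`ℓ(t) + 1` by enlarging its first block and contribute `-s_{(b+a,t)}`. Hence
`h_b · s_{(a,t)} = s_{(b,a,t)} + s_{(b+a,t)}`, the theorem for `α = (b)`. For `α = (a, g, t)`,
expand `s_α = h_a s_{(g,t)} - s_{(a+g,t)}`, apply induction to both products with `s_β`, and use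
the case `ℓ(α) = 1` once more on the two terms multiplied by `h_a`; the other terms cancel in pairs.
-/

namespace Composition

variable {n : ℕ}

theorem exists_blocks_eq_succ_cons (c : Composition (n + 1)) :
    ∃ k ks, c.blocks = (k + 1) :: ks := by
  obtain ⟨b, ks, hc⟩ := List.exists_cons_of_ne_nil (c.blocks_eq_nil.not.mpr n.succ_ne_zero)
  obtain ⟨k, rfl⟩ := Nat.exists_eq_add_one.mpr (c.blocks_pos (hc ▸ List.mem_cons_self))
  exact ⟨k, ks, hc⟩

def consOne (c : Composition n) : Composition (n + 1) where
  blocks := 1 :: c.blocks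
  blocks_pos hi := (List.mem_cons.mp hi).elim (· ▸ Nat.one_pos) c.blocks_pos
  blocks_sum := by rw [List.sum_cons, c.blocks_sum, add_comm]

def succHead (c : Composition (n + 1)) : Composition (n + 2) where
  blocks := c.blocks.modifyHead (· + 1)
  blocks_pos {i} hi := by
    obtain ⟨k, ks, hc⟩ := c.exists_blocks_eq_succ_cons
    rw [hc, List.modifyHead_cons, List.mem_cons] at hi
    rcases hi with rfl | hi
    · exact Nat.succ_pos _
    · exact c.blocks_pos (hc ▸ List.mem_cons_of_mem _ hi)
  blocks_sum := by
    obtain ⟨k, ks, hc⟩ := c.exists_blocks_eq_succ_cons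
    have hsum := c.blocks_sum
    rw [hc, List.sum_cons] at hsum
    rw [hc, List.modifyHead_cons, List.sum_cons]
    omega

@[simp]
theorem consOne_blocks (c : Composition n) : c.consOne.blocks = 1 :: c.blocks := rfl

@[simp]
theorem succHead_blocks (c : Composition (n + 1)) :
    c.succHead.blocks = c.blocks.modifyHead (· + 1) := rfl

theorem consOne_length (c : Composition n) : c.consOne.length = c.length + 1 := by
  simp [Composition.length]

theorem succHead_length (c : Composition (n + 1)) : c.succHead.length = c.length := by
  simp [Composition.length]

theorem consOne_injective : Function.Injective (consOne (n := n)) := fun _ _ h =>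
  Composition.ext (List.cons_injective (congrArg blocks h))

theorem succHead_injective : Function.Injective (succHead (n := n)) := fun c d h => by
  obtain ⟨k, ks, hc⟩ := c.exists_blocks_eq_succ_cons
  obtain ⟨l, ls, hd⟩ := d.exists_blocks_eq_succ_cons
  have h := congrArg blocks h
  simp only [succHead_blocks, hc, hd, List.modifyHead_cons, List.cons.injEq,
    Nat.add_right_cancel_iff] at h
  obtain ⟨rfl, rfl⟩ := h
  exact Composition.ext (hc.trans hd.symm)

theorem consOne_ne_succHead (c d : Composition (n + 1)) : c.consOne ≠ d.succHead := fun h => by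
  obtain ⟨k, ks, hd⟩ := d.exists_blocks_eq_succ_cons
  have h := congrArg (·.blocks.headI) h
  simp [hd] at h

theorem bijective_sumElim_consOne_succHead :
    Function.Bijective (Sum.elim (consOne (n := n + 1)) succHead) := by
  -- both sides have `2 ^ (n + 1)` elements, so injectivity suffices
  refine (Fintype.bijective_iff_injective_and_card _).mpr
    ⟨consOne_injective.sumElim succHead_injective consOne_ne_succHead, ?_⟩
  simp [composition_card]
  ring

theorem sum_eq_sum_consOne_add_sum_succHead {M : Type*} [AddCommMonoid M]
    (f : Composition (n + 2) → M) :
    ∑ c, f c =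
      ∑ c : Composition (n + 1), f c.consOne + ∑ c : Composition (n + 1), f c.succHead := by
  rw [← bijective_sumElim_consOne_succHead.sum_comp, Fintype.sum_sum_type]
  rfl

end Composition

theorem coarsen_cons_consOne (b : ℕ) (l : List ℕ) (c : Composition l.length) :
    coarsen (b :: l) c.consOne = b :: coarsen l c := by
  simp [coarsen, List.splitWrtComposition, List.splitWrtCompositionAux_cons]

theorem coarsen_cons_cons_succHead (b a : ℕ) (t : List ℕ) (c : Composition (a :: t).length) :
    coarsen (b :: a :: t) c.succHead = coarsen ((b + a) :: t) c := by
  obtain ⟨k, ks, hc⟩ := c.exists_blocks_eq_succ_cons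
  simp [coarsen, List.splitWrtComposition, hc, List.splitWrtCompositionAux_cons, add_assoc]

theorem hprod_cons (a : ℕ) (l : List ℕ) : hprod (a :: l) = hgen a * hprod l := by
  simp [hprod]

theorem ribbon_singleton (a : ℕ) : ribbon [a] = hgen a := by
  have : Subsingleton (Composition 1) :=
    Fintype.card_le_one_iff_subsingleton.mp (by simp [composition_card])
  refine (Fintype.sum_subsingleton _ (Composition.ones 1)).trans ?_
  simp [coarsen, List.splitWrtComposition, List.splitWrtCompositionAux, hprod]

theorem ribbon_cons_cons (b a : ℕ) (t : List ℕ) :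
    ribbon (b :: a :: t) = hgen b * ribbon (a :: t) - ribbon ((b + a) :: t) := by
  refine (Composition.sum_eq_sum_consOne_add_sum_succHead (n := t.length) _).trans ?_
  rw [ribbon, ribbon, Finset.mul_sum, sub_eq_add_neg, ← Finset.sum_neg_distrib]
  congr 1 <;> refine Finset.sum_congr rfl fun c _ => ?_
  · rw [coarsen_cons_consOne, Composition.consOne_length, hprod_cons, mul_smul_comm]
    simp only [List.length_cons, Nat.add_sub_add_right]
  · rw [coarsen_cons_cons_succHead, Composition.succHead_length, ← neg_smul]
    have hlen : c.length ≤ t.length + 1 := c.length_le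
    simp only [List.length_cons]
    rw [Nat.sub_add_comm hlen, pow_succ, mul_neg_one]

theorem hgen_mul_ribbon (a : ℕ) {β : List ℕ} (hβ : β ≠ []) :
    hgen a * ribbon β = ribbon (a :: β) + ribbon (β.modifyHead (a + ·)) := by
  obtain ⟨b, t, rfl⟩ := List.exists_cons_of_ne_nil hβ
  rw [ribbon_cons_cons, List.modifyHead_cons, sub_add_cancel]

theorem nearConcat_singleton (a : ℕ) {β : List ℕ} (hβ : β ≠ []) :
    nearConcat [a] β = β.modifyHead (a + ·) := by
  obtain ⟨b, t, rfl⟩ := List.exists_cons_of_ne_nil hβ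
  rfl

theorem nearConcat_cons_cons (a g : ℕ) (t β : List ℕ) :
    nearConcat (a :: g :: t) β = a :: nearConcat (g :: t) β := by
  simp [nearConcat]

theorem nearConcat_add_cons (a g : ℕ) (t β : List ℕ) :
    nearConcat ((a + g) :: t) β = (nearConcat (g :: t) β).modifyHead (a + ·) := by
  cases t with
  | nil => simp [nearConcat, add_assoc]
  | cons u s => rw [nearConcat_cons_cons, nearConcat_cons_cons, List.modifyHead_cons]

theorem nearConcat_ne_nil (α β : List ℕ) : nearConcat α β ≠ [] := by
  simp [nearConcat]

theorem ribbon_cons_mul_ribbon {β : List ℕ} (hβ : β ≠ []) (t : List ℕ) (a : ℕ) :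
    ribbon (a :: t) * ribbon β = ribbon (a :: t ++ β) + ribbon (nearConcat (a :: t) β) := by
  induction t generalizing a with
  | nil =>
    rw [ribbon_singleton, hgen_mul_ribbon a hβ, nearConcat_singleton a hβ, List.singleton_append]
  | cons g t ih =>
    calc ribbon (a :: g :: t) * ribbon β
        = hgen a * (ribbon (g :: t ++ β) + ribbon (nearConcat (g :: t) β))
          - (ribbon ((a + g) :: t ++ β) + ribbon (nearConcat ((a + g) :: t) β)) := by
          rw [ribbon_cons_cons, sub_mul, mul_assoc, ih, ih]
      _ = ribbon (a :: g :: t ++ β) + ribbon (nearConcat (a :: g :: t) β) := by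
          simp only [List.cons_append]
          rw [mul_add, hgen_mul_ribbon a (List.cons_ne_nil _ _),
            hgen_mul_ribbon a (nearConcat_ne_nil _ _), nearConcat_cons_cons, nearConcat_add_cons,
            List.modifyHead_cons]
          abel

theorem stmt_11_general (α β : List ℕ) (hα0 : α ≠ []) (hβ0 : β ≠ []) :
    ribbon α * ribbon β = ribbon (α ++ β) + ribbon (nearConcat α β) := by
  obtain ⟨a, t, rfl⟩ := List.exists_cons_of_ne_nil hα0
  exact ribbon_cons_mul_ribbon hβ0 t a

/-- In `NSym`, the noncommutative ribbon Schur functions satisfy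
`s_α · s_β = s_{αβ} + s_{α▷β}`. -/
theorem stmt_11 (α β : List ℕ) (hα : ∀ x ∈ α, 0 < x) (hβ : ∀ x ∈ β, 0 < x)
    (hα0 : α ≠ []) (hβ0 : β ≠ []) :
    ribbon α * ribbon β = ribbon (α ++ β) + ribbon (nearConcat α β) :=
  stmt_11_general α β hα0 hβ0
end
end

section
/- The functions H_α(x; 0,...,0) = s_α and H_α(x; 1,...,1) = h_α, and the set {H_α : α a composition of n} is a basis of the n-th homogeneous component NSymₙ[t₁,...,t_{n-1}] (it is triangularly related to the ribbon basis {s_α} with respect to the refinement order). -/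
/-!
In the ribbon basis, `H_α = s_α + Σ_{β ≺ α} t^{D(α)∖D(β)} s_β`: the coefficient matrix is
unitriangular for the order `D(β) ⊊ D(α)`, which is well founded. Triangularity lets one solve
for each `s_α` in terms of `H_α` and the `s_β` with smaller descent set, so the `H_α` span;
a spanning family of `rank`-many vectors of a free module over a commutative ring is a basis.
The specialisations are immediate, since `t^S` vanishes at `t = 0` unless `S = ∅`.
-/

noncomputable section
open scoped Classical

/-- Coefficient ring `ℚ[t₁, t₂, …]` (with `tᵢ = X i`). -/
abbrev Rng : Type := MvPolynomial ℕ ℚ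

/-- The descent set `D(α)` of a composition `α` of `n`. -/
def Dset {n : ℕ} (α : Composition n) : Finset ℕ :=
  Finset.image α.sizeUpTo (Finset.Ioo 0 α.length)

/-- The multivariate noncommutative Hall-Littlewood function
`H_α = Σ_{β ≼ α} t^{D(α)∖D(β)} s_β`, in coordinates with respect to the ribbon basis
`{s_β}` of `NSymₙ`. -/
def HL {n : ℕ} (α : Composition n) : Composition n →₀ Rng :=
  ∑ β ∈ Finset.univ.filter (fun β : Composition n => Dset β ⊆ Dset α),
    Finsupp.single β (∏ i ∈ Dset α \ Dset β, MvPolynomial.X i)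

section Unitriangular

variable {R ι κ : Type*} [CommRing R] [Fintype ι] [PartialOrder κ] [WellFoundedLT κ]

theorem Finsupp.single_one_mem_span_of_unitriangular (v : ι → ι →₀ R) (d : ι → κ)
    (diag : ∀ i, v i i = 1) (lower : ∀ i j, j ≠ i → v i j ≠ 0 → d j < d i) (i : ι) :
    Finsupp.single i 1 ∈ Submodule.span R (Set.range v) := by
  induction i using (InvImage.wf d wellFounded_lt).induction with
  | _ i ih =>
  have hsplit : v i = Finsupp.single i 1 + ∑ j ∈ {i}ᶜ, v i j • Finsupp.single j 1 := by
    conv_lhs => rw [← Finsupp.univ_sum_single (v i)]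
    rw [Fintype.sum_eq_add_sum_compl i, diag]
    simp only [Finsupp.smul_single_one]
  rw [eq_sub_of_add_eq hsplit.symm]
  refine Submodule.sub_mem _ (Submodule.subset_span ⟨i, rfl⟩) (Submodule.sum_mem _ fun j hj => ?_)
  by_cases hij : v i j = 0
  · simp [hij]
  · exact Submodule.smul_mem _ _ (ih j (lower i j (by simpa using hj) hij))

theorem Finsupp.span_eq_top_of_unitriangular (v : ι → ι →₀ R) (d : ι → κ)
    (diag : ∀ i, v i i = 1) (lower : ∀ i j, j ≠ i → v i j ≠ 0 → d j < d i) :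
    Submodule.span R (Set.range v) = ⊤ := by
  rw [eq_top_iff, ← (Finsupp.basisSingleOne (R := R) (ι := ι)).span_eq,
    Finsupp.coe_basisSingleOne, Submodule.span_le, Set.range_subset_iff]
  exact Finsupp.single_one_mem_span_of_unitriangular v d diag lower

theorem Finsupp.linearIndependent_of_unitriangular [Nontrivial R] (v : ι → ι →₀ R) (d : ι → κ)
    (diag : ∀ i, v i i = 1) (lower : ∀ i j, j ≠ i → v i j ≠ 0 → d j < d i) :
    LinearIndependent R v :=
  linearIndependent_of_top_le_span_of_card_eq_finrank
    (Finsupp.span_eq_top_of_unitriangular v d diag lower).ge (Module.finrank_finsupp_self R).symm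

end Unitriangular

theorem Composition.image_val_boundaries {n : ℕ} (α : Composition n) :
    α.boundaries.image Fin.val = insert 0 (insert n (Dset α)) := by
  ext x
  simp only [Composition.boundaries, Finset.mem_image, Finset.mem_map, Finset.mem_univ,
    true_and, Finset.mem_insert, Dset, Finset.mem_Ioo]
  constructor
  · rintro ⟨y, ⟨i, rfl⟩, rfl⟩
    change α.sizeUpTo i = 0 ∨ α.sizeUpTo i = n ∨ _
    rcases Nat.eq_zero_or_pos i.val with h0 | h0
    · exact .inl (by rw [h0, α.sizeUpTo_zero])
    rcases (Nat.lt_succ_iff.mp i.isLt).eq_or_lt with hl | hl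
    · exact .inr (.inl (by rw [hl, α.sizeUpTo_length]))
    · exact .inr (.inr ⟨i, ⟨h0, hl⟩, rfl⟩)
  · rintro (rfl | rfl | ⟨i, ⟨-, hil⟩, rfl⟩)
    · exact ⟨α.boundary 0, ⟨0, rfl⟩, by simp⟩
    · exact ⟨α.boundary (Fin.last _), ⟨Fin.last _, rfl⟩, by simp⟩
    · exact ⟨α.boundary ⟨i, Nat.lt_succ_of_lt hil⟩, ⟨_, rfl⟩, rfl⟩

theorem Dset_injective {n : ℕ} : Function.Injective (Dset (n := n)) := by
  intro α β h
  have hb : α.boundaries = β.boundaries := by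
    apply Finset.image_injective Fin.val_injective
    rw [α.image_val_boundaries, β.image_val_boundaries, h]
  have hset : α.toCompositionAsSet = β.toCompositionAsSet := by
    ext1
    exact hb
  exact (compositionEquiv n).injective hset

theorem HL_apply {n : ℕ} (α β : Composition n) :
    HL α β = if Dset β ⊆ Dset α then ∏ i ∈ Dset α \ Dset β, MvPolynomial.X i else 0 := by
  rw [HL, Finsupp.finsetSum_apply]
  simp [Finsupp.single_apply]

theorem HL_apply_self {n : ℕ} (α : Composition n) : HL α α = 1 := by
  simp [HL_apply]

theorem Dset_lt_of_HL_apply_ne_zero {n : ℕ} (α β : Composition n) (hne : β ≠ α)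
    (h : HL α β ≠ 0) : Dset β < Dset α := by
  have hsub : Dset β ⊆ Dset α := by
    by_contra hsub
    exact h (by simp [HL_apply, hsub])
  exact lt_of_le_of_ne hsub (Dset_injective.ne hne)

/-- Setting all `tᵢ = 0` gives `H_α = s_α`, setting all `tᵢ = 1` gives
`H_α = h_α = Σ_{β ≼ α} s_β`, and `{H_α : α ⊨ n}` is a basis of the `n`-th homogeneous
component `NSymₙ[t₁,…,t_{n-1}]` as a module over the polynomial coefficient ring. -/
theorem stmt_13 (n : ℕ) :
    (∀ α β : Composition n,
      MvPolynomial.eval (fun _ => (0 : ℚ)) (HL α β) = if β = α then 1 else 0) ∧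
    (∀ α β : Composition n,
      MvPolynomial.eval (fun _ => (1 : ℚ)) (HL α β) =
        if Dset β ⊆ Dset α then 1 else 0) ∧
    LinearIndependent Rng (HL (n := n)) ∧
    Submodule.span Rng (Set.range (HL (n := n))) = ⊤ := by
  refine ⟨fun α β => ?_, fun α β => ?_,
    Finsupp.linearIndependent_of_unitriangular _ Dset HL_apply_self Dset_lt_of_HL_apply_ne_zero,
    Finsupp.span_eq_top_of_unitriangular _ Dset HL_apply_self Dset_lt_of_HL_apply_ne_zero⟩
  · rw [HL_apply]
    by_cases hsub : Dset β ⊆ Dset α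
    · have hiff : Dset α ⊆ Dset β ↔ β = α := by
        rw [← Dset_injective.eq_iff]
        exact ⟨hsub.antisymm, fun h => h ▸ subset_rfl⟩
      simp [hsub, map_prod, zero_pow_eq, hiff]
    · have hne : β ≠ α := fun h => hsub (h ▸ subset_rfl)
      simp [hsub, hne]
  · rw [HL_apply]
    split_ifs <;> simp [map_prod]
end
end

section
/- The MacMahon–Carlitz identity: Σ_{w∈Sₙ} q^{maj(w)} u^{des(w)} / ∏_{i=0}^{n} (1 - q^i u) = Σ_{k≥0} ([k+1]_q)ⁿ u^k, as an identity of formal power series in u and q. -/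
/-! For a fixed permutation `w`, the series
`u^{des w} q^{maj w} / ∏_{i=0}^{n} (1 - qⁱu)` is the product over `i ≤ n` of the geometric series in
`qⁱu` started at exponent `1` if `i ∈ D(w)` and at `0` otherwise. Its coefficient of `u^k` therefore
sums `q^{Σ i cᵢ}` over compositions `c` of `k` indexed by `{0, …, n}` with `cᵢ > 0` on `D(w)`.

On the other side `[k+1]_qⁿ` sums `q^{Σ g}` over `g : [n] → {0, …, k}`. Sorting the values of `g`
decreasingly, ties broken by position, gives a permutation `w`, and the sequence
`k ≥ g(w 1) ≥ ⋯ ≥ g(w n) ≥ 0` drops strictly at each descent of `w`. Its successive gaps form such a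
composition `c`, and `g` is recovered from `c` by tail sums. -/

noncomputable section
open scoped Classical

/-- The descent set `D(w) = {i ∈ [n-1] : w(i) > w(i+1)}` of a permutation,
with 1-based positions. -/
def DpermF {n : ℕ} (w : Equiv.Perm (Fin n)) : Finset ℕ :=
  Finset.image (fun j : Fin n => (j : ℕ) + 1)
    (Finset.univ.filter (fun j : Fin n =>
      ∃ h : (j : ℕ) + 1 < n, w ⟨(j : ℕ) + 1, h⟩ < w j))

open Finset PowerSeries

section Sequences

def tailSum (n : ℕ) (c : ℕ → ℕ) (j : ℕ) : ℕ :=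
  ∑ i ∈ Ico j n, c (i + 1)

variable {n : ℕ}

lemma tailSum_of_le (c : ℕ → ℕ) {j : ℕ} (h : n ≤ j) : tailSum n c j = 0 := by
  simp [tailSum, Ico_eq_empty_of_le h]

lemma tailSum_of_lt (c : ℕ → ℕ) {j : ℕ} (h : j < n) :
    tailSum n c j = c (j + 1) + tailSum n c (j + 1) :=
  sum_eq_sum_Ico_succ_bot h _

lemma tailSum_le_sum (c : ℕ → ℕ) (j : ℕ) : tailSum n c j ≤ ∑ i ∈ range (n + 1), c i := by
  rw [sum_range_succ', tailSum, range_eq_Ico]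
  exact (sum_le_sum_of_subset (Ico_subset_Ico_left (Nat.zero_le j))).trans (Nat.le_add_right _ _)

lemma sum_range_succ_eq_add_tailSum (c : ℕ → ℕ) :
    ∑ i ∈ range (n + 1), c i = c 0 + tailSum n c 0 := by
  rw [sum_range_succ', tailSum, range_eq_Ico, add_comm]

lemma sum_range_tailSum (c : ℕ → ℕ) :
    ∑ j ∈ range n, tailSum n c j = ∑ i ∈ range (n + 1), i * c i := by
  simp_rw [sum_range_succ' (fun i => i * c i), tailSum, range_eq_Ico, sum_Ico_Ico_comm, sum_const,
    Nat.card_Ico, smul_eq_mul, zero_mul, add_zero, Nat.sub_zero]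

lemma tailSum_eq_of_eq_add {p c : ℕ → ℕ} (h : ∀ i, p i = p (i + 1) + c i) (hp : p (n + 1) = 0)
    (j : ℕ) : tailSum n c j = p (j + 1) := by
  induction hm : n - j generalizing j with
  | zero =>
    have hanti : Antitone p := antitone_nat_of_succ_le fun i => (h i).symm ▸ Nat.le_add_right _ _
    rw [tailSum_of_le c (by omega), eq_comm, ← Nat.le_zero, ← hp]
    exact hanti (by omega)
  | succ m ih =>
    rw [tailSum_of_lt c (by omega), ih (j + 1) (by omega), h (j + 1), add_comm]

def AntitoneStrictAt (D : Finset ℕ) (p : ℕ → ℕ) : Prop :=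
  ∀ i, p (i + 1) ≤ p i ∧ (i ∈ D → p (i + 1) < p i)

lemma antitoneStrictAt_iff_of_eq_add {D : Finset ℕ} {p c : ℕ → ℕ}
    (h : ∀ i, p i = p (i + 1) + c i) : AntitoneStrictAt D p ↔ ∀ i ∈ D, 0 < c i := by
  refine ⟨fun hp i hi => ?_, fun hc i => ⟨?_, fun hi => ?_⟩⟩
  · have := (hp i).2 hi; have := h i; omega
  · have := h i; omega
  · have := hc i hi; have := h i; omega

lemma AntitoneStrictAt.eq_add {D : Finset ℕ} {p : ℕ → ℕ} (hp : AntitoneStrictAt D p) (i : ℕ) :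
    p i = p (i + 1) + (p i - p (i + 1)) :=
  (Nat.add_sub_of_le (hp i).1).symm

def padSeq (K : ℕ) (a : Fin n → ℕ) : ℕ → ℕ
  | 0 => K
  | j + 1 => if h : j < n then a ⟨j, h⟩ else 0

@[simp]
lemma padSeq_zero (K : ℕ) (a : Fin n → ℕ) : padSeq K a 0 = K := rfl

@[simp]
lemma padSeq_val_add_one (K : ℕ) (a : Fin n → ℕ) (j : Fin n) : padSeq K a (j + 1) = a j := by
  simp [padSeq]

lemma padSeq_of_lt (K : ℕ) (a : Fin n → ℕ) {i : ℕ} (h : n < i) : padSeq K a i = 0 := by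
  obtain ⟨j, rfl⟩ := Nat.exists_eq_add_of_lt (Nat.zero_le n |>.trans_lt h)
  simp [padSeq, show ¬ j < n by omega]

lemma padSeq_tailSum (K : ℕ) (c : ℕ → ℕ) (j : ℕ) :
    padSeq K (fun i : Fin n => tailSum n c i) (j + 1) = tailSum n c j := by
  by_cases h : j < n
  · exact padSeq_val_add_one K _ ⟨j, h⟩
  · simp [padSeq, h, tailSum_of_le c (not_lt.1 h)]

lemma padSeq_tailSum_eq_add {K : ℕ} {c : ℕ →₀ ℕ} (hc : c ∈ finsuppAntidiag (range (n + 1)) K)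
    (i : ℕ) : padSeq K (fun j : Fin n => tailSum n c j) i
      = padSeq K (fun j : Fin n => tailSum n c j) (i + 1) + c i := by
  rw [mem_finsuppAntidiag, sum_range_succ_eq_add_tailSum] at hc
  rcases i with _ | j
  · rw [padSeq_zero, padSeq_tailSum, ← hc.1, add_comm]
  rw [padSeq_tailSum, padSeq_tailSum]
  by_cases h : j < n
  · rw [tailSum_of_lt c h, add_comm]
  · have hcj : c (j + 1) = 0 := Finsupp.notMem_support_iff.1 fun hj => by
      have := mem_range.1 (hc.2 hj); omega
    rw [tailSum_of_le c (not_lt.1 h), tailSum_of_le c (by omega), hcj]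

def gaps (K : ℕ) (a : Fin n → ℕ) : ℕ →₀ ℕ :=
  Finsupp.onFinset (range (n + 1)) (fun i => padSeq K a i - padSeq K a (i + 1)) fun i hi => by
    by_contra h
    rw [mem_range, not_lt] at h
    exact hi (by rw [padSeq_of_lt K a (by omega), Nat.zero_sub])

lemma gaps_apply (K : ℕ) (a : Fin n → ℕ) (i : ℕ) :
    gaps K a i = padSeq K a i - padSeq K a (i + 1) := rfl

theorem sum_antitoneStrictAt_padSeq_eq_sum_finsuppAntidiag {M : Type*} [AddCommMonoid M]
    (D : Finset ℕ) (K : ℕ) (f : ℕ → M) :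
    ∑ a ∈ Fintype.piFinset (fun _ : Fin n => range (K + 1)) with AntitoneStrictAt D (padSeq K a),
        f (∑ j, a j)
      = ∑ c ∈ finsuppAntidiag (range (n + 1)) K with ∀ i ∈ D, 0 < c i,
          f (∑ i ∈ range (n + 1), i * c i) := by
  have tailSum_gaps {a : Fin n → ℕ} (ha : AntitoneStrictAt D (padSeq K a)) (j : ℕ) :
      tailSum n (gaps K a) j = padSeq K a (j + 1) :=
    tailSum_eq_of_eq_add (c := gaps K a) ha.eq_add (padSeq_of_lt K a (Nat.lt_succ_self n)) j
  refine sum_nbij' (gaps K) (fun c j => tailSum n c j) ?_ ?_ ?_ ?_ ?_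
  · intro a ha
    simp only [mem_filter, mem_finsuppAntidiag] at ha ⊢
    refine ⟨⟨?_, Finsupp.support_onFinset_subset⟩,
      (antitoneStrictAt_iff_of_eq_add ha.2.eq_add).1 ha.2⟩
    rw [sum_range_succ_eq_add_tailSum, tailSum_gaps ha.2, gaps_apply, padSeq_zero]
    exact Nat.sub_add_cancel (ha.2 0).1
  · intro c hc
    simp only [mem_filter, Fintype.mem_piFinset, mem_range] at hc ⊢
    refine ⟨fun j => ?_, (antitoneStrictAt_iff_of_eq_add (padSeq_tailSum_eq_add hc.1)).2 hc.2⟩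
    have := tailSum_le_sum (n := n) c j
    rw [(mem_finsuppAntidiag.1 hc.1).1] at this
    omega
  · intro a ha
    exact funext fun j => (tailSum_gaps (mem_filter.1 ha).2 j).trans (padSeq_val_add_one K a j)
  · intro c hc
    simp only [mem_filter] at hc
    ext i
    rw [gaps_apply, padSeq_tailSum_eq_add hc.1 i, Nat.add_sub_cancel_left]
  · intro a ha
    rw [← sum_range_tailSum, ← Fin.sum_univ_eq_sum_range (tailSum n (gaps K a))]
    simp_rw [tailSum_gaps (mem_filter.1 ha).2, padSeq_val_add_one]

end Sequences

section Descents

variable {n : ℕ}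

lemma Fin.strictMono_iff_lt_add_one {α : Type*} [Preorder α] {f : Fin n → α} :
    StrictMono f ↔ ∀ j (h : j + 1 < n), f ⟨j, by omega⟩ < f ⟨j + 1, h⟩ := by
  cases n with
  | zero => exact ⟨fun _ j h => by omega, fun _ a => a.elim0⟩
  | succ n =>
    rw [Fin.strictMono_iff_lt_succ]
    exact ⟨fun h j hj => h ⟨j, by omega⟩, fun h i => h i (by omega)⟩

lemma zero_notMem_DpermF (w : Equiv.Perm (Fin n)) : 0 ∉ DpermF w := by
  simp [DpermF]

lemma lt_of_mem_DpermF {w : Equiv.Perm (Fin n)} {d : ℕ} (hd : d ∈ DpermF w) : d < n := by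
  simp only [DpermF, mem_image, mem_filter] at hd
  obtain ⟨j, ⟨-, h, -⟩, rfl⟩ := hd
  exact h

lemma DpermF_subset_range (w : Equiv.Perm (Fin n)) : DpermF w ⊆ range (n + 1) :=
  fun _ hd => mem_range.2 ((lt_of_mem_DpermF hd).trans n.lt_succ_self)

lemma add_one_mem_DpermF_iff (w : Equiv.Perm (Fin n)) {j : ℕ} (h : j + 1 < n) :
    j + 1 ∈ DpermF w ↔ w ⟨j + 1, h⟩ < w ⟨j, by omega⟩ := by
  simp only [DpermF, mem_image, mem_filter, mem_univ, true_and]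
  constructor
  · rintro ⟨⟨i, _⟩, ⟨_, hi⟩, hij⟩
    obtain rfl : i = j := by simpa using hij
    exact hi
  · exact fun hw => ⟨⟨j, by omega⟩, ⟨h, hw⟩, rfl⟩

lemma antitoneStrictAt_padSeq_iff {D : Finset ℕ} (hD₀ : 0 ∉ D) (hD : ∀ d ∈ D, d < n) {K : ℕ}
    {a : Fin n → ℕ} (ha : ∀ j, a j ≤ K) :
    AntitoneStrictAt D (padSeq K a) ↔ ∀ j (h : j + 1 < n),
      a ⟨j + 1, h⟩ ≤ a ⟨j, by omega⟩ ∧ (j + 1 ∈ D → a ⟨j + 1, h⟩ < a ⟨j, by omega⟩) := by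
  refine ⟨fun h j hj => by simpa [padSeq, hj, show j < n by omega] using h (j + 1), fun h => ?_⟩
  rintro (_ | j)
  · refine ⟨?_, fun h0 => absurd h0 hD₀⟩
    by_cases hn : 0 < n
    · simpa [padSeq, hn] using ha ⟨0, hn⟩
    · simp [padSeq, hn]
  by_cases hj : j + 1 < n
  · simpa [padSeq, hj, show j < n by omega] using h j hj
  · refine ⟨by simp [padSeq, hj], fun hjD => absurd (hD _ hjD) hj⟩

theorem sort_eq_iff_antitoneStrictAt {K : ℕ} {g : Fin n → ℕ} (hg : ∀ x, g x ≤ K)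
    (w : Equiv.Perm (Fin n)) :
    Tuple.sort (OrderDual.toDual ∘ g) = w ↔ AntitoneStrictAt (DpermF w) (padSeq K (g ∘ w)) := by
  rw [eq_comm, Tuple.eq_sort_iff']
  change StrictMono (fun i => toLex (OrderDual.toDual (g (w i)), w i)) ↔ _
  rw [Fin.strictMono_iff_lt_add_one, antitoneStrictAt_padSeq_iff (a := g ∘ w)
    (zero_notMem_DpermF w) (fun _ => lt_of_mem_DpermF) (fun j => hg (w j))]
  simp only [Prod.Lex.toLex_lt_toLex, OrderDual.toDual_lt_toDual, OrderDual.toDual_inj]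
  refine forall_congr' fun j => forall_congr' fun hj => ?_
  rw [add_one_mem_DpermF_iff w hj]
  have hne : w ⟨j, by omega⟩ ≠ w ⟨j + 1, hj⟩ := w.injective.ne (by simp)
  simp only [Function.comp_apply]
  constructor
  · rintro (hlt | ⟨heq, hw⟩)
    · exact ⟨hlt.le, fun _ => hlt⟩
    · exact ⟨heq.ge, fun hw' => absurd hw (lt_asymm hw')⟩
  · rintro ⟨hle, hdes⟩
    rcases hle.lt_or_eq with hlt | heq
    · exact Or.inl hlt
    · exact Or.inr ⟨heq.symm, hne.lt_of_le (not_lt.1 fun hw => (hdes hw).ne heq)⟩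

end Descents

section Counting

variable {n : ℕ}

lemma sum_sort_eq_sum_antitoneStrictAt {M : Type*} [AddCommMonoid M] (w : Equiv.Perm (Fin n))
    (k : ℕ) (f : ℕ → M) :
    ∑ g ∈ Fintype.piFinset (fun _ : Fin n => range (k + 1))
        with Tuple.sort (OrderDual.toDual ∘ g) = w, f (∑ x, g x)
      = ∑ a ∈ Fintype.piFinset (fun _ : Fin n => range (k + 1))
          with AntitoneStrictAt (DpermF w) (padSeq k a), f (∑ j, a j) := by
  refine sum_nbij' (· ∘ w) (· ∘ w.symm) ?_ ?_ ?_ ?_ ?_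
  · intro g hg
    simp only [mem_filter, Fintype.mem_piFinset, mem_range] at hg ⊢
    have hgk x : g x ≤ k := Nat.lt_succ_iff.1 (hg.1 x)
    exact ⟨fun j => hg.1 (w j), (sort_eq_iff_antitoneStrictAt hgk w).1 hg.2⟩
  · intro a ha
    simp only [mem_filter, Fintype.mem_piFinset, mem_range] at ha ⊢
    have hak x : a (w.symm x) ≤ k := Nat.lt_succ_iff.1 (ha.1 (w.symm x))
    refine ⟨fun x => ha.1 (w.symm x), (sort_eq_iff_antitoneStrictAt hak w).2 ?_⟩
    simpa [Function.comp_def] using ha.2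
  · intro g _; ext x; simp
  · intro a _; ext x; simp
  · intro g _; exact congrArg f (Equiv.sum_comp w g).symm

theorem geom_sum_pow_eq_sum_perm {R : Type*} [CommSemiring R] (x : R) (n k : ℕ) :
    (∑ j ∈ range (k + 1), x ^ j) ^ n
      = ∑ w : Equiv.Perm (Fin n),
          ∑ c ∈ finsuppAntidiag (range (n + 1)) k with ∀ i ∈ DpermF w, 0 < c i,
            x ^ (∑ i ∈ range (n + 1), i * c i) := by
  calc (∑ j ∈ range (k + 1), x ^ j) ^ n
      = ∏ _i : Fin n, ∑ j ∈ range (k + 1), x ^ j := by rw [prod_const, card_univ, Fintype.card_fin]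
    _ = ∑ g ∈ Fintype.piFinset (fun _ : Fin n => range (k + 1)), x ^ (∑ i, g i) := by
      rw [prod_univ_sum]; simp_rw [prod_pow_eq_pow_sum]
    _ = _ := by
      rw [← sum_fiberwise _ (fun g => Tuple.sort (OrderDual.toDual ∘ g))]
      simp_rw [sum_sort_eq_sum_antitoneStrictAt, sum_antitoneStrictAt_padSeq_eq_sum_finsuppAntidiag]

end Counting

section PowerSeries

variable {R : Type*} [CommRing R]

lemma one_sub_monomial_one_mul_rescale_mk_one (a : R) :
    (1 - monomial 1 a) * rescale a (mk 1) = 1 := by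
  have : (1 : R⟦X⟧) - monomial 1 a = rescale a (1 - X) := by
    rw [map_sub, map_one, rescale_X, X_eq, ← monomial_zero_eq_C_apply, monomial_mul_monomial,
      zero_add, mul_one]
  rw [this, ← map_mul, mul_comm, mk_one_mul_one_sub_eq_one, map_one]

lemma coeff_ite_monomial_one_mul_rescale_mk_one (p : Prop) [Decidable p] (a : R) (m : ℕ) :
    coeff m ((if p then monomial 1 a else 1) * rescale a (mk 1))
      = if p → 0 < m then a ^ m else 0 := by
  by_cases hp : p
  · have : monomial 1 a * rescale a (mk 1) = rescale a (mk 1) - 1 := by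
      linear_combination -one_sub_monomial_one_mul_rescale_mk_one a
    rw [if_pos hp, this, map_sub, coeff_rescale, coeff_mk, Pi.one_apply, mul_one, coeff_one]
    rcases m with _ | m <;> simp [hp]
  · simp [hp]

theorem coeff_monomial_mul_prod_rescale_mk_one {s D : Finset ℕ} (hD : D ⊆ s) (x : R) (k : ℕ) :
    coeff k (monomial #D (x ^ ∑ d ∈ D, d) * ∏ i ∈ s, rescale (x ^ i) (mk 1))
      = ∑ c ∈ finsuppAntidiag s k with ∀ i ∈ D, 0 < c i, x ^ (∑ i ∈ s, i * c i) := by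
  have hmon : monomial #D (x ^ ∑ d ∈ D, d) = ∏ i ∈ s, if i ∈ D then monomial 1 (x ^ i) else 1 := by
    rw [prod_ite_mem, inter_eq_right.2 hD, prod_monomial, ← card_eq_sum_ones, prod_pow_eq_pow_sum]
  rw [hmon, ← prod_mul_distrib, coeff_prod, sum_filter]
  refine sum_congr rfl fun c _ => ?_
  simp_rw [coeff_ite_monomial_one_mul_rescale_mk_one, prod_ite_zero, ← pow_mul, prod_pow_eq_pow_sum]
  by_cases h : ∀ i ∈ D, 0 < c i
  · rw [if_pos h, if_pos fun i _ hiD => h i hiD]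
  · rw [if_neg h, if_neg fun h' => h fun i hi => h' i (hD hi) hi]

end PowerSeries

/-- The MacMahon–Carlitz identity
`Σ_w q^{maj(w)} u^{des(w)} / ∏_{i=0}^{n} (1 - qⁱu) = Σ_{k ≥ 0} ([k+1]_q)ⁿ u^k`,
as an identity of formal power series in `u` over `ℚ[q]` (stated with the denominator
cleared). -/
theorem stmt_15 (n : ℕ) :
    (∑ w : Equiv.Perm (Fin n),
        (PowerSeries.monomial (R := Polynomial ℚ) (DpermF w).card)
          (Polynomial.X ^ (∑ i ∈ DpermF w, i)))
      =
    (PowerSeries.mk fun k =>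
        (∑ j ∈ Finset.range (k + 1), (Polynomial.X : Polynomial ℚ) ^ j) ^ n)
      * ∏ i ∈ Finset.range (n + 1),
          (1 - (PowerSeries.monomial (R := Polynomial ℚ) 1) (Polynomial.X ^ i)) := by
  suffices h : (∑ w : Equiv.Perm (Fin n),
        monomial (DpermF w).card ((Polynomial.X : Polynomial ℚ) ^ (∑ i ∈ DpermF w, i)))
        * ∏ i ∈ range (n + 1), rescale (Polynomial.X ^ i) (mk 1)
      = PowerSeries.mk fun k => (∑ j ∈ range (k + 1), (Polynomial.X : Polynomial ℚ) ^ j) ^ n by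
    rw [← h, mul_assoc, ← prod_mul_distrib, prod_eq_one fun i _ => by
      rw [mul_comm, one_sub_monomial_one_mul_rescale_mk_one], mul_one]
  refine PowerSeries.ext fun k => ?_
  rw [PowerSeries.coeff_mk, geom_sum_pow_eq_sum_perm, sum_mul, map_sum]
  exact sum_congr rfl fun w _ =>
    coeff_monomial_mul_prod_rescale_mk_one (DpermF_subset_range w) (Polynomial.X : Polynomial ℚ) k
end
end

section
/- The identity Σ_{λ∈Par(n)} (n choose m(λ)) ∏_{i=1}^{n} qᵢ^{λᵢ} = (Σ_{w∈Sₙ} ∏_{i∈D(w)} q₁q₂⋯qᵢ) / ∏_{j=1}^{n} (1 - q₁q₂⋯qⱼ) holds as formal power series in q₁,...,qₙ. -/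
noncomputable section
open scoped Classical

/-- The monomial `q₁ q₂ ⋯ qᵢ` in `ℚ[[q₁,…,qₙ]]` (1-based `i`). -/
def qprod (n : ℕ) (i : ℕ) : MvPowerSeries (Fin n) ℚ :=
  ∏ l ∈ Finset.univ.filter (fun l : Fin n => (l : ℕ) < i), MvPowerSeries.X l

/-- The generating function `Σ_{λ ∈ Par(n)} (n choose m(λ)) ∏ᵢ qᵢ^{λᵢ}`, a formal power
series in `q₁,…,qₙ` whose coefficient of `∏ qᵢ^{dᵢ}` is the multinomial coefficient
`n!/∏ⱼ mⱼ(d)!` when `d` is weakly decreasing and `0` otherwise. -/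
def lhs16 (n : ℕ) : MvPowerSeries (Fin n) ℚ :=
  fun d =>
    if ∀ i j : Fin n, i ≤ j → d j ≤ d i then
      (Nat.factorial n : ℚ) /
        ∏ v ∈ Finset.image d Finset.univ,
          (Nat.factorial (Finset.univ.filter (fun i => d i = v)).card : ℚ)
    else 0

/-!
The multinomial coefficient of a weakly decreasing `λ` counts the permutations `w` that increase
on every level set of `λ`: each permutation factors uniquely as such a `w` times a permutation
fixing `λ`, the factor being found by stable sorting. Hence the left-hand side is `∑_w F_w`,
where `F_w` sums `q^λ` over the `λ` compatible with `w`, i.e. weakly decreasing and strictly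
decreasing at the descents of `w`. In the gap coordinates `λ_{j-1} - λ_j` (with `λ_n = 0`),
multiplying by `q₁⋯q_j` raises the `j`-th gap by one, and compatibility asks the `j`-th gap to be
at least `1` for `j ∈ D(w)` and at least `0` otherwise. Inclusion–exclusion over the factors of
`∏ⱼ (1 - q₁⋯q_j)` therefore leaves exactly the monomial `∏_{i ∈ D(w)} q₁⋯qᵢ`.
-/

open Finset Equiv
open scoped Nat

variable {n : ℕ}

section FiberSort

variable {α : Type*} [LinearOrder α]

def IsIncreasingOnFibers (e : Fin n → α) (w : Perm (Fin n)) : Prop :=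
  ∀ ⦃i j⦄, i < j → e i = e j → w i < w j

theorem isIncreasingOnFibers_iff_sort_eq {e : Fin n → α} {u : Perm (Fin n)} :
    IsIncreasingOnFibers e u ↔ Tuple.sort (e ∘ ⇑u⁻¹) = u * Tuple.sort e := by
  have hstable := (Tuple.eq_sort_iff.mp (rfl : Tuple.sort e = Tuple.sort e)).2
  have hcomp : (e ∘ ⇑u⁻¹) ∘ ⇑(u * Tuple.sort e) = e ∘ Tuple.sort e := by ext; simp
  rw [eq_comm, Tuple.eq_sort_iff, hcomp]
  simp only [Perm.coe_mul, Perm.coe_inv, Function.comp_apply, symm_apply_apply]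
  refine ⟨fun hu => ⟨Tuple.monotone_sort e, fun i j hij he => hu (hstable i j hij he) he⟩, ?_⟩
  rintro ⟨-, hu⟩ a b hab he
  obtain ⟨i, rfl⟩ := (Tuple.sort e).surjective a
  obtain ⟨j, rfl⟩ := (Tuple.sort e).surjective b
  rcases lt_trichotomy i j with h | rfl | h
  · exact hu i j h he
  · exact absurd hab (lt_irrefl _)
  · exact absurd (hstable j i h he.symm) hab.not_gt

/-- The factor `u` of `w = u * g` with `u` increasing on the fibres of `e` and `e ∘ g = e`. -/
def fiberSortFactor (e : Fin n → α) (w : Perm (Fin n)) : Perm (Fin n) :=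
  Tuple.sort (e ∘ ⇑w⁻¹) * (Tuple.sort e)⁻¹

theorem comp_inv_fiberSortFactor (e : Fin n → α) (w : Perm (Fin n)) :
    e ∘ ⇑(fiberSortFactor e w)⁻¹ = e ∘ ⇑w⁻¹ := by
  have hsorted := Tuple.comp_perm_comp_sort_eq_comp_sort (f := e) (σ := w⁻¹)
  rw [fiberSortFactor, mul_inv_rev, inv_inv, Perm.coe_mul, ← Function.comp_assoc, ← hsorted,
    Function.comp_assoc, Function.comp_assoc, ← Perm.coe_mul, mul_inv_cancel, Perm.coe_one,
    Function.comp_id]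

theorem isIncreasingOnFibers_fiberSortFactor (e : Fin n → α) (w : Perm (Fin n)) :
    IsIncreasingOnFibers e (fiberSortFactor e w) := by
  rw [isIncreasingOnFibers_iff_sort_eq, comp_inv_fiberSortFactor, fiberSortFactor,
    inv_mul_cancel_right]

theorem fiberSortFactor_mul {e : Fin n → α} {u g : Perm (Fin n)}
    (hu : IsIncreasingOnFibers e u) (hg : e ∘ ⇑g = e) : fiberSortFactor e (u * g) = u := by
  have hg' : e ∘ ⇑g⁻¹ = e := by
    conv_lhs => rw [← hg]
    rw [Function.comp_assoc, ← Perm.coe_mul, mul_inv_cancel, Perm.coe_one, Function.comp_id]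
  rw [fiberSortFactor, mul_inv_rev, Perm.coe_mul, ← Function.comp_assoc, hg',
    (isIncreasingOnFibers_iff_sort_eq.mp hu), mul_inv_cancel_right]

def fiberSortEquiv (e : Fin n → α) :
    Perm (Fin n) ≃ {u // IsIncreasingOnFibers e u} × {g : Perm (Fin n) // e ∘ ⇑g = e} where
  toFun w := (⟨fiberSortFactor e w, isIncreasingOnFibers_fiberSortFactor e w⟩,
    ⟨(fiberSortFactor e w)⁻¹ * w, by
      rw [Perm.coe_mul, ← Function.comp_assoc, comp_inv_fiberSortFactor, Function.comp_assoc,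
        ← Perm.coe_mul, inv_mul_cancel, Perm.coe_one, Function.comp_id]⟩)
  invFun p := p.1.1 * p.2.1
  left_inv w := mul_inv_cancel_left _ w
  right_inv := by
    rintro ⟨⟨u, hu⟩, ⟨g, hg⟩⟩
    simp only [fiberSortFactor_mul hu hg, inv_mul_cancel_left]

theorem card_isIncreasingOnFibers_mul_card_stabilizer (e : Fin n → α) :
    Fintype.card {u // IsIncreasingOnFibers e u} * Fintype.card {g : Perm (Fin n) // e ∘ ⇑g = e}
      = n ! := by
  rw [← Fintype.card_prod, ← Fintype.card_congr (fiberSortEquiv e), Fintype.card_perm,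
    Fintype.card_fin]

end FiberSort

/-- `d` is compatible with `w`: weakly decreasing, and strictly decreasing at every descent
of `w`. -/
def IsCompatible (w : Perm (Fin n)) (d : Fin n → ℕ) : Prop :=
  Antitone d ∧ IsIncreasingOnFibers d w

def compatibleSeries (w : Perm (Fin n)) : MvPowerSeries (Fin n) ℚ :=
  fun d => if IsCompatible w d then 1 else 0

theorem coeff_lhs16 (d : Fin n →₀ ℕ) :
    MvPowerSeries.coeff d (lhs16 n) = #{w | IsCompatible w d} := by
  change (if Antitone d then _ else 0) = _
  by_cases hd : Antitone d
  · have hstab := DomMulAct.stabilizer_card' (f := ⇑d)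
    simp only [Fintype.card_subtype] at hstab
    have hcount := card_isIncreasingOnFibers_mul_card_stabilizer (⇑d)
    rw [Fintype.card_subtype, Fintype.card_subtype, hstab] at hcount
    simp only [IsCompatible, hd, true_and, if_true]
    rw [div_eq_iff (by positivity)]
    exact_mod_cast hcount.symm
  · simp [IsCompatible, hd]

theorem lhs16_eq_sum_compatibleSeries : lhs16 n = ∑ w, compatibleSeries w := by
  ext d
  rw [coeff_lhs16, map_sum, natCast_card_filter]
  rfl

theorem sum_powerset_boole_neg_one_pow {ι R : Type*} [CommRing R] [DecidableEq ι]
    (s : Finset ι) (c : ι → ℤ) :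
    ∑ t ∈ s.powerset, (if ∀ j ∈ s, (if j ∈ t then 1 else 0) ≤ c j then (-1 : R) ^ #t else 0) =
      if ∀ j ∈ s, c j = 0 then 1 else 0 := by
  have hsplit : ∀ j, (if c j = 0 then (1 : R) else 0) =
      -(if 1 ≤ c j then 1 else 0) + if 0 ≤ c j then 1 else 0 := by
    intro j
    split_ifs <;> first | omega | simp
  rw [← prod_boole, prod_congr rfl fun j _ => hsplit j, prod_add]
  refine sum_congr rfl fun t ht => ?_
  rw [mem_powerset] at ht
  rw [prod_neg, prod_boole, prod_boole, mul_assoc, ite_zero_mul_ite_zero,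
    mul_one, mul_boole]
  refine if_congr ⟨fun h => ⟨fun j hj => ?_, fun j hj => ?_⟩, fun ⟨hin, hout⟩ j hj => ?_⟩ rfl rfl
  · simpa [hj] using h j (ht hj)
  · simpa [(mem_sdiff.mp hj).2] using h j (mem_sdiff.mp hj).1
  · by_cases hjt : j ∈ t
    · simpa [hjt] using hin j hjt
    · simpa [hjt] using hout j (mem_sdiff.mpr ⟨hj, hjt⟩)

def extendByZero (d : Fin n → ℕ) (k : ℕ) : ℤ := if h : k < n then d ⟨k, h⟩ else 0

/-- `gap d j = d (j - 1) - d j` in 1-based position `j ∈ [1, n]`, with `d n = 0`. -/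
def gap (d : Fin n → ℕ) (j : ℕ) : ℤ := extendByZero d (j - 1) - extendByZero d j

theorem extendByZero_eq_sum_gap (d : Fin n → ℕ) {l : ℕ} (hl : l ≤ n) :
    extendByZero d l = ∑ j ∈ Ioc l n, gap d j := by
  induction hl using Nat.decreasingInduction with
  | self => simp [extendByZero]
  | of_succ k hk ih =>
    rw [← Icc_add_one_left_eq_Ioc, Icc_eq_cons_Ioc hk, sum_cons, ← ih, gap, Nat.add_sub_cancel]
    ring

theorem le_of_forall_gap_le {d e : Fin n →₀ ℕ} (h : ∀ j ∈ Icc 1 n, gap e j ≤ gap d j) : e ≤ d := by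
  intro l
  have hle : extendByZero e l ≤ extendByZero d l := by
    rw [extendByZero_eq_sum_gap _ l.isLt.le, extendByZero_eq_sum_gap _ l.isLt.le]
    exact sum_le_sum fun j hj => h j (by simp at hj ⊢; omega)
  simpa [extendByZero] using hle

theorem eq_of_forall_gap_eq {d e : Fin n →₀ ℕ} (h : ∀ j ∈ Icc 1 n, gap e j = gap d j) : e = d :=
  le_antisymm (le_of_forall_gap_le fun j hj => (h j hj).le)
    (le_of_forall_gap_le fun j hj => (h j hj).ge)

theorem gap_tsub {d e : Fin n →₀ ℕ} (h : e ≤ d) (j : ℕ) : gap ⇑(d - e) j = gap d j - gap e j := by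
  have hext : ∀ k, extendByZero ⇑(d - e) k = extendByZero d k - extendByZero e k := by
    intro k
    unfold extendByZero
    split_ifs
    · simp [Nat.cast_sub (h _)]
    · simp
  simp only [gap, hext]
  ring

def qprodExponent (n : ℕ) (S : Finset ℕ) : Fin n →₀ ℕ :=
  ∑ i ∈ S, ∑ l ∈ univ.filter (fun l : Fin n => (l : ℕ) < i), Finsupp.single l 1

theorem prod_qprod (S : Finset ℕ) :
    ∏ i ∈ S, qprod n i = MvPowerSeries.monomial (qprodExponent n S) 1 := by
  simp only [qprod, MvPowerSeries.X_def, MvPowerSeries.prod_monomial, prod_const_one,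
    qprodExponent]

theorem prod_one_sub_qprod (s : Finset ℕ) :
    ∏ j ∈ s, (1 - qprod n j) =
      ∑ t ∈ s.powerset, MvPowerSeries.monomial (qprodExponent n t) ((-1) ^ #t) := by
  simp_rw [sub_eq_neg_add, prod_add, prod_const_one, mul_one, prod_neg, prod_qprod]
  refine sum_congr rfl fun t _ => ?_
  rw [← map_one (MvPowerSeries.C (σ := Fin n) (R := ℚ)), ← map_neg, ← map_pow,
    ← MvPowerSeries.monomial_zero_eq_C_apply, MvPowerSeries.monomial_mul_monomial, zero_add,
    mul_one]

theorem qprodExponent_apply (S : Finset ℕ) (l : Fin n) :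
    qprodExponent n S l = ∑ i ∈ S, if (l : ℕ) < i then 1 else 0 := by
  simp [qprodExponent, Finsupp.finsetSum_apply, Finsupp.single_apply]

theorem gap_qprodExponent {S : Finset ℕ} (hS : S ⊆ Icc 1 n) {j : ℕ} (hj : j ∈ Icc 1 n) :
    gap (qprodExponent n S) j = if j ∈ S then 1 else 0 := by
  have hext : ∀ k ≤ n,
      extendByZero (qprodExponent n S) k = ∑ i ∈ S, if k < i then (1 : ℤ) else 0 := by
    intro k hk
    rcases hk.lt_or_eq with hk | rfl
    · simp [extendByZero, hk, qprodExponent_apply]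
    · rw [extendByZero, dif_neg (lt_irrefl k)]
      refine (sum_eq_zero fun i hi => ?_).symm
      simp [(mem_Icc.mp (hS hi)).2]
  rw [mem_Icc] at hj
  rw [gap, hext _ (by omega), hext _ hj.2, ← sum_sub_distrib, ← sum_ite_eq' S j (fun _ => (1 : ℤ))]
  refine sum_congr rfl fun i _ => ?_
  split_ifs <;> omega

theorem DpermF_subset_Ico (w : Perm (Fin n)) : DpermF w ⊆ Ico 1 n := by
  intro j hj
  obtain ⟨i, hi, rfl⟩ := mem_image.mp hj
  obtain ⟨h, -⟩ := (mem_filter.mp hi).2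
  simp only [mem_Ico]
  omega

theorem succ_mem_DpermF_iff {N : ℕ} (w : Perm (Fin (N + 1))) (i : Fin N) :
    (i : ℕ) + 1 ∈ DpermF w ↔ w i.succ < w i.castSucc := by
  simp only [DpermF, mem_image, mem_filter, mem_univ, true_and, add_left_inj]
  constructor
  · rintro ⟨j, ⟨h, hlt⟩, hji⟩
    obtain rfl : j = i.castSucc := Fin.ext hji
    exact hlt
  · exact fun hlt => ⟨i.castSucc, ⟨by simp, hlt⟩, rfl⟩

theorem isCompatible_iff_strictAnti {w : Perm (Fin n)} {d : Fin n → ℕ} :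
    IsCompatible w d ↔ StrictAnti fun k => toLex (d k, OrderDual.toDual (w k)) := by
  constructor
  · rintro ⟨hanti, hfib⟩ i j hij
    rw [Prod.Lex.toLex_lt_toLex, OrderDual.toDual_lt_toDual]
    rcases (hanti hij.le).lt_or_eq with h | h
    · exact Or.inl h
    · exact Or.inr ⟨h, hfib hij h.symm⟩
  · intro h
    refine ⟨Prod.Lex.monotone_fst_ofLex.comp_antitone h.antitone, fun i j hij he => ?_⟩
    have hlex := Prod.Lex.toLex_lt_toLex.mp (h hij)
    exact (hlex.resolve_left fun hlt => hlt.ne he.symm).2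

theorem isCompatible_iff_forall_gap {w : Perm (Fin n)} {d : Fin n → ℕ} :
    IsCompatible w d ↔ ∀ j ∈ Icc 1 n, (if j ∈ DpermF w then 1 else 0) ≤ gap d j := by
  rw [isCompatible_iff_strictAnti]
  cases n with
  | zero => exact iff_of_true (fun i => i.elim0) (by simp)
  | succ N =>
    have hadjacent : ∀ i : Fin N,
        toLex (d i.succ, OrderDual.toDual (w i.succ)) <
            toLex (d i.castSucc, OrderDual.toDual (w i.castSucc)) ↔
          (if (i : ℕ) + 1 ∈ DpermF w then 1 else 0) ≤ gap d (i + 1) := by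
      intro i
      have hgap : gap d (i + 1) = d i.castSucc - d i.succ := by
        simp [gap, extendByZero]
        rfl
      have hne : w i.succ ≠ w i.castSucc := w.injective.ne Fin.castSucc_lt_succ.ne'
      rw [Fin.ne_iff_vne] at hne
      simp only [Prod.Lex.toLex_lt_toLex, OrderDual.toDual_lt_toDual, succ_mem_DpermF_iff, hgap,
        Fin.lt_def]
      split_ifs <;> omega
    rw [Fin.strictAnti_iff_succ_lt]
    constructor
    · intro h j hj
      rw [mem_Icc] at hj
      rcases hj.2.lt_or_eq with hlt | rfl
      · have := (hadjacent ⟨j - 1, by omega⟩).mp (h _)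
        rwa [show j - 1 + 1 = j by omega] at this
      · have hlast : N + 1 ∉ DpermF w := fun hD => by simpa using DpermF_subset_Ico w hD
        simp [hlast, gap, extendByZero]
    · exact fun h i => (hadjacent i).mpr (h _ (by simp))

theorem le_and_isCompatible_tsub_iff (w : Perm (Fin n)) (d : Fin n →₀ ℕ) {t : Finset ℕ}
    (ht : t ⊆ Icc 1 n) :
    (qprodExponent n t ≤ d ∧ IsCompatible w ⇑(d - qprodExponent n t)) ↔
      ∀ j ∈ Icc 1 n, (if j ∈ t then 1 else 0) ≤ gap d j - if j ∈ DpermF w then 1 else 0 := by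
  constructor
  · rintro ⟨hle, hcompat⟩ j hj
    have hgap := isCompatible_iff_forall_gap.mp hcompat j hj
    rw [gap_tsub hle, gap_qprodExponent ht hj] at hgap
    linarith
  · intro h
    have hle : qprodExponent n t ≤ d := le_of_forall_gap_le fun j hj => by
      have hj' := h j hj
      rw [gap_qprodExponent ht hj]
      split_ifs at hj' ⊢ <;> omega
    refine ⟨hle, isCompatible_iff_forall_gap.mpr fun j hj => ?_⟩
    rw [gap_tsub hle, gap_qprodExponent ht hj]
    linarith [h j hj]

theorem qprodExponent_eq_iff {S : Finset ℕ} (hS : S ⊆ Icc 1 n) (d : Fin n →₀ ℕ) :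
    qprodExponent n S = d ↔ ∀ j ∈ Icc 1 n, gap d j - (if j ∈ S then 1 else 0) = 0 := by
  refine ⟨?_, fun h => eq_of_forall_gap_eq fun j hj => ?_⟩
  · rintro rfl j hj
    rw [gap_qprodExponent hS hj, sub_self]
  · rw [gap_qprodExponent hS hj]
    linarith [h j hj]

theorem compatibleSeries_mul_prod_one_sub_qprod (w : Perm (Fin n)) :
    compatibleSeries w * ∏ j ∈ Icc 1 n, (1 - qprod n j) = ∏ i ∈ DpermF w, qprod n i := by
  ext d
  have hterm : ∀ t ∈ (Icc 1 n).powerset,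
      MvPowerSeries.coeff d
          (compatibleSeries w * MvPowerSeries.monomial (qprodExponent n t) ((-1) ^ #t)) =
        if ∀ j ∈ Icc 1 n, (if j ∈ t then 1 else 0) ≤ gap d j - if j ∈ DpermF w then 1 else 0
        then (-1) ^ #t else 0 := by
    intro t ht
    simp only [MvPowerSeries.coeff_mul_monomial,
      ← le_and_isCompatible_tsub_iff w d (mem_powerset.mp ht)]
    by_cases hle : qprodExponent n t ≤ d
    · rw [if_pos hle, MvPowerSeries.coeff_apply, compatibleSeries]
      split_ifs <;> simp_all
    · simp [hle]
  rw [prod_one_sub_qprod, mul_sum, map_sum, sum_congr rfl hterm, sum_powerset_boole_neg_one_pow,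
    prod_qprod, MvPowerSeries.coeff_monomial]
  exact if_congr
    ((qprodExponent_eq_iff ((DpermF_subset_Ico w).trans Ico_subset_Icc_self) d).symm.trans eq_comm)
    rfl rfl

/-- Adin–Brenti–Roichman:
`Σ_{λ∈Par(n)} (n choose m(λ)) ∏ qᵢ^{λᵢ}
  = (Σ_{w∈Sₙ} ∏_{i∈D(w)} q₁⋯qᵢ) / ∏_{j=1}^n (1 - q₁⋯qⱼ)`,
as formal power series in `q₁,…,qₙ` (stated with the denominator cleared). -/
theorem stmt_16 (n : ℕ) :
    lhs16 n * ∏ j ∈ Finset.Icc 1 n, (1 - qprod n j)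
      = ∑ w : Equiv.Perm (Fin n), ∏ i ∈ DpermF w, qprod n i := by
  rw [lhs16_eq_sum_compatibleSeries, sum_mul]
  exact sum_congr rfl fun w _ => compatibleSeries_mul_prod_one_sub_qprod w
end
end

section
/- For a multichain M = (A₁ ⊆ ⋯ ⊆ A_k) in Bₙ and i ∈ [n-1], with σ = σ(M) and α = α(M): p_i(M) > p_{i+1}(M) if and only if i ∈ D(σ⁻¹); p_i(M) = p_{i+1}(M) if and only if i ∉ D(σ⁻¹) and D(sᵢσ) ⊄ D(α); and p_i(M) < p_{i+1}(M) if and only if i ∉ D(σ⁻¹) and D(sᵢσ) ⊆ D(α). -/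
noncomputable section
open scoped Classical

/-- The extension of a length-`k` multichain `A₁ ⊆ ⋯ ⊆ A_k` in `Bₙ` by `A_{k+1} = [n]`. -/
def extChain {n k : ℕ} (M : Fin k → Finset (Fin n)) (j : Fin (k + 1)) : Finset (Fin n) :=
  if h : (j : ℕ) < k then M ⟨j, h⟩ else Finset.univ

/-- `p_i(M) = min {j ∈ [k+1] : i ∈ A_j}`, the first position at which `i` appears. -/
def firstPos {n k : ℕ} (M : Fin k → Finset (Fin n)) (i : Fin n) : Fin (k + 1) :=
  (Finset.univ.filter (fun j : Fin (k + 1) => i ∈ extChain M j)).min'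
    ⟨Fin.last k, by
      rw [Finset.mem_filter]
      refine ⟨Finset.mem_univ _, ?_⟩
      unfold extChain
      rw [dif_neg (by simp)]
      exact Finset.mem_univ _⟩

/-- The number of inversions of `w`, which equals its Coxeter length. -/
def invCount {n : ℕ} (w : Equiv.Perm (Fin n)) : ℕ :=
  (Finset.univ.filter (fun p : Fin n × Fin n => p.1 < p.2 ∧ w p.2 < w p.1)).card

/-!
Write `cⱼ = |Aⱼ|`. Since `σ` maps `[cⱼ]` onto `Aⱼ`, the element `i` enters the chain at the
block of the composition `c₁ ≤ ⋯ ≤ c_k` containing the position `σ⁻¹ i`; so `p_u < p_v` iff some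
`cⱼ` separates the positions, `σ⁻¹ u < cⱼ ≤ σ⁻¹ v`.

Minimality of `σ` forces every descent `x` of `σ` to be some `cⱼ`, for otherwise `σ sₓ` is a
shorter permutation sending the standard chain to `M`. As an inversion of `σ` always encloses a
descent, an inversion `σ⁻¹(i+1) < σ⁻¹ i` is then separated by some `cⱼ`: this is the first
equivalence. If instead `σ⁻¹ i < σ⁻¹(i+1)`, the descents of `sᵢσ` are those of `σ` together with
`σ⁻¹ i + 1` when the two positions are adjacent, while `sᵢσ` has an inversion at the positions
`σ⁻¹ i < σ⁻¹(i+1)`, hence a descent between them. So `D(sᵢσ) ⊆ D(α)` exactly when some `cⱼ`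
separates `σ⁻¹ i` and `σ⁻¹(i+1)`, i.e. when `p_i < p_{i+1}`; the middle case is what is left.
-/

open Finset

theorem swap_lt_swap_iff_of_adjacent {n : ℕ} {a b u v : Fin n} (hab : (b : ℕ) = a + 1)
    (h₁ : ¬(u = a ∧ v = b)) (h₂ : ¬(u = b ∧ v = a)) :
    Equiv.swap a b u < Equiv.swap a b v ↔ u < v := by
  simp only [Equiv.swap_apply_def]
  split_ifs <;> simp only [Fin.lt_def, Fin.ext_iff, not_and] at * <;> omega

theorem lt_or_eq_of_swap_mul_lt {n : ℕ} {w : Equiv.Perm (Fin n)} {a b u v : Fin n}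
    (hab : (b : ℕ) = a + 1) (h : (Equiv.swap a b * w) v < (Equiv.swap a b * w) u) :
    w v < w u ∨ (w u = a ∧ w v = b) := by
  by_cases hab' : w u = a ∧ w v = b
  · exact Or.inr hab'
  by_cases hba : w v = a ∧ w u = b
  · simp only [Equiv.Perm.mul_apply, hba.1, hba.2, Equiv.swap_apply_left,
      Equiv.swap_apply_right, Fin.lt_def] at h
    omega
  · exact Or.inl ((swap_lt_swap_iff_of_adjacent hab (by tauto) (by tauto)).mp h)

theorem exists_descent_of_lt {α : Type*} [LinearOrder α] {n : ℕ} (f : Fin n → α) {p q : Fin n}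
    (hpq : p < q) (hf : f q < f p) :
    ∃ (x : ℕ) (hx : x + 1 < n), (p : ℕ) ≤ x ∧ x < q ∧ f ⟨x + 1, hx⟩ < f ⟨x, by omega⟩ := by
  obtain ⟨q, hq⟩ := q
  rw [Fin.lt_def] at hpq
  simp only at hpq ⊢
  induction q with
  | zero => omega
  | succ q ih =>
    by_cases hdesc : f ⟨q + 1, hq⟩ < f ⟨q, by omega⟩
    · exact ⟨q, hq, by omega, by omega, hdesc⟩
    obtain hpq' | hpq' := Nat.lt_succ_iff_lt_or_eq.mp hpq
    · obtain ⟨x, hx, hpx, hxq, hfx⟩ := ih (by omega) hpq' (hf.trans_le' (not_lt.mp hdesc))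
      exact ⟨x, hx, hpx, by omega, hfx⟩
    · rw [show p = ⟨q, by omega⟩ from Fin.ext hpq'] at hf
      exact absurd hf hdesc

theorem invCount_mul_swap_lt {n : ℕ} (w : Equiv.Perm (Fin n)) {x y : Fin n}
    (hxy : (y : ℕ) = x + 1) (hdesc : w y < w x) :
    invCount (w * Equiv.swap x y) < invCount w := by
  set s := Equiv.swap x y
  have hreindex : invCount (w * s) =
      #(univ.filter fun p : Fin n × Fin n => s p.1 < s p.2 ∧ w p.2 < w p.1) := by
    refine card_equiv (s.prodCongr s) fun p => ?_
    rw [mem_filter]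
    simp [s]
  have hxy_lt : x < y := Fin.lt_def.mpr (by omega)
  rw [hreindex]
  apply card_lt_card
  rw [ssubset_iff_of_subset]
  · refine ⟨(x, y), by simp [hxy_lt, hdesc], ?_⟩
    simp [s, hxy_lt.not_gt]
  · intro p
    simp only [mem_filter, mem_univ, true_and, and_imp]
    intro hs hw
    refine ⟨(swap_lt_swap_iff_of_adjacent hxy ?_ ?_).mp hs, hw⟩
    · rintro ⟨rfl, rfl⟩
      simp [s, hxy_lt.not_gt] at hs
    · rintro ⟨rfl, rfl⟩
      exact hw.not_gt hdesc

theorem mem_DpermF {n : ℕ} {w : Equiv.Perm (Fin n)} {m : ℕ} :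
    m ∈ DpermF w ↔ ∃ (x : ℕ) (hx : x + 1 < n), m = x + 1 ∧ w ⟨x + 1, hx⟩ < w ⟨x, by omega⟩ := by
  simp only [DpermF, mem_image, mem_filter, mem_univ, true_and]
  constructor
  · rintro ⟨x, ⟨hx, hlt⟩, rfl⟩
    exact ⟨x, hx, rfl, hlt⟩
  · rintro ⟨x, hx, rfl, hlt⟩
    exact ⟨⟨x, by omega⟩, ⟨hx, hlt⟩, rfl⟩

theorem succ_mem_DpermF_iff_s18 {n : ℕ} {w : Equiv.Perm (Fin n)} {x : ℕ} (hx : x + 1 < n) :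
    x + 1 ∈ DpermF w ↔ w ⟨x + 1, hx⟩ < w ⟨x, by omega⟩ := by
  rw [mem_DpermF]
  constructor
  · rintro ⟨x, hx, hxx, hlt⟩
    obtain rfl : x = _ := Nat.succ_injective hxx.symm
    exact hlt
  · exact fun h => ⟨x, hx, rfl, h⟩

theorem coe_DpermF_subset_iff {n : ℕ} {w : Equiv.Perm (Fin n)} {S : Set ℕ} :
    ↑(DpermF w) ⊆ S ↔ ∀ (x : ℕ) (hx : x + 1 < n), w ⟨x + 1, hx⟩ < w ⟨x, by omega⟩ → x + 1 ∈ S := by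
  simp only [Set.subset_def, mem_coe, mem_DpermF]
  constructor
  · exact fun h x hx hlt => h _ ⟨x, hx, rfl, hlt⟩
  · rintro h _ ⟨x, hx, rfl, hlt⟩
    exact h x hx hlt

section Multichain

variable {n k : ℕ} {M : Fin k → Finset (Fin n)}

theorem extChain_castSucc (M : Fin k → Finset (Fin n)) (j : Fin k) :
    extChain M j.castSucc = M j := by
  simp [extChain]

theorem extChain_last (M : Fin k → Finset (Fin n)) : extChain M (Fin.last k) = univ := by
  simp [extChain]

theorem monotone_extChain (hM : Monotone M) : Monotone (extChain M) := by
  intro s t hst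
  unfold extChain
  split_ifs with hs ht ht
  · exact hM hst
  · exact subset_univ _
  · exact absurd (Fin.le_def.mp hst) (by omega)
  · exact subset_univ _

theorem mem_extChain_firstPos (M : Fin k → Finset (Fin n)) (i : Fin n) :
    i ∈ extChain M (firstPos M i) := by
  unfold firstPos
  exact (mem_filter.mp (min'_mem (univ.filter fun t => i ∈ extChain M t) _)).2

theorem firstPos_le_iff (hM : Monotone M) {i : Fin n} {t : Fin (k + 1)} :
    firstPos M i ≤ t ↔ i ∈ extChain M t := by
  constructor
  · exact fun h => monotone_extChain hM h (mem_extChain_firstPos M i)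
  · intro h
    unfold firstPos
    exact min'_le _ _ (by simpa using h)

theorem firstPos_lt_firstPos_iff (hM : Monotone M) {u v : Fin n} :
    firstPos M v < firstPos M u ↔ ∃ j : Fin k, v ∈ M j ∧ u ∉ M j := by
  have : firstPos M v < firstPos M u ↔ ∃ t, firstPos M v ≤ t ∧ ¬firstPos M u ≤ t :=
    ⟨fun h => ⟨_, le_rfl, not_le.mpr h⟩, fun ⟨t, hv, hu⟩ => hv.trans_lt (not_le.mp hu)⟩
  simp only [this, firstPos_le_iff hM, Fin.exists_fin_succ', extChain_castSucc, extChain_last,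
    mem_univ, not_true_eq_false, and_false, or_false]

def MapsStdChain (σ : Equiv.Perm (Fin n)) (M : Fin k → Finset (Fin n)) : Prop :=
  ∀ j : Fin k, image σ (univ.filter fun x : Fin n => (x : ℕ) < (M j).card) = M j

def IsMinimalChainPerm (σ : Equiv.Perm (Fin n)) (M : Fin k → Finset (Fin n)) : Prop :=
  MapsStdChain σ M ∧ ∀ τ, MapsStdChain τ M → invCount σ ≤ invCount τ

variable {σ : Equiv.Perm (Fin n)}

theorem MapsStdChain.mem_iff (hσ : MapsStdChain σ M) (j : Fin k) (i : Fin n) :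
    i ∈ M j ↔ ((σ⁻¹ i : Fin n) : ℕ) < (M j).card := by
  rw [← (Finset.ext_iff.mp (hσ j) i), mem_image]
  constructor
  · rintro ⟨x, hx, rfl⟩
    simpa using hx
  · exact fun h => ⟨σ⁻¹ i, by simpa using h, σ.apply_symm_apply i⟩

theorem MapsStdChain.mul_swap (hσ : MapsStdChain σ M) {x y : Fin n}
    (hxy : ∀ j, (x : ℕ) < (M j).card ↔ (y : ℕ) < (M j).card) :
    MapsStdChain (σ * Equiv.swap x y) M := by
  intro j
  have hswap : image (Equiv.swap x y) (univ.filter fun z : Fin n => (z : ℕ) < (M j).card) =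
      univ.filter fun z : Fin n => (z : ℕ) < (M j).card := by
    apply coe_injective
    push_cast
    simpa using (Equiv.swap_bijOn_self (s := {z : Fin n | (z : ℕ) < (M j).card}) (hxy j)).image_eq
  rw [Equiv.Perm.coe_mul, ← image_image, hswap, hσ j]

theorem MapsStdChain.firstPos_lt_firstPos_iff (hσ : MapsStdChain σ M) (hM : Monotone M)
    {u v : Fin n} :
    firstPos M v < firstPos M u ↔
      ∃ j, ((σ⁻¹ v : Fin n) : ℕ) < (M j).card ∧ (M j).card ≤ ((σ⁻¹ u : Fin n) : ℕ) := by
  simp only [_root_.firstPos_lt_firstPos_iff hM, hσ.mem_iff, not_lt]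

/-- Otherwise `σ sₓ` would be a shorter permutation sending the standard chain to `M`. -/
theorem IsMinimalChainPerm.exists_card_eq_of_descent (hσ : IsMinimalChainPerm σ M) {x : ℕ}
    (hx : x + 1 < n) (hdesc : σ ⟨x + 1, hx⟩ < σ ⟨x, by omega⟩) :
    ∃ j, x + 1 = (M j).card := by
  by_contra! hno
  refine (hσ.2 _ (hσ.1.mul_swap fun j => ?_)).not_gt (invCount_mul_swap_lt σ rfl hdesc)
  have := hno j
  simp only
  omega

theorem IsMinimalChainPerm.exists_card_between (hσ : IsMinimalChainPerm σ M) {a b : Fin n}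
    (hab : (b : ℕ) = a + 1) (hba : σ⁻¹ b < σ⁻¹ a) :
    ∃ j, ((σ⁻¹ b : Fin n) : ℕ) < (M j).card ∧ (M j).card ≤ ((σ⁻¹ a : Fin n) : ℕ) := by
  have hval : σ (σ⁻¹ a) < σ (σ⁻¹ b) := by simp [Fin.lt_def, hab]
  obtain ⟨x, hx, hbx, hxa, hdesc⟩ := exists_descent_of_lt σ hba hval
  obtain ⟨j, hj⟩ := hσ.exists_card_eq_of_descent hx hdesc
  exact ⟨j, by omega, by omega⟩

theorem IsMinimalChainPerm.coe_DpermF_swap_mul_subset_iff (hσ : IsMinimalChainPerm σ M)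
    {a b : Fin n} (hab : (b : ℕ) = a + 1) (hlt : σ⁻¹ a < σ⁻¹ b) :
    ↑(DpermF (Equiv.swap a b * σ)) ⊆ {c : ℕ | ∃ j, c = (M j).card} ↔
      ∃ j, ((σ⁻¹ a : Fin n) : ℕ) < (M j).card ∧ (M j).card ≤ ((σ⁻¹ b : Fin n) : ℕ) := by
  rw [coe_DpermF_subset_iff]
  constructor
  · intro hsub
    have hval : (Equiv.swap a b * σ) (σ⁻¹ b) < (Equiv.swap a b * σ) (σ⁻¹ a) := by
      simp [Fin.lt_def, hab]
    obtain ⟨x, hx, hax, hxb, hdesc⟩ := exists_descent_of_lt _ hlt hval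
    obtain ⟨j, hj⟩ := hsub x hx hdesc
    exact ⟨j, by omega, by omega⟩
  · rintro ⟨j, hja, hjb⟩ x hx hdesc
    obtain hdesc | ⟨hxa, hxb⟩ := lt_or_eq_of_swap_mul_lt hab hdesc
    · exact hσ.exists_card_eq_of_descent hx hdesc
    · -- the swapped pair occupies the adjacent positions `x, x + 1`, which `j` separates
      have hxa' := congrArg Fin.val (Equiv.Perm.inv_eq_iff_eq.mpr hxa.symm)
      have hxb' := congrArg Fin.val (Equiv.Perm.inv_eq_iff_eq.mpr hxb.symm)
      exact ⟨j, by simp only at hxa' hxb'; omega⟩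

theorem IsMinimalChainPerm.firstPos_lt_firstPos_iff_inv_lt (hσ : IsMinimalChainPerm σ M)
    (hM : Monotone M) {a b : Fin n} (hab : (b : ℕ) = a + 1) :
    firstPos M b < firstPos M a ↔ σ⁻¹ b < σ⁻¹ a := by
  rw [hσ.1.firstPos_lt_firstPos_iff hM]
  exact ⟨fun ⟨j, hb, ha⟩ => Fin.lt_def.mpr (by omega), hσ.exists_card_between hab⟩

theorem IsMinimalChainPerm.firstPos_lt_firstPos_iff_coe_DpermF_subset
    (hσ : IsMinimalChainPerm σ M) (hM : Monotone M) {a b : Fin n} (hab : (b : ℕ) = a + 1) :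
    firstPos M a < firstPos M b ↔
      σ⁻¹ a < σ⁻¹ b ∧ ↑(DpermF (Equiv.swap a b * σ)) ⊆ {c : ℕ | ∃ j, c = (M j).card} := by
  rw [hσ.1.firstPos_lt_firstPos_iff hM]
  constructor
  · rintro ⟨j, ha, hb⟩
    have hlt : σ⁻¹ a < σ⁻¹ b := Fin.lt_def.mpr (by omega)
    exact ⟨hlt, (hσ.coe_DpermF_swap_mul_subset_iff hab hlt).mpr ⟨j, ha, hb⟩⟩
  · rintro ⟨hlt, hsub⟩
    exact (hσ.coe_DpermF_swap_mul_subset_iff hab hlt).mp hsub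

end Multichain

/-- Let `M` be a multichain in `Bₙ`, `σ = σ(M)` the minimal-length permutation sending
the standard multichain to `M`, and `D(α(M)) = {|A₁|,…,|A_k|}` the descent multiset of
`α(M)`.  For `i ∈ [n-1]` (written `i = j+1` with 0-based `j`):
`p_i(M) > p_{i+1}(M)` iff `i ∈ D(σ⁻¹)`;
`p_i(M) = p_{i+1}(M)` iff `i ∉ D(σ⁻¹)` and `D(sᵢσ) ⊄ D(α(M))`;
`p_i(M) < p_{i+1}(M)` iff `i ∉ D(σ⁻¹)` and `D(sᵢσ) ⊆ D(α(M))`. -/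
theorem stmt_18 (n k : ℕ) (M : Fin k → Finset (Fin n)) (hM : Monotone M)
    (σ : Equiv.Perm (Fin n))
    (hstd : ∀ j : Fin k,
      Finset.image σ
        (Finset.univ.filter fun x : Fin n => (x : ℕ) < (M j).card) = M j)
    (hmin : ∀ τ : Equiv.Perm (Fin n),
      (∀ j : Fin k,
        Finset.image τ
          (Finset.univ.filter fun x : Fin n => (x : ℕ) < (M j).card) = M j) →
      invCount σ ≤ invCount τ)
    (j : ℕ) (hj : j + 1 < n) :
    (firstPos M ⟨j, Nat.lt_of_succ_lt hj⟩ > firstPos M ⟨j + 1, hj⟩ ↔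
      (j + 1) ∈ DpermF σ⁻¹) ∧
    (firstPos M ⟨j, Nat.lt_of_succ_lt hj⟩ = firstPos M ⟨j + 1, hj⟩ ↔
      ((j + 1) ∉ DpermF σ⁻¹ ∧
        ¬(↑(DpermF (Equiv.swap ⟨j, Nat.lt_of_succ_lt hj⟩ ⟨j + 1, hj⟩ * σ)) ⊆
          {c : ℕ | ∃ j' : Fin k, c = (M j').card}))) ∧
    (firstPos M ⟨j, Nat.lt_of_succ_lt hj⟩ < firstPos M ⟨j + 1, hj⟩ ↔
      ((j + 1) ∉ DpermF σ⁻¹ ∧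
        ↑(DpermF (Equiv.swap ⟨j, Nat.lt_of_succ_lt hj⟩ ⟨j + 1, hj⟩ * σ)) ⊆
          {c : ℕ | ∃ j' : Fin k, c = (M j').card})) := by
  have hσ : IsMinimalChainPerm σ M := ⟨hstd, hmin⟩
  set a : Fin n := ⟨j, Nat.lt_of_succ_lt hj⟩
  set b : Fin n := ⟨j + 1, hj⟩
  have hab : (b : ℕ) = a + 1 := rfl
  have hne : σ⁻¹ a ≠ σ⁻¹ b := by simp [a, b]
  have hD : j + 1 ∈ DpermF σ⁻¹ ↔ σ⁻¹ b < σ⁻¹ a := succ_mem_DpermF_iff_s18 hj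
  have hD' : j + 1 ∉ DpermF σ⁻¹ ↔ σ⁻¹ a < σ⁻¹ b := by rw [hD, not_lt, hne.le_iff_lt]
  have h₁ := hσ.firstPos_lt_firstPos_iff_inv_lt hM hab
  have h₃ := hσ.firstPos_lt_firstPos_iff_coe_DpermF_subset hM hab
  rw [gt_iff_lt, hD', hD]
  refine ⟨h₁, ⟨fun h => ?_, fun ⟨hlt, hS⟩ => ?_⟩, h₃⟩
  · have hlt : σ⁻¹ a < σ⁻¹ b := hne.lt_of_le (not_lt.mp (h₁.not.mp h.not_gt))
    exact ⟨hlt, fun hS => h.not_lt (h₃.mpr ⟨hlt, hS⟩)⟩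
  · rcases lt_trichotomy (firstPos M a) (firstPos M b) with h | h | h
    · exact absurd (h₃.mp h).2 hS
    · exact h
    · exact absurd (h₁.mp h) hlt.asymm
end
end

section
/- For every composition α of n and permutation w with D(w) = D(α): in the 0-Hecke algebra Hₙ(0), the module P_α = Hₙ(0)·π̄_{w₀(α)}π_{w₀(α^c)} has F-basis {π̄_w π_{w₀(α^c)} : w ∈ [w₀(α), w₁(α)]}, and the action of π̄ᵢ on the basis element π̄_w π_{w₀(α^c)} (for D(w) = D(α)) is: -π̄_w π_{w₀(α^c)} if i ∈ D(w⁻¹); 0 if i ∉ D(w⁻¹) and D(sᵢw) ⊄ D(α); and π̄_{sᵢw} π_{w₀(α^c)} if i ∉ D(w⁻¹) and D(sᵢw) ⊆ D(α). -/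
noncomputable section
open scoped Classical

/-!
For `D(w) = D(α)` the inversion set of `w` contains that of `w₀(α)` (the block reversal of the
intervals glued by `D(α)`) and is disjoint from that of `w₀(α^c)`. Hence
`π̄_w π_{w₀(α^c)} = π̄_{w w₀(α)} · π̄_{w₀(α)} π_{w₀(α^c)}` lies in `P_α`, and
`π̄_w π_{w₀(α^c)} ≡ π̄_{w w₀(α^c)}` modulo basis vectors of smaller length; as
`w ↦ w w₀(α^c)` is injective, the family is unitriangular against the basis `π̄`, so independent.
The action formulas follow from `π̄ᵢ² = -π̄ᵢ` and `π̄ᵢ πᵢ = 0`: a descent `i ∉ D(α)` of `sᵢ w`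
is a left descent of the involution `w₀(α^c)`. They show that the span is stable under every
`π̄ᵢ`, hence is the left ideal generated by `π̄_{w₀(α)} π_{w₀(α^c)}`.
-/

open Finset

section InversionSet

variable {n : ℕ}

/-- The simple transposition `s_{j+1}`, exchanging the 0-based positions `j` and `j + 1`. -/
def adjSwap (j : ℕ) (h : j + 1 < n) : Equiv.Perm (Fin n) :=
  Equiv.swap ⟨j, Nat.lt_of_succ_lt h⟩ ⟨j + 1, h⟩

def invSet (w : Equiv.Perm (Fin n)) : Finset (Fin n × Fin n) :=
  univ.filter (fun p : Fin n × Fin n => p.1 < p.2 ∧ w p.2 < w p.1)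

theorem invCount_eq_card_invSet (w : Equiv.Perm (Fin n)) : invCount w = #(invSet w) := rfl

@[simp]
theorem mem_invSet {w : Equiv.Perm (Fin n)} {p : Fin n × Fin n} :
    p ∈ invSet w ↔ p.1 < p.2 ∧ w p.2 < w p.1 := by
  simp [invSet]

theorem DpermF_subset_Ioo (w : Equiv.Perm (Fin n)) : DpermF w ⊆ Ioo 0 n := by
  intro m hm
  obtain ⟨j, ⟨h, -⟩, rfl⟩ := by simpa [DpermF] using hm
  simpa using h

theorem mem_DpermF_iff {w : Equiv.Perm (Fin n)} {j : ℕ} (h : j + 1 < n) :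
    j + 1 ∈ DpermF w ↔ w ⟨j + 1, h⟩ < w ⟨j, Nat.lt_of_succ_lt h⟩ := by
  constructor
  · intro hm
    obtain ⟨i, ⟨hi, hlt⟩, hij⟩ := by simpa [DpermF] using hm
    obtain rfl : i = ⟨j, Nat.lt_of_succ_lt h⟩ := Fin.ext (by omega)
    exact hlt
  · intro hlt
    simpa [DpermF] using ⟨⟨j, Nat.lt_of_succ_lt h⟩, ⟨h, hlt⟩, rfl⟩

theorem mem_DpermF_iff_mem_invSet {w : Equiv.Perm (Fin n)} {j : ℕ} (h : j + 1 < n) :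
    j + 1 ∈ DpermF w ↔ (⟨j, Nat.lt_of_succ_lt h⟩, ⟨j + 1, h⟩) ∈ invSet w := by
  rw [mem_DpermF_iff h, mem_invSet]
  exact (and_iff_right (Fin.mk_lt_mk.2 (Nat.lt_succ_self j))).symm

theorem adjSwap_lt_adjSwap_iff {j : ℕ} (h : j + 1 < n) {x y : Fin n} (hxy : x < y) :
    adjSwap j h y < adjSwap j h x ↔ (x : ℕ) = j ∧ (y : ℕ) = j + 1 := by
  unfold adjSwap
  rw [Equiv.swap_apply_def, Equiv.swap_apply_def]
  rw [Fin.lt_def] at hxy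
  split_ifs <;> simp only [Fin.lt_def, Fin.ext_iff] at * <;> omega

theorem adjSwap_inv {j : ℕ} (h : j + 1 < n) : (adjSwap j h)⁻¹ = adjSwap j h :=
  Equiv.symm_swap _ _

theorem adjSwap_mul_self {j : ℕ} (h : j + 1 < n) : adjSwap j h * adjSwap j h = 1 :=
  Equiv.swap_mul_self _ _

theorem invSet_adjSwap {j : ℕ} (h : j + 1 < n) :
    invSet (adjSwap j h) = {(⟨j, Nat.lt_of_succ_lt h⟩, ⟨j + 1, h⟩)} := by
  ext ⟨x, y⟩
  simp only [mem_invSet, mem_singleton, Prod.mk.injEq, Fin.ext_iff]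
  constructor
  · rintro ⟨hxy, hlt⟩
    exact (adjSwap_lt_adjSwap_iff h hxy).1 hlt
  · rintro ⟨hx, hy⟩
    have hxy : x < y := by rw [Fin.lt_def]; omega
    exact ⟨hxy, (adjSwap_lt_adjSwap_iff h hxy).2 ⟨hx, hy⟩⟩

theorem invCount_inv (w : Equiv.Perm (Fin n)) : invCount w⁻¹ = invCount w := by
  refine Finset.card_nbij' (fun p => (w⁻¹ p.2, w⁻¹ p.1)) (fun p => (w p.2, w p.1))
    ?_ ?_ ?_ ?_ <;> intro p hp <;> simp_all

theorem invCount_mul (u v : Equiv.Perm (Fin n)) :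
    invCount (u * v) = #(invSet u \ invSet v⁻¹) + #(invSet v⁻¹ \ invSet u) := by
  rw [← card_union_of_disjoint disjoint_sdiff_sdiff, invCount_eq_card_invSet]
  refine Finset.card_nbij' (fun p => (min (v p.1) (v p.2), max (v p.1) (v p.2)))
    (fun q => (min (v⁻¹ q.1) (v⁻¹ q.2), max (v⁻¹ q.1) (v⁻¹ q.2))) ?_ ?_ ?_ ?_
  · rintro ⟨x, y⟩ hp
    simp only [mem_coe, mem_invSet, Equiv.Perm.coe_mul, Function.comp_apply] at hp
    obtain ⟨hxy, hlt⟩ := hp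
    rcases lt_or_gt_of_ne (v.injective.ne hxy.ne) with h | h
    · simp [min_eq_left h.le, max_eq_right h.le, h, hlt, hxy.le]
    · simp [min_eq_right h.le, max_eq_left h.le, h, hlt.le, hxy]
  · rintro ⟨a, b⟩ hq
    obtain ⟨x, rfl⟩ := v.surjective a
    obtain ⟨y, rfl⟩ := v.surjective b
    simp only [coe_union, coe_sdiff, Set.mem_union, Set.mem_sdiff, mem_coe, mem_invSet,
      Equiv.Perm.coe_inv, Equiv.symm_apply_apply] at hq
    have hxy : x ≠ y := by rintro rfl; rcases hq with h | h <;> exact lt_irrefl _ h.1.1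
    rcases hq with ⟨⟨hab, hu⟩, hv⟩ | ⟨⟨hab, hv⟩, hu⟩
    · have h : x < y := lt_of_le_of_ne (not_lt.1 (fun h => hv ⟨hab, h⟩)) hxy
      simp [min_eq_left h.le, max_eq_right h.le, h, hu]
    · have h : u (v x) < u (v y) := lt_of_le_of_ne (not_lt.1 (fun h => hu ⟨hab, h⟩))
        (u.injective.ne (v.injective.ne hxy))
      simp [min_eq_right hv.le, max_eq_left hv.le, hv, h]
  · rintro ⟨x, y⟩ hp
    simp only [mem_coe, mem_invSet] at hp
    rcases le_total (v x) (v y) with h | h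
    · simp [min_eq_left h, max_eq_right h, hp.1.le]
    · simp [min_eq_right h, max_eq_left h, hp.1.le]
  · rintro ⟨a, b⟩ hq
    obtain ⟨x, rfl⟩ := v.surjective a
    obtain ⟨y, rfl⟩ := v.surjective b
    simp only [coe_union, coe_sdiff, Set.mem_union, Set.mem_sdiff, mem_coe, mem_invSet] at hq
    have hab : v x < v y := by rcases hq with h | h <;> exact h.1.1
    rcases le_total x y with h | h
    · simp [min_eq_left h, max_eq_right h, hab.le]
    · simp [min_eq_right h, max_eq_left h, hab.le]

section Length

variable {u v w : Equiv.Perm (Fin n)} {j : ℕ}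

theorem invCount_mul_of_disjoint (h : Disjoint (invSet u) (invSet v⁻¹)) :
    invCount (u * v) = invCount u + invCount v := by
  rw [invCount_mul, h.sdiff_eq_left, h.symm.sdiff_eq_left, ← invCount_inv v]
  rfl

theorem invCount_mul_add_of_subset (h : invSet v⁻¹ ⊆ invSet u) :
    invCount (u * v) + invCount v = invCount u := by
  rw [invCount_mul, sdiff_eq_empty_iff_subset.2 h, card_empty, add_zero, ← invCount_inv v,
    invCount_eq_card_invSet v⁻¹, card_sdiff_add_card_eq_card h]
  rfl

theorem invCount_mul_le (u v : Equiv.Perm (Fin n)) :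
    invCount (u * v) ≤ invCount u + invCount v := by
  rw [invCount_mul, ← invCount_inv v]
  exact add_le_add (card_le_card sdiff_subset) (card_le_card sdiff_subset)

theorem invCount_adjSwap (h : j + 1 < n) : invCount (adjSwap j h) = 1 := by
  rw [invCount_eq_card_invSet, invSet_adjSwap, card_singleton]

theorem invCount_mul_adjSwap_of_not_mem (h : j + 1 < n) (hd : j + 1 ∉ DpermF w) :
    invCount (w * adjSwap j h) = invCount w + 1 := by
  rw [invCount_mul_of_disjoint, invCount_adjSwap]
  rwa [adjSwap_inv, invSet_adjSwap, disjoint_singleton_right, ← mem_DpermF_iff_mem_invSet]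

theorem invCount_mul_adjSwap_of_mem (h : j + 1 < n) (hd : j + 1 ∈ DpermF w) :
    invCount (w * adjSwap j h) + 1 = invCount w := by
  rw [← invCount_adjSwap h, invCount_mul_add_of_subset]
  rwa [adjSwap_inv, invSet_adjSwap, singleton_subset_iff, ← mem_DpermF_iff_mem_invSet]

theorem invCount_adjSwap_mul_of_not_mem (h : j + 1 < n) (hd : j + 1 ∉ DpermF w⁻¹) :
    invCount (adjSwap j h * w) = invCount w + 1 := by
  rw [← invCount_inv, mul_inv_rev, adjSwap_inv, invCount_mul_adjSwap_of_not_mem h hd,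
    invCount_inv]

theorem invCount_adjSwap_mul_of_mem (h : j + 1 < n) (hd : j + 1 ∈ DpermF w⁻¹) :
    invCount (adjSwap j h * w) + 1 = invCount w := by
  rw [← invCount_inv, mul_inv_rev, adjSwap_inv, invCount_mul_adjSwap_of_mem h hd, invCount_inv]

theorem invCount_one : invCount (1 : Equiv.Perm (Fin n)) = 0 :=
  card_eq_zero.2 (filter_eq_empty_iff.2 fun _ _ h => lt_asymm h.1 h.2)

theorem eq_one_of_invCount_eq_zero (hw : invCount w = 0) : w = 1 := by
  have hempty : invSet w = ∅ := card_eq_zero.1 hw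
  have hmono : StrictMono w := fun x y hxy =>
    lt_of_le_of_ne (not_lt.1 fun hlt => notMem_empty (x, y) (hempty ▸ mem_invSet.2 ⟨hxy, hlt⟩))
      (w.injective.ne hxy.ne)
  exact Equiv.Perm.ext fun x => hmono.apply_eq

theorem eq_of_invSet_eq (h : invSet u = invSet v) : u = v := by
  have hl := invCount_mul u v⁻¹
  rw [inv_inv, h, sdiff_self, bot_eq_empty, card_empty] at hl
  exact mul_inv_eq_one.1 (eq_one_of_invCount_eq_zero hl)

theorem exists_mem_DpermF_of_ne_one (hw : w ≠ 1) :
    ∃ (j : ℕ) (_ : j + 1 < n), j + 1 ∈ DpermF w := by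
  by_contra! hc
  refine hw (Equiv.Perm.ext fun x => StrictMono.apply_eq ?_)
  cases n with
  | zero => exact fun a => a.elim0
  | succ m =>
    refine Fin.strictMono_iff_lt_succ.2 fun i => lt_of_le_of_ne ?_ (w.injective.ne ?_)
    · have hi : (i : ℕ) + 1 < m + 1 := Nat.succ_lt_succ i.isLt
      exact not_lt.1 ((mem_DpermF_iff hi).not.1 (hc i hi))
    · simp [Fin.ext_iff]

@[elab_as_elim]
theorem adjSwap_induction {P : Equiv.Perm (Fin n) → Prop} (one : P 1)
    (step : ∀ (j : ℕ) (h : j + 1 < n) (w : Equiv.Perm (Fin n)),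
      invCount (adjSwap j h * w) = invCount w + 1 → P w → P (adjSwap j h * w))
    (w : Equiv.Perm (Fin n)) : P w := by
  induction hk : invCount w using Nat.strong_induction_on generalizing w with
  | _ k ih =>
  by_cases hw : w = 1
  · exact hw ▸ one
  obtain ⟨j, h, hd⟩ := exists_mem_DpermF_of_ne_one (inv_ne_one.2 hw)
  have hl := invCount_adjSwap_mul_of_mem h hd
  have hw' : adjSwap j h * (adjSwap j h * w) = w := by
    rw [← mul_assoc, adjSwap_mul_self, one_mul]
  rw [← hw']
  exact step j h _ (by rw [hw']; omega) (ih _ (by omega) _ rfl)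

theorem invSet_subset_invSet_adjSwap_mul (h : j + 1 < n) (hd : j + 1 ∉ DpermF w⁻¹) :
    invSet w ⊆ invSet (adjSwap j h * w) := by
  rintro ⟨x, y⟩ hxy
  rw [mem_invSet] at hxy ⊢
  refine ⟨hxy.1, lt_of_le_of_ne (not_lt.1 fun hlt => hd ?_) ((adjSwap j h).injective.ne
    (w.injective.ne hxy.1.ne'))⟩
  obtain ⟨hy, hx⟩ := (adjSwap_lt_adjSwap_iff h hxy.2).1 hlt
  rw [mem_DpermF_iff h]
  have ex : w x = ⟨j + 1, h⟩ := Fin.ext hx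
  have ey : w y = ⟨j, Nat.lt_of_succ_lt h⟩ := Fin.ext hy
  simpa [← ex, ← ey] using hxy.1

theorem DpermF_subset_DpermF_adjSwap_mul (h : j + 1 < n) (hd : j + 1 ∉ DpermF w⁻¹) :
    DpermF w ⊆ DpermF (adjSwap j h * w) := by
  intro m hm
  obtain ⟨hm0, hmn⟩ := mem_Ioo.1 (DpermF_subset_Ioo w hm)
  obtain ⟨c, rfl⟩ : ∃ c, m = c + 1 := ⟨m - 1, by omega⟩
  rw [mem_DpermF_iff_mem_invSet hmn] at hm ⊢
  exact invSet_subset_invSet_adjSwap_mul h hd hm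

end Length

end InversionSet


section Blocks

variable {T : Finset ℕ} {x y z : ℕ}

def InBlock (T : Finset ℕ) (x y : ℕ) : Prop := ∀ d, x < d → d ≤ y → d ∈ T

theorem InBlock.trans (hxy : InBlock T x y) (hyz : InBlock T y z) : InBlock T x z := by
  intro d hxd hdz
  by_cases hdy : d ≤ y
  · exact hxy d hxd hdy
  · exact hyz d (by omega) hdz

theorem InBlock.mono {x' y' : ℕ} (h : InBlock T x y) (hx : x ≤ x') (hy : y' ≤ y) :
    InBlock T x' y' :=
  fun d hxd hdy => h d (by omega) (by omega)

theorem inBlock_succ_iff : InBlock T x (x + 1) ↔ x + 1 ∈ T :=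
  ⟨fun h => h _ (by omega) le_rfl, fun h d hxd hdx => by rwa [show d = x + 1 by omega]⟩

def blockStart (T : Finset ℕ) (x : ℕ) : ℕ := Nat.findGreatest (· ∉ T) x

theorem exists_blockEnd (T : Finset ℕ) (x : ℕ) : ∃ c, x ≤ c ∧ c + 1 ∉ T :=
  ⟨x + T.sup id, by omega, fun h => by
    have := le_sup (f := id) h
    simp only [id] at this
    omega⟩

def blockEnd (T : Finset ℕ) (x : ℕ) : ℕ := Nat.find (exists_blockEnd T x)

theorem blockStart_le (T : Finset ℕ) (x : ℕ) : blockStart T x ≤ x := Nat.findGreatest_le x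

theorem le_blockEnd (T : Finset ℕ) (x : ℕ) : x ≤ blockEnd T x :=
  (Nat.find_spec (exists_blockEnd T x)).1

theorem blockStart_notMem (h0 : 0 ∉ T) (x : ℕ) : blockStart T x ∉ T :=
  Nat.findGreatest_spec (P := (· ∉ T)) (Nat.zero_le x) h0

theorem blockEnd_succ_notMem (T : Finset ℕ) (x : ℕ) : blockEnd T x + 1 ∉ T :=
  (Nat.find_spec (exists_blockEnd T x)).2

theorem inBlock_iff_le_blockEnd : InBlock T x y ↔ y ≤ blockEnd T x := by
  constructor
  · intro h
    by_contra hy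
    exact blockEnd_succ_notMem T x (h _ (by have := le_blockEnd T x; omega) (by omega))
  · intro hy d hxd hdy
    by_contra hd
    have : blockEnd T x ≤ d - 1 :=
      Nat.find_min' _ ⟨by omega, by rwa [Nat.sub_add_cancel (by omega)]⟩
    omega

theorem inBlock_iff_blockStart_le (h0 : 0 ∉ T) : InBlock T x y ↔ blockStart T y ≤ x := by
  constructor
  · intro h
    by_contra hx
    exact blockStart_notMem h0 y (h _ (by omega) (blockStart_le T y))
  · intro hy d hxd hdy
    by_contra hd
    have : d ≤ blockStart T y := Nat.le_findGreatest hdy hd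
    omega

theorem inBlock_blockStart_blockEnd (h0 : 0 ∉ T) (x : ℕ) :
    InBlock T (blockStart T x) (blockEnd T x) :=
  ((inBlock_iff_blockStart_le h0).2 le_rfl).trans (inBlock_iff_le_blockEnd.2 le_rfl)

theorem blockStart_eq_of_mem (h0 : 0 ∉ T) (hy₁ : blockStart T x ≤ y)
    (hy₂ : y ≤ blockEnd T x) : blockStart T y = blockStart T x :=
  le_antisymm
    ((inBlock_iff_blockStart_le h0).1 ((inBlock_blockStart_blockEnd h0 x).mono le_rfl hy₂))
    (Nat.le_findGreatest hy₁ (blockStart_notMem h0 x))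

theorem blockEnd_eq_of_mem (h0 : 0 ∉ T) (hy₁ : blockStart T x ≤ y) (hy₂ : y ≤ blockEnd T x) :
    blockEnd T y = blockEnd T x :=
  le_antisymm (Nat.find_min' _ ⟨hy₂, blockEnd_succ_notMem T x⟩)
    (inBlock_iff_le_blockEnd.1 ((inBlock_blockStart_blockEnd h0 x).mono hy₁ le_rfl))

def blockRevNat (T : Finset ℕ) (x : ℕ) : ℕ := blockStart T x + blockEnd T x - x

theorem blockRevNat_blockRevNat (h0 : 0 ∉ T) (x : ℕ) :
    blockRevNat T (blockRevNat T x) = x := by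
  have h₁ := blockStart_le T x
  have h₂ := le_blockEnd T x
  have hy₁ : blockStart T x ≤ blockRevNat T x := by unfold blockRevNat; omega
  have hy₂ : blockRevNat T x ≤ blockEnd T x := by unfold blockRevNat; omega
  rw [blockRevNat, blockStart_eq_of_mem h0 hy₁ hy₂, blockEnd_eq_of_mem h0 hy₁ hy₂, blockRevNat]
  omega

theorem blockRevNat_lt_blockRevNat_iff (h0 : 0 ∉ T) (hxy : x < y) :
    blockRevNat T y < blockRevNat T x ↔ InBlock T x y := by
  have hx₁ := blockStart_le T x
  have hx₂ := le_blockEnd T x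
  have hy₁ := blockStart_le T y
  have hy₂ := le_blockEnd T y
  unfold blockRevNat
  constructor
  · intro hlt
    by_contra hb
    have hxe : blockEnd T x < y := by rw [inBlock_iff_le_blockEnd] at hb; omega
    have hsy : x < blockStart T y := by rw [inBlock_iff_blockStart_le h0] at hb; omega
    have : blockEnd T x < blockStart T y := by
      by_contra hle
      exact blockStart_notMem h0 y (inBlock_blockStart_blockEnd h0 x _ (by omega) (by omega))
    omega
  · intro hb
    have hye := inBlock_iff_le_blockEnd.1 hb
    rw [blockStart_eq_of_mem h0 (by omega) hye, blockEnd_eq_of_mem h0 (by omega) hye]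
    omega

end Blocks

section BlockRev

variable {n : ℕ} {T : Finset ℕ}

theorem zero_notMem_of_subset_Ioo (hT : T ⊆ Ioo 0 n) : 0 ∉ T := fun h => by
  simpa using hT h

theorem blockEnd_lt (hT : T ⊆ Ioo 0 n) {x : ℕ} (hx : x < n) : blockEnd T x < n := by
  have : blockEnd T x ≤ n - 1 := Nat.find_min' _
    ⟨by omega, fun h => by simpa [Nat.sub_add_cancel (by omega : 1 ≤ n)] using hT h⟩
  omega

theorem blockRevNat_lt (hT : T ⊆ Ioo 0 n) {x : ℕ} (hx : x < n) : blockRevNat T x < n := by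
  have := blockStart_le T x
  have := blockEnd_lt hT hx
  unfold blockRevNat
  omega

/-- The longest element of the parabolic subgroup of `Sₙ` generated by the `sᵢ`, `i ∈ T`: it
reverses every maximal interval of positions glued together by `T`. -/
def blockRev (T : Finset ℕ) (hT : T ⊆ Ioo 0 n) : Equiv.Perm (Fin n) :=
  Function.Involutive.toPerm (fun x => ⟨blockRevNat T x, blockRevNat_lt hT x.isLt⟩)
    fun x => Fin.ext (blockRevNat_blockRevNat (zero_notMem_of_subset_Ioo hT) x)

theorem blockRev_mul_self (hT : T ⊆ Ioo 0 n) : blockRev T hT * blockRev T hT = 1 :=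
  Equiv.ext fun x => Fin.ext (blockRevNat_blockRevNat (zero_notMem_of_subset_Ioo hT) x)

theorem blockRev_inv (hT : T ⊆ Ioo 0 n) : (blockRev T hT)⁻¹ = blockRev T hT :=
  inv_eq_of_mul_eq_one_right (blockRev_mul_self hT)

def blockPairs (T : Finset ℕ) (n : ℕ) : Finset (Fin n × Fin n) :=
  univ.filter (fun p : Fin n × Fin n => p.1 < p.2 ∧ InBlock T p.1 p.2)

@[simp]
theorem mem_blockPairs {p : Fin n × Fin n} :
    p ∈ blockPairs T n ↔ p.1 < p.2 ∧ InBlock T p.1 p.2 := by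
  simp [blockPairs]

theorem invSet_blockRev (hT : T ⊆ Ioo 0 n) : invSet (blockRev T hT) = blockPairs T n := by
  ext ⟨x, y⟩
  simp only [mem_invSet, mem_blockPairs, and_congr_right_iff]
  intro hxy
  exact blockRevNat_lt_blockRevNat_iff (zero_notMem_of_subset_Ioo hT) hxy

theorem DpermF_blockRev (hT : T ⊆ Ioo 0 n) : DpermF (blockRev T hT) = T := by
  ext m
  by_cases hm : m ∈ Ioo 0 n
  · obtain ⟨hm0, hmn⟩ := mem_Ioo.1 hm
    obtain ⟨c, rfl⟩ : ∃ c, m = c + 1 := ⟨m - 1, by omega⟩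
    rw [mem_DpermF_iff_mem_invSet hmn, invSet_blockRev, mem_blockPairs]
    exact (and_iff_right (Fin.mk_lt_mk.2 (Nat.lt_succ_self c))).trans inBlock_succ_iff
  · exact iff_of_false (fun h => hm (DpermF_subset_Ioo _ h)) (fun h => hm (hT h))

theorem InBlock.rel {α : Type*} {r : α → α → Prop} [IsTrans α r] {f : Fin n → α}
    (hf : ∀ (j : ℕ) (h : j + 1 < n), j + 1 ∈ T →
      r (f ⟨j, Nat.lt_of_succ_lt h⟩) (f ⟨j + 1, h⟩))
    {x y : Fin n} (hxy : x < y) (hb : InBlock T x y) : r (f x) (f y) := by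
  obtain ⟨y, hy⟩ := y
  rw [Fin.lt_def] at hxy
  induction y with
  | zero => simp at hxy
  | succ m ih =>
    have hstep := hf m hy (hb (m + 1) hxy le_rfl)
    by_cases hm : (x : ℕ) = m
    · obtain rfl : x = ⟨m, Nat.lt_of_succ_lt hy⟩ := Fin.ext hm
      exact hstep
    · exact _root_.trans (ih (Nat.lt_of_succ_lt hy) (by simp at hxy ⊢; omega)
        (hb.mono le_rfl (Nat.le_succ m))) hstep

theorem blockPairs_subset_invSet {v : Equiv.Perm (Fin n)} (h : T ⊆ DpermF v) :
    blockPairs T n ⊆ invSet v := by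
  rintro ⟨x, y⟩ hp
  rw [mem_blockPairs] at hp
  refine mem_invSet.2 ⟨hp.1, InBlock.rel (r := (· > ·)) (fun j hj hjT => ?_) hp.1 hp.2⟩
  exact (mem_DpermF_iff hj).1 (h hjT)

theorem disjoint_blockPairs_invSet {v : Equiv.Perm (Fin n)} (h : Disjoint T (DpermF v)) :
    Disjoint (blockPairs T n) (invSet v) := by
  refine disjoint_left.2 fun ⟨x, y⟩ hp hi => ?_
  rw [mem_blockPairs] at hp
  refine (mem_invSet.1 hi).2.not_gt
    (InBlock.rel (r := (· < ·)) (fun j hj hjT => ?_) hp.1 hp.2)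
  exact lt_of_le_of_ne
    (not_lt.1 fun hlt => disjoint_left.1 h hjT ((mem_DpermF_iff hj).2 hlt))
    (v.injective.ne (by simp))

theorem eq_blockRev_of_minimal (hT : T ⊆ Ioo 0 n) {v : Equiv.Perm (Fin n)}
    (hv : DpermF v = T) (hmin : ∀ u : Equiv.Perm (Fin n), DpermF u = T → invCount v ≤ invCount u) :
    v = blockRev T hT := by
  have hsub := blockPairs_subset_invSet hv.ge
  have hcard : #(invSet v) ≤ #(blockPairs T n) := by
    rw [← invSet_blockRev hT]
    exact hmin _ (DpermF_blockRev hT)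
  exact eq_of_invSet_eq (by rw [invSet_blockRev, eq_of_subset_of_card_le hsub hcard])

theorem invCount_mul_blockRev_of_disjoint (hT : T ⊆ Ioo 0 n) {w : Equiv.Perm (Fin n)}
    (h : Disjoint T (DpermF w)) :
    invCount (w * blockRev T hT) = invCount w + invCount (blockRev T hT) :=
  invCount_mul_of_disjoint (by
    rw [blockRev_inv, invSet_blockRev]
    exact (disjoint_blockPairs_invSet h).symm)

end BlockRev

section WordProduct

variable {n : ℕ} {A : Type*} [Ring A]

/-- `f w = p i₁ * ⋯ * p iₖ` for every reduced word `s_{i₁} ⋯ s_{iₖ}` of `w`. -/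
structure IsReducedWordProduct (p : ℕ → A) (f : Equiv.Perm (Fin n) → A) : Prop where
  map_one : f 1 = 1
  map_adjSwap_mul : ∀ (j : ℕ) (h : j + 1 < n) (w : Equiv.Perm (Fin n)),
    invCount (adjSwap j h * w) = invCount w + 1 → f (adjSwap j h * w) = p (j + 1) * f w

namespace IsReducedWordProduct

variable {p : ℕ → A} {f : Equiv.Perm (Fin n) → A} {u v w : Equiv.Perm (Fin n)} {j : ℕ}

theorem map_adjSwap (hf : IsReducedWordProduct p f) (h : j + 1 < n) :
    f (adjSwap j h) = p (j + 1) := by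
  simpa [hf.map_one] using hf.map_adjSwap_mul j h 1 (by simp [invCount_adjSwap, invCount_one])

theorem adjSwap_mul_of_not_mem (hf : IsReducedWordProduct p f) (h : j + 1 < n)
    (hd : j + 1 ∉ DpermF w⁻¹) : f (adjSwap j h * w) = p (j + 1) * f w :=
  hf.map_adjSwap_mul j h w (invCount_adjSwap_mul_of_not_mem h hd)

theorem eq_mul_adjSwap_mul_of_mem (hf : IsReducedWordProduct p f) (h : j + 1 < n)
    (hd : j + 1 ∈ DpermF w⁻¹) : f w = p (j + 1) * f (adjSwap j h * w) := by
  have hl := invCount_adjSwap_mul_of_mem h hd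
  have hw : adjSwap j h * (adjSwap j h * w) = w := by
    rw [← mul_assoc, adjSwap_mul_self, one_mul]
  conv_lhs => rw [← hw]
  exact hf.map_adjSwap_mul j h _ (by rw [hw]; omega)

theorem map_mul (hf : IsReducedWordProduct p f)
    (huv : invCount (u * v) = invCount u + invCount v) : f (u * v) = f u * f v := by
  induction u using adjSwap_induction with
  | one => rw [one_mul, hf.map_one, one_mul]
  | step j h u hu ih =>
    have h₁ := invCount_mul_le u v
    have h₂ := invCount_mul_le (adjSwap j h) (u * v)
    rw [invCount_adjSwap] at h₂
    rw [mul_assoc] at huv ⊢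
    rw [hf.map_adjSwap_mul j h _ (by omega), ih (by omega),
      hf.map_adjSwap_mul j h u hu, mul_assoc]

theorem eq_mul_of_invSet_subset (hf : IsReducedWordProduct p f) (h : invSet v ⊆ invSet w) :
    f w = f (w * v⁻¹) * f v := by
  have hl := invCount_mul_add_of_subset (u := w) (v := v⁻¹) (by rwa [inv_inv])
  rw [← hf.map_mul (by rw [inv_mul_cancel_right, ← hl, invCount_inv]), inv_mul_cancel_right]

theorem eq_mul_mul_adjSwap_of_mem (hf : IsReducedWordProduct p f) (h : j + 1 < n)
    (hd : j + 1 ∈ DpermF w) : f w = f (w * adjSwap j h) * p (j + 1) := by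
  rw [← hf.map_adjSwap h, ← adjSwap_inv h]
  refine hf.eq_mul_of_invSet_subset ?_
  rwa [invSet_adjSwap, singleton_subset_iff, ← mem_DpermF_iff_mem_invSet]

theorem mul_eq_zero_of_mem {q : ℕ → A} {g : Equiv.Perm (Fin n) → A}
    (hf : IsReducedWordProduct p f) (hg : IsReducedWordProduct q g) (h : j + 1 < n)
    (hpq : p (j + 1) * q (j + 1) = 0) (hu : j + 1 ∈ DpermF u) (hv : j + 1 ∈ DpermF v⁻¹) :
    f u * g v = 0 := by
  rw [hf.eq_mul_mul_adjSwap_of_mem h hu, hg.eq_mul_adjSwap_mul_of_mem h hv, mul_assoc,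
    ← mul_assoc (p _), hpq, zero_mul, mul_zero]

theorem mul_eq_neg_of_mem (hf : IsReducedWordProduct p f)
    (hsq : ∀ i, 1 ≤ i → i < n → p i * p i = -p i) (h : j + 1 < n) (hd : j + 1 ∈ DpermF w⁻¹) :
    p (j + 1) * f w = -f w := by
  rw [hf.eq_mul_adjSwap_mul_of_mem h hd, ← mul_assoc, hsq _ (by omega) h, neg_mul]

end IsReducedWordProduct

end WordProduct

theorem linearIndependent_of_sub_mem_span_lt {ι κ R M : Type*} [Ring R] [AddCommGroup M]
    [Module R M] (b : Module.Basis κ R M) (d : κ → ℕ) {e : ι → κ} (he : Function.Injective e)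
    {v : ι → M} (hv : ∀ i, v i - b (e i) ∈ Submodule.span R (b '' {k | d k < d (e i)})) :
    LinearIndependent R v := by
  rw [linearIndependent_iff']
  intro s g hsum i hi
  by_contra hgi
  obtain ⟨i₀, hi₀, hmax⟩ := (s.filter (g · ≠ 0)).exists_max_image (fun i => d (e i))
    ⟨i, mem_filter.2 ⟨hi, hgi⟩⟩
  rw [mem_filter] at hi₀
  have hrepr : ∀ i, d (e i) ≤ d (e i₀) → b.repr (v i) (e i₀) = if i = i₀ then 1 else 0 := by
    intro i hi
    have hzero : b.repr (v i - b (e i)) (e i₀) = 0 :=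
      Finsupp.notMem_support_iff.1 fun hmem => (b.mem_span_image.1 (hv i) hmem).not_ge hi
    rw [map_sub, Finsupp.sub_apply, sub_eq_zero, b.repr_self, Finsupp.single_apply] at hzero
    rw [hzero, he.eq_iff]
  have hcoord := congrArg (b.coord (e i₀)) hsum
  rw [map_sum, map_zero, sum_eq_single_of_mem i₀ hi₀.1] at hcoord
  · simp [hrepr i₀ le_rfl, hi₀.2] at hcoord
  · intro i hi hne
    by_cases hgi : g i = 0
    · simp [hgi]
    · simp [hrepr i (hmax i (mem_filter.2 ⟨hi, hgi⟩)), hne]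

section Filtration

variable {F : Type*} [Field F] {A : Type*} [Ring A] [Algebra F A] {n : ℕ}
  {p q : ℕ → A} {f g : Equiv.Perm (Fin n) → A}

variable (F) in
def spanLengthLT (f : Equiv.Perm (Fin n) → A) (k : ℕ) : Submodule F A :=
  Submodule.span F (f '' {u | invCount u < k})

theorem mul_mem_spanLengthLT_succ (hf : IsReducedWordProduct p f)
    (hsq : ∀ i, 1 ≤ i → i < n → p i * p i = -p i) {j : ℕ} (h : j + 1 < n) {k : ℕ} {x : A}
    (hx : x ∈ spanLengthLT F f k) : p (j + 1) * x ∈ spanLengthLT F f (k + 1) := by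
  induction hx using Submodule.span_induction with
  | mem y hy =>
    obtain ⟨u, hu, rfl⟩ := hy
    by_cases hd : j + 1 ∈ DpermF u⁻¹
    · rw [hf.mul_eq_neg_of_mem hsq h hd]
      exact neg_mem (Submodule.subset_span ⟨u, Nat.lt_succ_of_lt hu, rfl⟩)
    · rw [← hf.adjSwap_mul_of_not_mem h hd]
      refine Submodule.subset_span ⟨_, ?_, rfl⟩
      show invCount _ < k + 1
      rw [invCount_adjSwap_mul_of_not_mem h hd]
      exact Nat.succ_lt_succ hu
  | zero => simp
  | add y z _ _ hy hz => rw [mul_add]; exact add_mem hy hz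
  | smul c y _ hy => rw [mul_smul_comm]; exact Submodule.smul_mem _ c hy

theorem mul_mem_spanLengthLT_add (hf : IsReducedWordProduct p f)
    (hsq : ∀ i, 1 ≤ i → i < n → p i * p i = -p i) (w : Equiv.Perm (Fin n)) {k : ℕ} {x : A}
    (hx : x ∈ spanLengthLT F f k) : f w * x ∈ spanLengthLT F f (invCount w + k) := by
  induction w using adjSwap_induction with
  | one => rwa [hf.map_one, one_mul, invCount_one, zero_add]
  | step j h w hw ih =>
    rw [hf.map_adjSwap_mul j h w hw, mul_assoc, hw, add_right_comm]
    exact mul_mem_spanLengthLT_succ hf hsq h ih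

theorem sub_mem_spanLengthLT (hf : IsReducedWordProduct p f) (hg : IsReducedWordProduct q g)
    (hq : ∀ i, q i = p i + 1) (hsq : ∀ i, 1 ≤ i → i < n → p i * p i = -p i)
    (v : Equiv.Perm (Fin n)) : g v - f v ∈ spanLengthLT F f (invCount v) := by
  induction v using adjSwap_induction with
  | one => simp [hf.map_one, hg.map_one]
  | step j h v hv ih =>
    have hmono : spanLengthLT F f (invCount v) ≤ spanLengthLT F f (invCount v + 1) :=
      Submodule.span_mono (Set.image_mono fun u hu => Nat.lt_succ_of_lt hu)
    rw [hf.map_adjSwap_mul j h v hv, hg.map_adjSwap_mul j h v hv, hv, hq,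
      show (p (j + 1) + 1) * g v - p (j + 1) * f v
        = p (j + 1) * (g v - f v) + (g v - f v) + f v by noncomm_ring]
    refine add_mem (add_mem (mul_mem_spanLengthLT_succ hf hsq h ih) (hmono ih)) ?_
    exact Submodule.subset_span ⟨v, Nat.lt_succ_self _, rfl⟩

theorem mul_sub_mem_spanLengthLT (hf : IsReducedWordProduct p f)
    (hg : IsReducedWordProduct q g) (hq : ∀ i, q i = p i + 1)
    (hsq : ∀ i, 1 ≤ i → i < n → p i * p i = -p i) {u v : Equiv.Perm (Fin n)}
    (huv : invCount (u * v) = invCount u + invCount v) :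
    f u * g v - f (u * v) ∈ spanLengthLT F f (invCount u + invCount v) := by
  rw [hf.map_mul huv, ← mul_sub]
  exact mul_mem_spanLengthLT_add hf hsq u (sub_mem_spanLengthLT hf hg hq hsq v)

end Filtration

section ProjectiveModule

variable {F : Type*} [Field F] {A : Type*} [Ring A] [Algebra F A] {n : ℕ}
  {p q : ℕ → A} {f g : Equiv.Perm (Fin n) → A}

theorem IsReducedWordProduct.mul_mem_of_forall_mul_mem (hf : IsReducedWordProduct p f)
    (hspan : Submodule.span F (Set.range f) = ⊤) {S : Submodule F A}
    (hS : ∀ (j : ℕ) (_ : j + 1 < n), ∀ x ∈ S, p (j + 1) * x ∈ S) (a : A) {x : A}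
    (hx : x ∈ S) : a * x ∈ S := by
  have hfx : ∀ w, f w * x ∈ S := by
    intro w
    induction w using adjSwap_induction with
    | one => rwa [hf.map_one, one_mul]
    | step j h w hw ih => rw [hf.map_adjSwap_mul j h w hw, mul_assoc]; exact hS j h _ ih
  have ha : a ∈ Submodule.span F (Set.range f) := hspan ▸ Submodule.mem_top
  induction ha using Submodule.span_induction with
  | mem y hy => obtain ⟨w, rfl⟩ := hy; exact hfx w
  | zero => simp
  | add y z _ _ hy hz => rw [add_mul]; exact add_mem hy hz
  | smul c y _ hy => rw [smul_mul_assoc]; exact S.smul_mem c hy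

theorem mul_mul_blockRev_compl_eq (hf : IsReducedWordProduct p f)
    (hg : IsReducedWordProduct q g) (hq : ∀ i, q i = p i + 1)
    (hsq : ∀ i, 1 ≤ i → i < n → p i * p i = -p i) {S : Finset ℕ} (w : Equiv.Perm (Fin n))
    {j : ℕ} (h : j + 1 < n) :
    let W := blockRev (Ioo 0 n \ S) sdiff_subset
    (j + 1 ∈ DpermF w⁻¹ → p (j + 1) * (f w * g W) = -(f w * g W)) ∧
    (j + 1 ∉ DpermF w⁻¹ → ¬DpermF (adjSwap j h * w) ⊆ S → p (j + 1) * (f w * g W) = 0) ∧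
    (j + 1 ∉ DpermF w⁻¹ → DpermF (adjSwap j h * w) ⊆ S →
      p (j + 1) * (f w * g W) = f (adjSwap j h * w) * g W) := by
  intro W
  have hmove (hd : j + 1 ∉ DpermF w⁻¹) :
      p (j + 1) * (f w * g W) = f (adjSwap j h * w) * g W := by
    rw [hf.adjSwap_mul_of_not_mem h hd, mul_assoc]
  refine ⟨fun hd => ?_, fun hd hsub => ?_, fun hd _ => hmove hd⟩
  · rw [← mul_assoc, hf.mul_eq_neg_of_mem hsq h hd, neg_mul]
  · obtain ⟨m, hm, hmS⟩ := not_subset.1 hsub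
    obtain ⟨hm0, hmn⟩ := mem_Ioo.1 (DpermF_subset_Ioo _ hm)
    obtain ⟨c, rfl⟩ : ∃ c, m = c + 1 := ⟨m - 1, by omega⟩
    have hW : c + 1 ∈ DpermF W⁻¹ := by
      rw [blockRev_inv, DpermF_blockRev]
      exact mem_sdiff.2 ⟨mem_Ioo.2 ⟨hm0, hmn⟩, hmS⟩
    rw [hmove hd]
    refine hf.mul_eq_zero_of_mem hg hmn ?_ hm hW
    rw [hq, mul_add, hsq _ (by omega) hmn, mul_one, neg_add_cancel]

variable (F f g) in
def spanDescentClass (S : Finset ℕ) : Submodule F A :=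
  Submodule.span F (Set.range fun w : {w : Equiv.Perm (Fin n) // DpermF w = S} =>
    f w * g (blockRev (Ioo 0 n \ S) sdiff_subset))

theorem mul_mem_spanDescentClass (hf : IsReducedWordProduct p f)
    (hg : IsReducedWordProduct q g) (hq : ∀ i, q i = p i + 1)
    (hsq : ∀ i, 1 ≤ i → i < n → p i * p i = -p i) {S : Finset ℕ} {j : ℕ} (h : j + 1 < n)
    {x : A} (hx : x ∈ spanDescentClass F f g S) :
    p (j + 1) * x ∈ spanDescentClass F f g S := by
  induction hx using Submodule.span_induction with
  | mem y hy =>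
    obtain ⟨⟨w, hw⟩, rfl⟩ := hy
    obtain ⟨hneg, hzero, hmove⟩ := mul_mul_blockRev_compl_eq hf hg hq hsq (S := S) w h
    by_cases hd : j + 1 ∈ DpermF w⁻¹
    · rw [hneg hd]
      exact neg_mem (Submodule.subset_span ⟨⟨w, hw⟩, rfl⟩)
    by_cases hsub : DpermF (adjSwap j h * w) ⊆ S
    · rw [hmove hd hsub]
      have hw' : DpermF (adjSwap j h * w) = S :=
        hsub.antisymm (hw ▸ DpermF_subset_DpermF_adjSwap_mul h hd)
      exact Submodule.subset_span ⟨⟨_, hw'⟩, rfl⟩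
    · rw [hzero hd hsub]
      exact zero_mem _
  | zero => simp
  | add y z _ _ hy hz => rw [mul_add]; exact add_mem hy hz
  | smul c y _ hy => rw [mul_smul_comm]; exact Submodule.smul_mem _ c hy

theorem spanDescentClass_eq_span_mul (hf : IsReducedWordProduct p f)
    (hg : IsReducedWordProduct q g) (hq : ∀ i, q i = p i + 1)
    (hsq : ∀ i, 1 ≤ i → i < n → p i * p i = -p i)
    (hspan : Submodule.span F (Set.range f) = ⊤) {S : Finset ℕ} (hS : S ⊆ Ioo 0 n) :
    spanDescentClass F f g S = Submodule.span F
      {a : A | ∃ b : A, a = b * (f (blockRev S hS) * g (blockRev (Ioo 0 n \ S) sdiff_subset))} := by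
  apply le_antisymm
  · refine Submodule.span_le.2 ?_
    rintro _ ⟨⟨w, hw⟩, rfl⟩
    refine Submodule.subset_span ⟨f (w * (blockRev S hS)⁻¹), ?_⟩
    have hsub : invSet (blockRev S hS) ⊆ invSet w := by
      rw [invSet_blockRev]
      exact blockPairs_subset_invSet hw.ge
    rw [← mul_assoc, ← hf.eq_mul_of_invSet_subset hsub]
  · refine Submodule.span_le.2 ?_
    rintro _ ⟨b, rfl⟩
    exact hf.mul_mem_of_forall_mul_mem hspan
      (fun j h x hx => mul_mem_spanDescentClass hf hg hq hsq h hx) b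
      (Submodule.subset_span ⟨⟨_, DpermF_blockRev hS⟩, rfl⟩)

theorem linearIndependent_mul_blockRev (hf : IsReducedWordProduct p f)
    (hg : IsReducedWordProduct q g) (hq : ∀ i, q i = p i + 1)
    (hsq : ∀ i, 1 ≤ i → i < n → p i * p i = -p i) (hli : LinearIndependent F f)
    (hspan : Submodule.span F (Set.range f) = ⊤) {T : Finset ℕ} (hT : T ⊆ Ioo 0 n)
    {ι : Type*} {e : ι → Equiv.Perm (Fin n)} (he : Function.Injective e)
    (hdisj : ∀ i, Disjoint T (DpermF (e i))) :
    LinearIndependent F fun i => f (e i) * g (blockRev T hT) := by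
  refine linearIndependent_of_sub_mem_span_lt (Module.Basis.mk hli hspan.ge) invCount
    ((mul_left_injective (blockRev T hT)).comp he) fun i => ?_
  rw [Module.Basis.coe_mk, Function.comp_apply, invCount_mul_blockRev_of_disjoint hT (hdisj i)]
  exact mul_sub_mem_spanLengthLT hf hg hq hsq (invCount_mul_blockRev_of_disjoint hT (hdisj i))

end ProjectiveModule

theorem Dset_subset_Ioo {n : ℕ} (α : Composition n) : Dset α ⊆ Ioo 0 n := by
  intro m hm
  obtain ⟨i, hi, rfl⟩ := mem_image.1 hm
  obtain ⟨hi0, hil⟩ := mem_Ioo.1 hi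
  refine mem_Ioo.2 ⟨?_, ?_⟩
  · calc 0 = α.sizeUpTo 0 := α.sizeUpTo_zero.symm
      _ < α.sizeUpTo 1 := α.sizeUpTo_strict_mono (by omega)
      _ ≤ α.sizeUpTo i := α.monotone_sizeUpTo hi0
  · calc α.sizeUpTo i < α.sizeUpTo (i + 1) := α.sizeUpTo_strict_mono hil
      _ ≤ α.sizeUpTo α.length := α.monotone_sizeUpTo hil
      _ = n := α.sizeUpTo_length

theorem stmt_19_general {F : Type*} [Field F] {A : Type*} [Ring A] [Algebra F A]
    (n : ℕ) (α : Composition n)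
    (pib pi : ℕ → A)
    (hpi : ∀ i, pi i = pib i + 1)
    (hrel1 : ∀ i, 1 ≤ i → i < n → pib i * pib i = -pib i)
    (pibw piw : Equiv.Perm (Fin n) → A)
    (hpibw1 : pibw 1 = 1) (hpiw1 : piw 1 = 1)
    (hpibwrec : ∀ (j : ℕ) (h : j + 1 < n) (w : Equiv.Perm (Fin n)),
      invCount (Equiv.swap ⟨j, Nat.lt_of_succ_lt h⟩ ⟨j + 1, h⟩ * w) = invCount w + 1 →
      pibw (Equiv.swap ⟨j, Nat.lt_of_succ_lt h⟩ ⟨j + 1, h⟩ * w) = pib (j + 1) * pibw w)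
    (hpiwrec : ∀ (j : ℕ) (h : j + 1 < n) (w : Equiv.Perm (Fin n)),
      invCount (Equiv.swap ⟨j, Nat.lt_of_succ_lt h⟩ ⟨j + 1, h⟩ * w) = invCount w + 1 →
      piw (Equiv.swap ⟨j, Nat.lt_of_succ_lt h⟩ ⟨j + 1, h⟩ * w) = pi (j + 1) * piw w)
    (hbasis : LinearIndependent F pibw ∧ Submodule.span F (Set.range pibw) = ⊤)
    (w0a w0ac : Equiv.Perm (Fin n))
    (hw0a : DpermF w0a = Dset α ∧
      ∀ u : Equiv.Perm (Fin n), DpermF u = Dset α → invCount w0a ≤ invCount u)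
    (hw0ac : DpermF w0ac = Finset.Ioo 0 n \ Dset α ∧
      ∀ u : Equiv.Perm (Fin n), DpermF u = Finset.Ioo 0 n \ Dset α → invCount w0ac ≤ invCount u) :
    (LinearIndependent F
        (fun w : {w : Equiv.Perm (Fin n) // DpermF w = Dset α} =>
          pibw w.1 * piw w0ac) ∧
      Submodule.span F
          (Set.range (fun w : {w : Equiv.Perm (Fin n) // DpermF w = Dset α} =>
            pibw w.1 * piw w0ac))
        = Submodule.span F {a : A | ∃ b : A, a = b * (pibw w0a * piw w0ac)}) ∧
    (∀ w : Equiv.Perm (Fin n), DpermF w = Dset α → ∀ (j : ℕ) (h : j + 1 < n),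
      ((j + 1) ∈ DpermF w⁻¹ →
        pib (j + 1) * (pibw w * piw w0ac) = -(pibw w * piw w0ac)) ∧
      ((j + 1) ∉ DpermF w⁻¹ →
        ¬(DpermF (Equiv.swap ⟨j, Nat.lt_of_succ_lt h⟩ ⟨j + 1, h⟩ * w) ⊆ Dset α) →
        pib (j + 1) * (pibw w * piw w0ac) = 0) ∧
      ((j + 1) ∉ DpermF w⁻¹ →
        DpermF (Equiv.swap ⟨j, Nat.lt_of_succ_lt h⟩ ⟨j + 1, h⟩ * w) ⊆ Dset α →
        pib (j + 1) * (pibw w * piw w0ac) =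
          pibw (Equiv.swap ⟨j, Nat.lt_of_succ_lt h⟩ ⟨j + 1, h⟩ * w) * piw w0ac)) := by
  obtain ⟨hli, hspan⟩ := hbasis
  have hf : IsReducedWordProduct pib pibw := ⟨hpibw1, hpibwrec⟩
  have hg : IsReducedWordProduct pi piw := ⟨hpiw1, hpiwrec⟩
  have hS := Dset_subset_Ioo α
  obtain rfl := eq_blockRev_of_minimal hS hw0a.1 hw0a.2
  obtain rfl := eq_blockRev_of_minimal sdiff_subset hw0ac.1 hw0ac.2
  refine ⟨⟨?_, spanDescentClass_eq_span_mul hf hg hpi hrel1 hspan hS⟩,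
    fun w _ j h => mul_mul_blockRev_compl_eq hf hg hpi hrel1 w h⟩
  exact linearIndependent_mul_blockRev hf hg hpi hrel1 hli hspan sdiff_subset
    Subtype.val_injective fun w => by rw [w.2]; exact sdiff_disjoint

/-- Let `A` be the 0-Hecke algebra `Hₙ(0)` over `F`: an `F`-algebra with generators
`π̄₁,…,π̄_{n-1}` satisfying the 0-Hecke relations, elements `π̄_w` (resp. `π_w`, with
`πᵢ = π̄ᵢ + 1`) given by products along reduced words, such that `{π̄_w : w ∈ Sₙ}` is an
`F`-basis.  Let `α` be a composition of `n`, `w₀(α)` the minimal-length permutation with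
descent set `D(α)` (the longest element of `S_{α^c}`) and `w₀(α^c)` the minimal-length
permutation with descent set `D(α^c) = [n-1] ∖ D(α)`.  Then the module
`P_α = Hₙ(0)·π̄_{w₀(α)}π_{w₀(α^c)}` has `F`-basis
`{π̄_w π_{w₀(α^c)} : w ∈ [w₀(α), w₁(α)]} = {π̄_w π_{w₀(α^c)} : D(w) = D(α)}`, and for
`D(w) = D(α)` and `i ∈ [n-1]` (written `i = j+1`, 0-based `j`):
`π̄ᵢ · π̄_w π_{w₀(α^c)} = -π̄_w π_{w₀(α^c)}` if `i ∈ D(w⁻¹)`; `= 0` if `i ∉ D(w⁻¹)` and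
`D(sᵢw) ⊄ D(α)`; and `= π̄_{sᵢw} π_{w₀(α^c)}` if `i ∉ D(w⁻¹)` and `D(sᵢw) ⊆ D(α)`. -/
theorem stmt_19 {F : Type*} [Field F] {A : Type*} [Ring A] [Algebra F A]
    (n : ℕ) (α : Composition n)
    (pib pi : ℕ → A)
    (hpi : ∀ i, pi i = pib i + 1)
    (hrel1 : ∀ i, 1 ≤ i → i < n → pib i * pib i = -pib i)
    (hrel2 : ∀ i j, 1 ≤ i → i < n → 1 ≤ j → j < n → (i + 1 < j ∨ j + 1 < i) →
      pib i * pib j = pib j * pib i)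
    (hrel3 : ∀ i, 1 ≤ i → i + 1 < n →
      pib i * pib (i + 1) * pib i = pib (i + 1) * pib i * pib (i + 1))
    (pibw piw : Equiv.Perm (Fin n) → A)
    (hpibw1 : pibw 1 = 1) (hpiw1 : piw 1 = 1)
    (hpibwrec : ∀ (j : ℕ) (h : j + 1 < n) (w : Equiv.Perm (Fin n)),
      invCount (Equiv.swap ⟨j, Nat.lt_of_succ_lt h⟩ ⟨j + 1, h⟩ * w) = invCount w + 1 →
      pibw (Equiv.swap ⟨j, Nat.lt_of_succ_lt h⟩ ⟨j + 1, h⟩ * w) = pib (j + 1) * pibw w)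
    (hpiwrec : ∀ (j : ℕ) (h : j + 1 < n) (w : Equiv.Perm (Fin n)),
      invCount (Equiv.swap ⟨j, Nat.lt_of_succ_lt h⟩ ⟨j + 1, h⟩ * w) = invCount w + 1 →
      piw (Equiv.swap ⟨j, Nat.lt_of_succ_lt h⟩ ⟨j + 1, h⟩ * w) = pi (j + 1) * piw w)
    (hbasis : LinearIndependent F pibw ∧ Submodule.span F (Set.range pibw) = ⊤)
    (w0a w0ac : Equiv.Perm (Fin n))
    (hw0a : DpermF w0a = Dset α ∧
      ∀ u : Equiv.Perm (Fin n), DpermF u = Dset α → invCount w0a ≤ invCount u)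
    (hw0ac : DpermF w0ac = Finset.Ioo 0 n \ Dset α ∧
      ∀ u : Equiv.Perm (Fin n), DpermF u = Finset.Ioo 0 n \ Dset α → invCount w0ac ≤ invCount u) :
    (LinearIndependent F
        (fun w : {w : Equiv.Perm (Fin n) // DpermF w = Dset α} =>
          pibw w.1 * piw w0ac) ∧
      Submodule.span F
          (Set.range (fun w : {w : Equiv.Perm (Fin n) // DpermF w = Dset α} =>
            pibw w.1 * piw w0ac))
        = Submodule.span F {a : A | ∃ b : A, a = b * (pibw w0a * piw w0ac)}) ∧
    (∀ w : Equiv.Perm (Fin n), DpermF w = Dset α → ∀ (j : ℕ) (h : j + 1 < n),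
      ((j + 1) ∈ DpermF w⁻¹ →
        pib (j + 1) * (pibw w * piw w0ac) = -(pibw w * piw w0ac)) ∧
      ((j + 1) ∉ DpermF w⁻¹ →
        ¬(DpermF (Equiv.swap ⟨j, Nat.lt_of_succ_lt h⟩ ⟨j + 1, h⟩ * w) ⊆ Dset α) →
        pib (j + 1) * (pibw w * piw w0ac) = 0) ∧
      ((j + 1) ∉ DpermF w⁻¹ →
        DpermF (Equiv.swap ⟨j, Nat.lt_of_succ_lt h⟩ ⟨j + 1, h⟩ * w) ⊆ Dset α →
        pib (j + 1) * (pibw w * piw w0ac) =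
          pibw (Equiv.swap ⟨j, Nat.lt_of_succ_lt h⟩ ⟨j + 1, h⟩ * w) * piw w0ac)) :=
  stmt_19_general n α pib pi hpi hrel1 pibw piw hpibw1 hpiw1 hpibwrec hpiwrec hbasis w0a w0ac hw0a
    hw0ac
end
end
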